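/- arXiv:2403.05811 — 9 statements merged into one kernel-verified Lean document; each statement's English description precedes it below -/
import Mathlib

section
/- For every λ ∈ (0, 3/b), ε > 0 and σ > 0, the probability that there exists k ∈ {1,…,n} with ‖Y_k‖ ≥ ε and W_k ≤ σ² is at most 2·exp( −λε + λ²σ² / (2(1 − λb/3)) ). -/
set_option linter.unusedSectionVars false
set_option maxHeartbeats 1000000
section FHsupport
open Real

lemma fh_factorial_ge (k : ℕ) : 2 * 3 ^ k ≤ (k + 2).factorial := by
  induction k with
  | zero => simp [Nat.factorial]
  | succ k ih =>
      have : (k + 3).factorial = (k + 3) * (k + 2).factorial := rfl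
      calc 2 * 3 ^ (k + 1) = 3 * (2 * 3 ^ k) := by ring
        _ ≤ 3 * (k + 2).factorial := by omega
        _ ≤ (k + 3) * (k + 2).factorial := by
            have := Nat.factorial_pos (k + 2); nlinarith
        _ = (k + 3).factorial := rfl

lemma fh_exp_sub_le {v : ℝ} (h0 : 0 ≤ v) (h3 : v < 3) :
    Real.exp v - v ≤ 1 + v ^ 2 / (2 * (1 - v / 3)) := by
  have hsum : Real.exp v = ∑' n : ℕ, v ^ n / n.factorial := by
    rw [Real.exp_eq_exp_ℝ, NormedSpace.exp_eq_tsum_div]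
  have hsummable : Summable (fun n : ℕ => v ^ n / n.factorial) :=
    Real.summable_pow_div_factorial v
  have hgeo : Summable (fun k : ℕ => v ^ 2 / 2 * (v / 3) ^ k) := by
    apply Summable.mul_left
    exact summable_geometric_of_lt_one (by positivity) (by linarith)
  have hsplit := Summable.sum_add_tsum_nat_add 2 hsummable
  have hterm : ∀ k : ℕ, v ^ (k + 2) / (k + 2).factorial ≤ v ^ 2 / 2 * (v / 3) ^ k := by
    intro k
    have heq2 : v ^ 2 / 2 * (v / 3) ^ k = v ^ (k + 2) / (2 * 3 ^ k) := by
      rw [div_pow, pow_add]; ring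
    rw [heq2]
    apply div_le_div_of_nonneg_left (by positivity) (by positivity)
    exact_mod_cast fh_factorial_ge k
  have htail : (∑' k : ℕ, v ^ (k + 2) / (k + 2).factorial)
      ≤ v ^ 2 / 2 * (1 - v / 3)⁻¹ := by
    calc (∑' k : ℕ, v ^ (k + 2) / (k + 2).factorial)
        ≤ ∑' k : ℕ, v ^ 2 / 2 * (v / 3) ^ k :=
          Summable.tsum_le_tsum hterm ((summable_nat_add_iff 2).2 hsummable) hgeo
      _ = v ^ 2 / 2 * ∑' k : ℕ, (v / 3) ^ k := by rw [tsum_mul_left]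
      _ = v ^ 2 / 2 * (1 - v / 3)⁻¹ := by
          rw [tsum_geometric_of_lt_one (by positivity) (by linarith)]
  have hfin : ∑ i ∈ Finset.range 2, v ^ i / i.factorial = 1 + v := by
    simp [Finset.sum_range_succ, Nat.factorial]
  have hmain : Real.exp v ≤ 1 + v + v ^ 2 / 2 * (1 - v / 3)⁻¹ := by
    rw [hsum, ← hsplit, hfin]
    linarith
  have hne : (1 : ℝ) - v / 3 ≠ 0 := by intro h; nlinarith
  have heq : v ^ 2 / 2 * (1 - v / 3)⁻¹ = v ^ 2 / (2 * (1 - v / 3)) := by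
    field_simp
  linarith [heq ▸ hmain]

lemma fh_hasSum_cosh_sqrt {s : ℝ} (hs : 0 ≤ s) :
    HasSum (fun n : ℕ => s ^ n / (2 * n).factorial) (Real.cosh (Real.sqrt s)) := by
  have h := Real.hasSum_cosh (Real.sqrt s)
  have : (fun n : ℕ => Real.sqrt s ^ (2 * n) / (2 * n).factorial)
      = fun n : ℕ => s ^ n / (2 * n).factorial := by
    funext n
    rw [pow_mul, Real.sq_sqrt hs]
  rwa [this] at h

lemma fh_convexOn_cosh_sqrt :
    ConvexOn ℝ (Set.Ici (0:ℝ)) (fun s => Real.cosh (Real.sqrt s)) := by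
  refine ⟨convex_Ici 0, fun x hx y hy a b ha hb hab => ?_⟩
  have hx' : (0:ℝ) ≤ x := hx
  have hy' : (0:ℝ) ≤ y := hy
  have hcomb : (0:ℝ) ≤ a • x + b • y := by
    simp only [smul_eq_mul]; positivity
  have h1 := fh_hasSum_cosh_sqrt hx'
  have h2 := fh_hasSum_cosh_sqrt hy'
  have h3 := fh_hasSum_cosh_sqrt hcomb
  have hsum12 := (h1.mul_left a).add (h2.mul_left b)
  refine hasSum_le (fun n => ?_) h3 hsum12
  have hpow := (convexOn_pow n).2 hx hy ha hb hab
  simp only [smul_eq_mul] at hpow ⊢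
  have : (0:ℝ) < (2 * n).factorial := by positivity
  rw [div_le_iff₀ this] at *
  calc (a * x + b * y) ^ n ≤ a * x ^ n + b * y ^ n := hpow
    _ = (a * (x ^ n / (2*n).factorial) + b * (y ^ n / (2*n).factorial)) * (2*n).factorial := by
        field_simp

lemma fh_end1 {A C : ℝ} (hC : 0 ≤ C) :
    Real.cosh (A + C) ≤ Real.cosh A * (Real.exp C - C) + C * Real.sinh A := by
  have h1 : C ≤ Real.sinh C := Real.self_le_sinh_iff.2 hC
  have h2 : 0 < Real.cosh A - Real.sinh A := by
    rw [Real.cosh_sub_sinh]; positivity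
  have h3 : Real.exp C = Real.cosh C + Real.sinh C := (Real.cosh_add_sinh C).symm
  rw [Real.cosh_add, h3]
  nlinarith [mul_nonneg h2.le (sub_nonneg.2 h1)]

lemma fh_end2 {A C : ℝ} (hC : 0 ≤ C) :
    Real.cosh (A - C) ≤ Real.cosh A * (Real.exp C - C) - C * Real.sinh A := by
  have h1 : C ≤ Real.sinh C := Real.self_le_sinh_iff.2 hC
  have h2 : 0 < Real.cosh A + Real.sinh A := by
    rw [Real.cosh_add_sinh]; positivity
  have h3 : Real.exp C = Real.cosh C + Real.sinh C := (Real.cosh_add_sinh C).symm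
  rw [Real.cosh_sub, h3]
  nlinarith [mul_nonneg h2.le (sub_nonneg.2 h1)]
lemma fh_key {E : Type*} [NormedAddCommGroup E] [InnerProductSpace ℝ E]
    {l : ℝ} (hl : 0 ≤ l) (y x : E) :
    Real.cosh (l * ‖y + x‖) ≤
      Real.cosh (l * ‖y‖) * (Real.exp (l * ‖x‖) - l * ‖x‖)
        + (l * Real.sinh (l * ‖y‖) / ‖y‖) * (inner ℝ y x : ℝ) := by
  by_cases hy : y = 0
  · subst hy
    simp only [norm_zero, mul_zero, Real.cosh_zero, Real.sinh_zero, zero_add,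
      inner_zero_left, zero_mul, one_mul, mul_zero, zero_div, add_zero]
    have hC : 0 ≤ l * ‖x‖ := by positivity
    have h1 : l * ‖x‖ ≤ Real.sinh (l * ‖x‖) := Real.self_le_sinh_iff.2 hC
    have h3 : Real.exp (l * ‖x‖) = Real.cosh (l * ‖x‖) + Real.sinh (l * ‖x‖) :=
      (Real.cosh_add_sinh _).symm
    linarith
  by_cases hx : x = 0
  · subst hx
    simp
  set a := ‖y‖ with hadef
  set c := ‖x‖ with hcdef
  set t := (inner ℝ y x : ℝ) with htdef
  have ha : 0 < a := norm_pos_iff.2 hy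
  have hc : 0 < c := norm_pos_iff.2 hx
  have ht : |t| ≤ a * c := abs_real_inner_le_norm y x
  have ht1 : -(a*c) ≤ t := neg_le_of_abs_le ht
  have ht2 : t ≤ a*c := le_of_abs_le ht
  set θ := (a*c - t)/(2*(a*c)) with hθdef
  have hac : 0 < a * c := by positivity
  have hθ0 : 0 ≤ θ := by
    apply div_nonneg _ (by positivity); linarith
  have hθ1 : 0 ≤ 1 - θ := by
    rw [hθdef]; rw [sub_nonneg, div_le_one (by positivity)]; linarith
  have hmem1 : ((l*(a-c))^2 : ℝ) ∈ Set.Ici (0:ℝ) := Set.mem_Ici.2 (sq_nonneg _)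
  have hmem2 : ((l*(a+c))^2 : ℝ) ∈ Set.Ici (0:ℝ) := Set.mem_Ici.2 (sq_nonneg _)
  have hconv := fh_convexOn_cosh_sqrt.2 hmem1 hmem2 hθ0 hθ1 (by ring)
  simp only [smul_eq_mul] at hconv
  have hnorm : ‖y + x‖^2 = a^2 + 2*t + c^2 := norm_add_sq_real y x
  have harg : θ * (l*(a-c))^2 + (1-θ) * (l*(a+c))^2 = (l * ‖y + x‖)^2 := by
    have : (l * ‖y + x‖)^2 = l^2 * (a^2 + 2*t + c^2) := by
      rw [mul_pow, hnorm]
    rw [this, hθdef]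
    field_simp
    ring
  have hsq1 : Real.sqrt ((l*(a-c))^2) = |l*(a-c)| := Real.sqrt_sq_eq_abs _
  have hsq2 : Real.sqrt ((l*(a+c))^2) = l*(a+c) := Real.sqrt_sq (by positivity)
  have hsq3 : Real.sqrt ((l * ‖y + x‖)^2) = l * ‖y + x‖ := Real.sqrt_sq (by positivity)
  rw [harg, hsq3, hsq1, hsq2] at hconv
  rw [Real.cosh_abs] at hconv
  have he1 : Real.cosh (l*(a+c)) ≤
      Real.cosh (l*a) * (Real.exp (l*c) - l*c) + (l*c) * Real.sinh (l*a) := by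
    have := fh_end1 (A := l*a) (C := l*c) (by positivity)
    rw [← mul_add] at this
    exact this
  have he2 : Real.cosh (l*(a-c)) ≤
      Real.cosh (l*a) * (Real.exp (l*c) - l*c) - (l*c) * Real.sinh (l*a) := by
    have := fh_end2 (A := l*a) (C := l*c) (by positivity)
    rw [← mul_sub] at this
    exact this
  have hfinal : θ * Real.cosh (l*(a-c)) + (1-θ) * Real.cosh (l*(a+c)) ≤
      Real.cosh (l*a) * (Real.exp (l*c) - l*c) + (l * Real.sinh (l*a) / a) * t := by
    have hb1 := mul_le_mul_of_nonneg_left he2 hθ0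
    have hb2 := mul_le_mul_of_nonneg_left he1 hθ1
    have hcoef : θ * (Real.cosh (l*a) * (Real.exp (l*c) - l*c) - (l*c) * Real.sinh (l*a))
        + (1-θ) * (Real.cosh (l*a) * (Real.exp (l*c) - l*c) + (l*c) * Real.sinh (l*a))
        = Real.cosh (l*a) * (Real.exp (l*c) - l*c) + (l * Real.sinh (l*a) / a) * t := by
      rw [hθdef]
      field_simp
      ring
    linarith
  calc Real.cosh (l * ‖y + x‖) ≤ θ * Real.cosh (l*(a-c)) + (1-θ) * Real.cosh (l*(a+c)) :=
        hconv
    _ ≤ _ := hfinal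

open MeasureTheory Filter

variable {Ω : Type*} {m m0 : MeasurableSpace Ω} {μ : Measure Ω}
  {E : Type*} [NormedAddCommGroup E] [InnerProductSpace ℝ E] [CompleteSpace E]
  [SecondCountableTopology E]

lemma fh_integrable_inner_simpleFunc (hm : m ≤ m0) (g : @SimpleFunc Ω m E) {X : Ω → E}
    (hX : Integrable X μ) :
    Integrable (fun ω => (inner ℝ (g ω) (X ω) : ℝ)) μ := by
  obtain ⟨C, hC⟩ := @SimpleFunc.exists_forall_norm_le Ω E m _ g
  have hmeas : AEStronglyMeasurable (fun ω => (inner ℝ (g ω) (X ω) : ℝ)) μ :=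
    AEStronglyMeasurable.inner (((@SimpleFunc.stronglyMeasurable Ω E m _ g).mono
      hm).aestronglyMeasurable) hX.1
  refine (hX.norm.const_mul C).mono' hmeas ?_
  filter_upwards with ω
  calc ‖(inner ℝ (g ω) (X ω) : ℝ)‖ ≤ ‖g ω‖ * ‖X ω‖ := norm_inner_le_norm _ _
    _ ≤ C * ‖X ω‖ := by nlinarith [hC ω, norm_nonneg (X ω), norm_nonneg (g ω)]

lemma fh_setIntegral_inner_simpleFunc (hm : m ≤ m0) [IsFiniteMeasure μ]
    (g : @SimpleFunc Ω m E) {X : Ω → E}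
    (hX : Integrable X μ) (hXc : μ[X|m] =ᵐ[μ] 0) {s : Set Ω} (hs : MeasurableSet[m] s) :
    ∫ ω in s, (inner ℝ (g ω) (X ω) : ℝ) ∂μ = 0 := by
  apply @SimpleFunc.induction Ω E m _
    (fun g => ∫ ω in s, (inner ℝ (g ω) (X ω) : ℝ) ∂μ = 0)
    (fun e A hA => ?_) (fun g₁ g₂ _ h₁ h₂ => ?_) g
  · classical
    have hg : ∀ ω, ((@SimpleFunc.piecewise Ω E m A hA (@SimpleFunc.const Ω E m e)
        (@SimpleFunc.const Ω E m 0)) ω) = A.indicator (fun _ => e) ω := fun ω => by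
      rw [@SimpleFunc.piecewise_apply Ω E m A hA]
      by_cases h : ω ∈ A <;> simp [h, Set.indicator_apply, @SimpleFunc.coe_const Ω E m]
    have heq : ∀ ω, (inner ℝ ((@SimpleFunc.piecewise Ω E m A hA (@SimpleFunc.const Ω E m e)
          (@SimpleFunc.const Ω E m 0)) ω) (X ω) : ℝ)
        = A.indicator (fun ω => (inner ℝ e (X ω) : ℝ)) ω := by
      intro ω
      rw [hg]
      by_cases h : ω ∈ A <;> simp [h, Set.indicator_apply]
    simp_rw [heq]
    rw [setIntegral_indicator (hm A hA), integral_inner (hX.restrict)]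
    have hz : ∫ ω in s ∩ A, X ω ∂μ = 0 := by
      rw [← setIntegral_condExp hm hX (hs.inter hA),
        setIntegral_congr_ae (hm _ (hs.inter hA)) (hXc.mono fun ω h _ => h)]
      simp
    rw [hz, inner_zero_right]
  · have hadd : ∀ ω, (inner ℝ ((g₁ + g₂) ω) (X ω) : ℝ)
        = (inner ℝ (g₁ ω) (X ω) : ℝ) + (inner ℝ (g₂ ω) (X ω) : ℝ) := by
      intro ω
      rw [@SimpleFunc.coe_add Ω E m _ g₁ g₂]
      simp [inner_add_left]
    simp_rw [hadd]
    rw [integral_add ((fh_integrable_inner_simpleFunc hm g₁ hX).restrict)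
        ((fh_integrable_inner_simpleFunc hm g₂ hX).restrict), h₁, h₂, add_zero]

lemma fh_setIntegral_inner_eq_zero (hm : m ≤ m0) [IsFiniteMeasure μ]
    {v X : Ω → E} (hv : StronglyMeasurable[m] v) {c : ℝ} (hc : 0 ≤ c)
    (hvb : ∀ᵐ ω ∂μ, ‖v ω‖ ≤ c) (hX : Integrable X μ) (hXc : μ[X|m] =ᵐ[μ] 0)
    {s : Set Ω} (hs : MeasurableSet[m] s) :
    ∫ ω in s, (inner ℝ (v ω) (X ω) : ℝ) ∂μ = 0 := by
  set vs := hv.approxBounded c with hvs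
  have h0 : ∀ n, ∫ ω in s, (inner ℝ (vs n ω) (X ω) : ℝ) ∂μ = 0 := fun n =>
    fh_setIntegral_inner_simpleFunc hm (vs n) hX hXc hs
  have htendsto_ae : ∀ᵐ ω ∂μ, Tendsto (fun n => vs n ω) atTop (nhds (v ω)) :=
    hv.tendsto_approxBounded_ae hvb
  have hlim : Tendsto (fun n => ∫ ω in s, (inner ℝ (vs n ω) (X ω) : ℝ) ∂μ) atTop
      (nhds (∫ ω in s, (inner ℝ (v ω) (X ω) : ℝ) ∂μ)) := by
    refine tendsto_integral_of_dominated_convergence (fun ω => c * ‖X ω‖)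
      (fun n => AEStronglyMeasurable.inner
        ((((vs n).stronglyMeasurable).mono hm).aestronglyMeasurable) hX.1.restrict)
      ((hX.norm.const_mul c).restrict) (fun n => ?_) ?_
    · filter_upwards with ω
      calc ‖(inner ℝ (vs n ω) (X ω) : ℝ)‖ ≤ ‖vs n ω‖ * ‖X ω‖ := norm_inner_le_norm _ _
        _ ≤ c * ‖X ω‖ := by
            nlinarith [hv.norm_approxBounded_le hc n ω, norm_nonneg (X ω)]
    · exact ae_restrict_of_ae (htendsto_ae.mono fun ω hω =>
        hω.inner tendsto_const_nhds)
  simp_rw [h0] at hlim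
  exact (tendsto_nhds_unique tendsto_const_nhds hlim).symm

end FHsupport

open MeasureTheory Finset

/-- Exponential-moment form of Freedman's inequality in Hilbert spaces:
for every `λ ∈ (0, 3/b)`, `ε > 0` and `σ > 0`,
`P(∃ k ∈ [n], ‖Y_k‖ ≥ ε and W_k ≤ σ²) ≤ 2 exp(−λε + λ²σ²/(2(1 − λb/3)))`. -/
theorem freedman_hilbert_exp_moment
    {Ω : Type*} {m0 : MeasurableSpace Ω} {P : Measure Ω} [IsProbabilityMeasure P]
    {E : Type*} [NormedAddCommGroup E] [InnerProductSpace ℝ E] [CompleteSpace E]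
    [SecondCountableTopology E]
    (n : ℕ) (ℱ : Filtration ℕ m0)
    (X : ℕ → Ω → E)
    (hadapted : ∀ i, 1 ≤ i → i ≤ n → StronglyMeasurable[ℱ i] (X i))
    (hint : ∀ i, 1 ≤ i → i ≤ n → Integrable (X i) P)
    (hmds : ∀ i, 1 ≤ i → i ≤ n → P[X i | ℱ (i - 1)] =ᵐ[P] 0)
    (b : ℝ) (hb : 0 < b)
    (hbound : ∀ i, 1 ≤ i → i ≤ n → ∀ᵐ ω ∂P, ‖X i ω‖ ≤ b)
    (Y : ℕ → Ω → E) (hY : ∀ k ω, Y k ω = ∑ j ∈ Finset.Icc 1 k, X j ω)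
    (W : ℕ → Ω → ℝ)
    (hW : ∀ k ω, W k ω = ∑ j ∈ Finset.Icc 1 k, (P[(fun ω' => ‖X j ω'‖ ^ 2) | ℱ (j - 1)]) ω)
    (lam : ℝ) (hlam : lam ∈ Set.Ioo 0 (3 / b))
    (ε σ : ℝ) (hε : 0 < ε) (hσ : 0 < σ) :
    P {ω | ∃ k ∈ Finset.Icc 1 n, ε ≤ ‖Y k ω‖ ∧ W k ω ≤ σ ^ 2}
      ≤ ENNReal.ofReal
          (2 * Real.exp (-(lam * ε) + lam ^ 2 * σ ^ 2 / (2 * (1 - lam * b / 3)))) := by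
  obtain ⟨hlam0, hlamb⟩ := hlam
  have hlb : lam * b < 3 := by
    rw [lt_div_iff₀ hb] at hlamb; linarith
  set D : ℝ := 2 * (1 - lam * b / 3) with hD
  have hD0 : 0 < D := by rw [hD]; nlinarith
  set K : ℝ := lam ^ 2 / D with hK
  have hK0 : 0 ≤ K := by positivity
  set S : ℕ → Ω → ℝ := fun k ω => Real.cosh (lam * ‖Y k ω‖) * Real.exp (-(K * W k ω)) with hS
  set Z : ℕ → Ω → ℝ := fun k => S (min k n) with hZ
  -- measurability
  have hYsm : ∀ k, k ≤ n → StronglyMeasurable[ℱ k] (Y k) := by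
    intro k hk
    have hYe : Y k = ∑ j ∈ Finset.Icc 1 k, X j := by
      funext ω
      rw [hY k ω, Finset.sum_apply]
    rw [hYe]
    refine Finset.stronglyMeasurable_sum _ fun j hj => ?_
    rw [Finset.mem_Icc] at hj
    exact (hadapted j hj.1 (hj.2.trans hk)).mono (ℱ.mono hj.2)
  have hWsm : ∀ k j, k ≤ j + 1 → StronglyMeasurable[ℱ j] (W k) := by
    intro k j hkj
    have hWe : W k = ∑ i ∈ Finset.Icc 1 k,
        (P[(fun ω' => ‖X i ω'‖ ^ 2) | ℱ (i - 1)]) := by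
      funext ω
      rw [hW k ω, Finset.sum_apply]
    rw [hWe]
    refine Finset.stronglyMeasurable_sum _ fun i hi => ?_
    rw [Finset.mem_Icc] at hi
    exact stronglyMeasurable_condExp.mono (ℱ.mono (by omega))
  have hSsm : ∀ k, k ≤ n → StronglyMeasurable[ℱ k] (S k) := by
    intro k hk
    exact (Real.continuous_cosh.comp_stronglyMeasurable
        ((hYsm k hk).norm.const_mul lam)).mul
      (Real.continuous_exp.comp_stronglyMeasurable
        (((hWsm k k (by omega)).const_mul K).neg))
  -- a.e. bounds
  have hXb : ∀ᵐ ω ∂P, ∀ j, 1 ≤ j → j ≤ n → ‖X j ω‖ ≤ b := by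
    rw [ae_all_iff]
    intro j
    by_cases hj : 1 ≤ j ∧ j ≤ n
    · filter_upwards [hbound j hj.1 hj.2] with ω h _ _ using h
    · filter_upwards with ω h1 h2
      exact absurd ⟨h1, h2⟩ hj
  have hYb : ∀ᵐ ω ∂P, ∀ k, k ≤ n → ‖Y k ω‖ ≤ n * b := by
    filter_upwards [hXb] with ω hω k hk
    rw [hY]
    calc ‖∑ j ∈ Finset.Icc 1 k, X j ω‖ ≤ ∑ j ∈ Finset.Icc 1 k, ‖X j ω‖ :=
        norm_sum_le _ _
      _ ≤ ∑ j ∈ Finset.Icc 1 k, b := by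
          refine Finset.sum_le_sum fun j hj => ?_
          rw [Finset.mem_Icc] at hj
          exact hω j hj.1 (hj.2.trans hk)
      _ = k * b := by
          rw [Finset.sum_const, Nat.card_Icc]
          simp [nsmul_eq_mul]
      _ ≤ n * b := by
          have : (k:ℝ) ≤ n := by exact_mod_cast hk
          nlinarith
  have hW0 : ∀ᵐ ω ∂P, ∀ k, 0 ≤ W k ω := by
    have h1 : ∀ᵐ ω ∂P, ∀ j : ℕ, 0 ≤ (P[(fun ω' => ‖X j ω'‖ ^ 2) | ℱ (j - 1)]) ω := by
      rw [ae_all_iff]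
      intro j
      exact condExp_nonneg (Filter.Eventually.of_forall fun ω => sq_nonneg _)
    filter_upwards [h1] with ω hω k
    rw [hW]
    exact Finset.sum_nonneg fun j _ => hω j
  set M : ℝ := Real.cosh (lam * (n * b)) with hM
  have hM0 : 0 < M := Real.cosh_pos _
  have hcoshb : ∀ᵐ ω ∂P, ∀ k, k ≤ n → Real.cosh (lam * ‖Y k ω‖) ≤ M := by
    filter_upwards [hYb] with ω hω k hk
    rw [hM, Real.cosh_le_cosh]
    have h2 := hω k hk
    have h3 : 0 ≤ lam * ‖Y k ω‖ := by positivity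
    have h4 : (0:ℝ) ≤ lam * (n * b) := le_trans h3 (by nlinarith [norm_nonneg (Y k ω)])
    rw [abs_of_nonneg h3, abs_of_nonneg h4]
    nlinarith [norm_nonneg (Y k ω)]
  have hSb : ∀ᵐ ω ∂P, ∀ k, k ≤ n → S k ω ≤ M := by
    filter_upwards [hcoshb, hW0] with ω hω hω0 k hk
    simp only [hS]
    have h1 : Real.cosh (lam * ‖Y k ω‖) ≤ M := hω k hk
    have h5 : Real.exp (-(K * W k ω)) ≤ 1 := by
      rw [Real.exp_le_one_iff]
      have := hω0 k
      nlinarith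
    calc Real.cosh (lam * ‖Y k ω‖) * Real.exp (-(K * W k ω)) ≤ M * 1 :=
          mul_le_mul h1 h5 (Real.exp_pos _).le hM0.le
      _ = M := mul_one M
  have hSpos : ∀ k ω, 0 ≤ S k ω := fun k ω => by
    simp only [hS]
    positivity
  have hSint : ∀ k, k ≤ n → Integrable (S k) P := by
    intro k hk
    refine (integrable_const M).mono' (((hSsm k hk).mono (ℱ.le k)).aestronglyMeasurable) ?_
    filter_upwards [hSb] with ω hω
    rw [Real.norm_eq_abs, abs_of_nonneg (hSpos k ω)]
    exact hω k hk
  have hZint : ∀ k, Integrable (Z k) P := fun k => hSint _ (min_le_right k n)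
  -- the supermartingale step
  have hstep : ∀ i (s : Set Ω), MeasurableSet[ℱ i] s →
      ∫ ω in s, Z (i + 1) ω ∂P ≤ ∫ ω in s, Z i ω ∂P := by
    intro i s hs
    rcases le_or_gt n i with hni | hin
    · have hmm : min (i + 1) n = min i n := by omega
      rw [hZ]
      simp only [hmm]
      exact le_refl _
    · have hmin1 : min (i + 1) n = i + 1 := by omega
      have hmin0 : min i n = i := by omega
      rw [hZ]
      simp only [hmin1, hmin0]
      have hi1n : i + 1 ≤ n := hin
      have hm : (ℱ i : MeasurableSpace Ω) ≤ m0 := ℱ.le i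
      have hXnint : Integrable (X (i + 1)) P := hint (i + 1) (by omega) hi1n
      have hXnsm : StronglyMeasurable[ℱ (i + 1)] (X (i + 1)) := hadapted _ (by omega) hi1n
      have hXn0 : P[X (i + 1)|ℱ i] =ᵐ[P] 0 := by
        have := hmds (i + 1) (by omega) hi1n
        simpa using this
      have hYsucc : ∀ ω, Y (i + 1) ω = Y i ω + X (i + 1) ω := by
        intro ω
        rw [hY, hY, Finset.sum_Icc_succ_top (by omega : 1 ≤ i + 1)]
      set σ2 : Ω → ℝ := P[(fun ω' => ‖X (i + 1) ω'‖ ^ 2) | ℱ i] with hσ2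
      have hWsucc : ∀ ω, W (i + 1) ω = W i ω + σ2 ω := by
        intro ω
        rw [hW, hW, Finset.sum_Icc_succ_top (by omega : 1 ≤ i + 1), hσ2]
        simp
      set g : Ω → ℝ := fun ω => Real.exp (-(K * W (i + 1) ω)) with hg
      have hgsm : StronglyMeasurable[ℱ i] g :=
        Real.continuous_exp.comp_stronglyMeasurable (((hWsm (i + 1) i le_rfl).const_mul K).neg)
      set G : Ω → ℝ := fun ω => Real.cosh (lam * ‖Y i ω‖) * g ω with hG
      have hGsm : StronglyMeasurable[ℱ i] G :=
        (Real.continuous_cosh.comp_stronglyMeasurable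
          ((hYsm i hin.le).norm.const_mul lam)).mul hgsm
      have hGpos : ∀ ω, 0 ≤ G ω := fun ω => by simp only [hG, hg]; positivity
      have hgb : ∀ᵐ ω ∂P, g ω ≤ 1 := by
        filter_upwards [hW0] with ω hω
        simp only [hg]
        rw [Real.exp_le_one_iff]
        nlinarith [hω (i + 1)]
      have hGb : ∀ᵐ ω ∂P, ‖G ω‖ ≤ M := by
        filter_upwards [hgb, hcoshb] with ω h1 h2
        rw [Real.norm_eq_abs, abs_of_nonneg (hGpos ω)]
        simp only [hG]
        have h3 := h2 i hin.le
        calc Real.cosh (lam * ‖Y i ω‖) * g ω ≤ M * 1 :=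
              mul_le_mul h3 h1 (Real.exp_pos _).le hM0.le
          _ = M := mul_one M
      set h : Ω → ℝ := fun ω => Real.exp (lam * ‖X (i + 1) ω‖) - lam * ‖X (i + 1) ω‖ with hh
      have hXnsm0 : StronglyMeasurable (X (i + 1)) := hXnsm.mono (ℱ.le _)
      have hhsm : StronglyMeasurable h :=
        (Real.continuous_exp.comp_stronglyMeasurable (hXnsm0.norm.const_mul lam)).sub
          (hXnsm0.norm.const_mul lam)
      have hhlb : ∀ ω, 1 ≤ h ω := by
        intro ω
        simp only [hh]
        have := Real.add_one_le_exp (lam * ‖X (i + 1) ω‖)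
        linarith
      have hhub : ∀ᵐ ω ∂P, h ω ≤ 1 + K * ‖X (i + 1) ω‖ ^ 2 := by
        filter_upwards [hXb] with ω hω
        have hbx : ‖X (i + 1) ω‖ ≤ b := hω (i + 1) (by omega) hi1n
        set v : ℝ := lam * ‖X (i + 1) ω‖ with hv
        have hv0 : 0 ≤ v := by positivity
        have hvb : v ≤ lam * b := by
          simp only [hv]; nlinarith
        have hv3 : v < 3 := lt_of_le_of_lt hvb hlb
        have h1 := fh_exp_sub_le hv0 hv3
        have h2 : v ^ 2 / (2 * (1 - v / 3)) ≤ v ^ 2 / D := by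
          apply div_le_div_of_nonneg_left (sq_nonneg v) hD0
          rw [hD]; nlinarith
        have h3 : v ^ 2 / D = K * ‖X (i + 1) ω‖ ^ 2 := by
          rw [hK, hv]
          field_simp
        simp only [hh]
        calc Real.exp v - v ≤ 1 + v ^ 2 / (2 * (1 - v / 3)) := h1
          _ ≤ 1 + v ^ 2 / D := by linarith
          _ = 1 + K * ‖X (i + 1) ω‖ ^ 2 := by rw [h3]
      have hhint : Integrable h P := by
        refine (integrable_const (1 + K * b ^ 2)).mono' hhsm.aestronglyMeasurable ?_
        filter_upwards [hhub, hXb] with ω h1 h2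
        have hbx : ‖X (i + 1) ω‖ ≤ b := h2 (i + 1) (by omega) hi1n
        rw [Real.norm_eq_abs, abs_of_nonneg (by linarith [hhlb ω])]
        have hsq : ‖X (i + 1) ω‖ ^ 2 ≤ b ^ 2 := by
          nlinarith [norm_nonneg (X (i + 1) ω)]
        have := mul_le_mul_of_nonneg_left hsq hK0
        linarith
      have hXn2int : Integrable (fun ω => ‖X (i + 1) ω‖ ^ 2) P := by
        refine (integrable_const (b ^ 2)).mono' (hXnsm0.norm.pow 2).aestronglyMeasurable ?_
        filter_upwards [hXb] with ω h2
        have hbx : ‖X (i + 1) ω‖ ≤ b := h2 (i + 1) (by omega) hi1n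
        rw [Real.norm_eq_abs, abs_of_nonneg (sq_nonneg _)]
        nlinarith [norm_nonneg (X (i + 1) ω)]
      set V : Ω → E := fun ω =>
        (g ω * (lam * Real.sinh (lam * ‖Y i ω‖) / ‖Y i ω‖)) • Y i ω with hV
      have hVsm : StronglyMeasurable[ℱ i] V := by
        refine StronglyMeasurable.smul ?_ (hYsm i hin.le)
        apply Measurable.stronglyMeasurable
        exact (hgsm.measurable.mul
          ((((hYsm i hin.le).norm.const_mul lam).measurable.sinh.const_mul lam).div
            (hYsm i hin.le).norm.measurable))
      set cV : ℝ := lam * Real.sinh (lam * (n * b)) with hcV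
      have hnb0 : (0:ℝ) ≤ n * b := by positivity
      have hcV0 : 0 ≤ cV := mul_nonneg hlam0.le (Real.sinh_nonneg_iff.2 (by positivity))
      have hVb : ∀ᵐ ω ∂P, ‖V ω‖ ≤ cV := by
        filter_upwards [hgb, hYb] with ω h1 h2
        simp only [hV]
        rw [norm_smul]
        by_cases h0 : Y i ω = 0
        · simp [h0, hcV0]
        · have ha : 0 < ‖Y i ω‖ := norm_pos_iff.2 h0
          have hgpos : 0 < g ω := Real.exp_pos _
          have hsinh0 : 0 ≤ Real.sinh (lam * ‖Y i ω‖) := Real.sinh_nonneg_iff.2 (by positivity)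
          have hcoef : 0 ≤ g ω * (lam * Real.sinh (lam * ‖Y i ω‖) / ‖Y i ω‖) := by positivity
          rw [Real.norm_eq_abs, abs_of_nonneg hcoef]
          have heq1 : g ω * (lam * Real.sinh (lam * ‖Y i ω‖) / ‖Y i ω‖) * ‖Y i ω‖
              = g ω * (lam * Real.sinh (lam * ‖Y i ω‖)) := by
            field_simp
          rw [heq1, hcV]
          have hsm : Real.sinh (lam * ‖Y i ω‖) ≤ Real.sinh (lam * (n * b)) := by
            rw [Real.sinh_le_sinh]
            nlinarith [h2 i hin.le, norm_nonneg (Y i ω)]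
          calc g ω * (lam * Real.sinh (lam * ‖Y i ω‖))
              ≤ 1 * (lam * Real.sinh (lam * (n * b))) := by
                apply mul_le_mul h1 (by nlinarith) (by positivity) zero_le_one
            _ = lam * Real.sinh (lam * (n * b)) := one_mul _
      have hpt : ∀ ω, S (i + 1) ω ≤ G ω * h ω + (inner ℝ (V ω) (X (i + 1) ω) : ℝ) := by
        intro ω
        have hkey := fh_key hlam0.le (Y i ω) (X (i + 1) ω)
        have hg0 : 0 ≤ g ω := (Real.exp_pos _).le
        have hmul := mul_le_mul_of_nonneg_right hkey hg0
        have hinner : (inner ℝ (V ω) (X (i + 1) ω) : ℝ)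
            = g ω * (lam * Real.sinh (lam * ‖Y i ω‖) / ‖Y i ω‖)
              * (inner ℝ (Y i ω) (X (i + 1) ω) : ℝ) := by
          simp only [hV]
          rw [real_inner_smul_left]
        simp only [hS, hG, hh]
        rw [hYsucc ω, hinner]
        calc Real.cosh (lam * ‖Y i ω + X (i + 1) ω‖) * Real.exp (-(K * W (i + 1) ω))
            = Real.cosh (lam * ‖Y i ω + X (i + 1) ω‖) * g ω := by rw [hg]
          _ ≤ (Real.cosh (lam * ‖Y i ω‖)
                * (Real.exp (lam * ‖X (i + 1) ω‖) - lam * ‖X (i + 1) ω‖)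
                + lam * Real.sinh (lam * ‖Y i ω‖) / ‖Y i ω‖
                  * (inner ℝ (Y i ω) (X (i + 1) ω) : ℝ)) * g ω := hmul
          _ = Real.cosh (lam * ‖Y i ω‖) * g ω
                * (Real.exp (lam * ‖X (i + 1) ω‖) - lam * ‖X (i + 1) ω‖)
              + g ω * (lam * Real.sinh (lam * ‖Y i ω‖) / ‖Y i ω‖)
                * (inner ℝ (Y i ω) (X (i + 1) ω) : ℝ) := by ring
      have hGh_int : Integrable (fun ω => G ω * h ω) P := by
        refine (integrable_const (M * (1 + K * b ^ 2))).mono'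
          (((hGsm.mono hm).mul hhsm).aestronglyMeasurable) ?_
        filter_upwards [hGb, hhub, hXb] with ω h1 h2 h3
        have hbx : ‖X (i + 1) ω‖ ≤ b := h3 (i + 1) (by omega) hi1n
        have hha : 0 ≤ h ω := by linarith [hhlb ω]
        rw [Real.norm_eq_abs, abs_mul, abs_of_nonneg (hGpos ω), abs_of_nonneg hha]
        have hsq : ‖X (i + 1) ω‖ ^ 2 ≤ b ^ 2 := by
          nlinarith [norm_nonneg (X (i + 1) ω)]
        have hh2 : h ω ≤ 1 + K * b ^ 2 := by
          have := mul_le_mul_of_nonneg_left hsq hK0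
          linarith
        rw [Real.norm_eq_abs, abs_of_nonneg (hGpos ω)] at h1
        nlinarith [hGpos ω, hhlb ω]
      have hinner_int : Integrable (fun ω => (inner ℝ (V ω) (X (i + 1) ω) : ℝ)) P := by
        refine (hXnint.norm.const_mul cV).mono'
          (AEStronglyMeasurable.inner ((hVsm.mono hm).aestronglyMeasurable) hXnint.1) ?_
        filter_upwards [hVb] with ω h1
        calc ‖(inner ℝ (V ω) (X (i + 1) ω) : ℝ)‖ ≤ ‖V ω‖ * ‖X (i + 1) ω‖ :=
              norm_inner_le_norm _ _
          _ ≤ cV * ‖X (i + 1) ω‖ := by nlinarith [norm_nonneg (X (i + 1) ω)]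
      have hmul_eq := condExp_stronglyMeasurable_mul_of_bound hm hGsm hhint M hGb
      have hcondh_le : P[h|ℱ i] ≤ᵐ[P] fun ω => 1 + K * σ2 ω := by
        have h1 : Integrable (fun ω => 1 + K * ‖X (i + 1) ω‖ ^ 2) P :=
          (integrable_const 1).add (hXn2int.const_mul K)
        have h2 := condExp_mono (m := ℱ i) hhint h1 hhub
        have h3 : P[(fun ω => 1 + K * ‖X (i + 1) ω‖ ^ 2)|ℱ i]
            =ᵐ[P] fun ω => 1 + K * σ2 ω := by
          have h4 : (fun ω => 1 + K * ‖X (i + 1) ω‖ ^ 2)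
              = (fun _ => (1:ℝ)) + K • (fun ω => ‖X (i + 1) ω‖ ^ 2) := by
            funext ω; simp [Pi.smul_apply, smul_eq_mul]
          rw [h4]
          refine (condExp_add (integrable_const 1) (hXn2int.smul K) (ℱ i)).trans ?_
          have h5 := condExp_smul (μ := P) (m := ℱ i) K (fun ω => ‖X (i + 1) ω‖ ^ 2)
          filter_upwards [h5] with ω h5ω
          rw [Pi.add_apply, condExp_const hm, h5ω, Pi.smul_apply, smul_eq_mul, hσ2]
        refine h2.trans h3.le
      have hL_int : Integrable (fun ω => G ω * (P[h|ℱ i]) ω) P :=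
        (integrable_condExp (f := fun ω => G ω * h ω) (m := ℱ i)).congr hmul_eq
      have hfinal_ae : (fun ω => G ω * (P[h|ℱ i]) ω) ≤ᵐ[P] S i := by
        have hσ2nn : ∀ᵐ ω ∂P, 0 ≤ σ2 ω :=
          condExp_nonneg (Filter.Eventually.of_forall fun ω => sq_nonneg _)
        filter_upwards [hcondh_le, hσ2nn] with ω h1 h2
        have step1 : G ω * (P[h|ℱ i]) ω ≤ G ω * (1 + K * σ2 ω) :=
          mul_le_mul_of_nonneg_left h1 (hGpos ω)
        refine step1.trans ?_
        simp only [hS, hG, hg]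
        rw [hWsucc ω]
        have hu0 : 0 ≤ K * σ2 ω := mul_nonneg hK0 h2
        have hux : -(K * (W i ω + σ2 ω)) = -(K * W i ω) + -(K * σ2 ω) := by ring
        rw [hux, Real.exp_add]
        have hexp1 : Real.exp (-(K * σ2 ω)) * (1 + K * σ2 ω) ≤ 1 := by
          have h3 := Real.add_one_le_exp (K * σ2 ω)
          have h5 : Real.exp (-(K * σ2 ω)) * Real.exp (K * σ2 ω) = 1 := by
            rw [← Real.exp_add]; simp
          nlinarith [Real.exp_pos (-(K * σ2 ω))]
        have hCE : 0 ≤ Real.cosh (lam * ‖Y i ω‖) * Real.exp (-(K * W i ω)) := by positivity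
        calc Real.cosh (lam * ‖Y i ω‖) * (Real.exp (-(K * W i ω)) * Real.exp (-(K * σ2 ω)))
              * (1 + K * σ2 ω)
            = Real.cosh (lam * ‖Y i ω‖) * Real.exp (-(K * W i ω))
              * (Real.exp (-(K * σ2 ω)) * (1 + K * σ2 ω)) := by ring
          _ ≤ Real.cosh (lam * ‖Y i ω‖) * Real.exp (-(K * W i ω)) * 1 :=
              mul_le_mul_of_nonneg_left hexp1 hCE
          _ = Real.cosh (lam * ‖Y i ω‖) * Real.exp (-(K * W i ω)) := mul_one _
      calc ∫ ω in s, S (i + 1) ω ∂P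
          ≤ ∫ ω in s, (G ω * h ω + (inner ℝ (V ω) (X (i + 1) ω) : ℝ)) ∂P :=
            setIntegral_mono ((hSint (i + 1) hi1n).integrableOn)
              ((hGh_int.add hinner_int).integrableOn) hpt
        _ = (∫ ω in s, G ω * h ω ∂P) + ∫ ω in s, (inner ℝ (V ω) (X (i + 1) ω) : ℝ) ∂P :=
            integral_add hGh_int.integrableOn hinner_int.integrableOn
        _ = ∫ ω in s, G ω * h ω ∂P := by
            rw [fh_setIntegral_inner_eq_zero hm hVsm hcV0 hVb hXnint hXn0 hs, add_zero]
        _ = ∫ ω in s, (P[(fun ω => G ω * h ω)|ℱ i]) ω ∂P :=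
            (setIntegral_condExp hm hGh_int hs).symm
        _ = ∫ ω in s, G ω * (P[h|ℱ i]) ω ∂P := by
            refine integral_congr_ae (ae_restrict_of_ae ?_)
            filter_upwards [hmul_eq] with ω hω
            exact hω
        _ ≤ ∫ ω in s, S i ω ∂P :=
            setIntegral_mono_ae hL_int.integrableOn (hSint i hin.le).integrableOn hfinal_ae
  -- supermartingale
  have hZadp : StronglyAdapted ℱ Z := fun k =>
    (hSsm (min k n) (min_le_right _ _)).mono (ℱ.mono (min_le_left k n))
  have hZsuper : Supermartingale Z ℱ P :=
    supermartingale_of_setIntegral_succ_le hZadp hZint hstep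
  set cst : ℝ := Real.cosh (lam * ε) * Real.exp (-(K * σ ^ 2)) with hcst
  have hcst0 : 0 < cst := by positivity
  set τ : Ω → WithTop ℕ := fun ω => ((hittingBtwn Z (Set.Ici cst) 0 n ω : ℕ) : WithTop ℕ) with hτdef
  have hτ : IsStoppingTime ℱ τ := hZadp.adapted.isStoppingTime_hittingBtwn measurableSet_Ici
  have hτle : ∀ ω, τ ω ≤ n := fun ω => WithTop.coe_le_coe.2 (hittingBtwn_le ω)
  have hZ0 : Z 0 = fun _ => (1:ℝ) := by
    funext ω
    simp only [hZ, hS]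
    have hY0 : Y 0 ω = 0 := by rw [hY]; simp
    have hW0' : W 0 ω = 0 := by rw [hW]; simp
    rcases Nat.eq_zero_or_pos (min 0 n) with hmn | hmn
    · rw [hmn, hY0, hW0']
      simp
    · omega
  have hsv_int : Integrable (stoppedValue Z τ) P := by
    exact integrable_stoppedValue ℕ hτ hZint hτle
  have hsv_nonneg : ∀ ω, 0 ≤ stoppedValue Z τ ω := fun ω => hSpos _ ω
  have hos : ∫ ω, stoppedValue Z τ ω ∂P ≤ 1 := by
    have h1 := (hZsuper.neg).expected_stoppedValue_mono
      (isStoppingTime_const ℱ 0) hτ (fun ω => WithTop.coe_le_coe.2 (Nat.zero_le _)) hτle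
    rw [stoppedValue_const] at h1
    have h2 : (stoppedValue (-Z) τ) = fun ω => -(stoppedValue Z τ ω) := by
      funext ω; rfl
    have h3 : ((-Z) 0) = fun ω => -(Z 0 ω) := by funext ω; rfl
    rw [h2, h3, integral_neg, integral_neg, neg_le_neg_iff] at h1
    calc ∫ ω, stoppedValue Z τ ω ∂P ≤ ∫ ω, Z 0 ω ∂P := h1
      _ = 1 := by rw [hZ0]; simp
  set A : Set Ω := ⋃ k ∈ Finset.Icc 0 n, {ω | cst ≤ Z k ω} with hA
  have hAmeas : MeasurableSet A := by
    refine Finset.measurableSet_biUnion _ fun k _ => ?_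
    exact measurableSet_le measurable_const
      (((hSsm (min k n) (min_le_right _ _)).mono (ℱ.le _)).measurable)
  have hsub : {ω | ∃ k ∈ Finset.Icc 1 n, ε ≤ ‖Y k ω‖ ∧ W k ω ≤ σ ^ 2} ⊆ A := by
    rintro ω ⟨k, hk, h1, h2⟩
    rw [Finset.mem_Icc] at hk
    refine Set.mem_biUnion (Finset.mem_Icc.2 ⟨Nat.zero_le _, hk.2⟩) ?_
    show cst ≤ Z k ω
    have hmk : min k n = k := min_eq_left hk.2
    simp only [hZ, hS, hmk]
    have hc1 : Real.cosh (lam * ε) ≤ Real.cosh (lam * ‖Y k ω‖) := by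
      rw [Real.cosh_le_cosh]
      rw [abs_of_nonneg (by positivity), abs_of_nonneg (by positivity)]
      nlinarith
    have hc2 : Real.exp (-(K * σ ^ 2)) ≤ Real.exp (-(K * W k ω)) := by
      rw [Real.exp_le_exp]
      have := mul_le_mul_of_nonneg_left h2 hK0
      linarith
    rw [hcst]
    exact mul_le_mul hc1 hc2 (Real.exp_pos _).le (Real.cosh_pos _).le
  have hAval : ∀ ω ∈ A, cst ≤ stoppedValue Z τ ω := by
    intro ω hω
    have hex : ∃ j ∈ Set.Icc 0 n, Z j ω ∈ Set.Ici cst := by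
      rw [hA] at hω
      simp only [Set.mem_iUnion, Set.mem_setOf_eq] at hω
      obtain ⟨j, hj, hjω⟩ := hω
      exact ⟨j, Set.mem_Icc.2 ⟨Nat.zero_le _, (Finset.mem_Icc.1 hj).2⟩, hjω⟩
    exact stoppedValue_hittingBtwn_mem hex
  have hmarkov : cst * (P A).toReal ≤ 1 := by
    have h1 := setIntegral_ge_of_const_le hAmeas (measure_ne_top P A) hAval
      hsv_int.integrableOn
    calc cst * (P A).toReal ≤ ∫ ω in A, stoppedValue Z τ ω ∂P := by
          rw [smul_eq_mul, mul_comm] at h1; exact h1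
      _ ≤ ∫ ω, stoppedValue Z τ ω ∂P :=
          setIntegral_le_integral hsv_int (Filter.Eventually.of_forall hsv_nonneg)
      _ ≤ 1 := hos
  have htoReal : (P A).toReal ≤ 2 * Real.exp (-(lam * ε) + lam ^ 2 * σ ^ 2 / D) := by
    have h2 : (P A).toReal ≤ 1 / cst := by
      rw [le_div_iff₀ hcst0]
      linarith [hmarkov]
    refine h2.trans ?_
    have hcosh_ge : Real.exp (lam * ε) / 2 ≤ Real.cosh (lam * ε) := by
      rw [Real.cosh_eq]
      have := Real.exp_pos (-(lam * ε))
      linarith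
    have hlow : Real.exp (lam * ε - K * σ ^ 2) / 2 ≤ cst := by
      rw [hcst]
      have he : Real.exp (lam * ε - K * σ ^ 2)
          = Real.exp (lam * ε) * Real.exp (-(K * σ ^ 2)) := by
        rw [← Real.exp_add]; ring_nf
      rw [he]
      have := Real.exp_pos (-(K * σ ^ 2))
      calc Real.exp (lam * ε) * Real.exp (-(K * σ ^ 2)) / 2
          = (Real.exp (lam * ε) / 2) * Real.exp (-(K * σ ^ 2)) := by ring
        _ ≤ Real.cosh (lam * ε) * Real.exp (-(K * σ ^ 2)) :=
            mul_le_mul_of_nonneg_right hcosh_ge this.le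
    have hexp_pos : 0 < Real.exp (lam * ε - K * σ ^ 2) / 2 := by positivity
    calc 1 / cst ≤ 1 / (Real.exp (lam * ε - K * σ ^ 2) / 2) :=
          one_div_le_one_div_of_le hexp_pos hlow
      _ = 2 * Real.exp (-(lam * ε - K * σ ^ 2)) := by
          rw [Real.exp_neg]
          field_simp
      _ = 2 * Real.exp (-(lam * ε) + lam ^ 2 * σ ^ 2 / D) := by
          congr 1
          rw [hK]
          ring
  calc P {ω | ∃ k ∈ Finset.Icc 1 n, ε ≤ ‖Y k ω‖ ∧ W k ω ≤ σ ^ 2} ≤ P A := measure_mono hsub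
    _ = ENNReal.ofReal ((P A).toReal) := (ENNReal.ofReal_toReal (measure_ne_top P A)).symm
    _ ≤ ENNReal.ofReal
        (2 * Real.exp (-(lam * ε) + lam ^ 2 * σ ^ 2 / (2 * (1 - lam * b / 3)))) := by
        apply ENNReal.ofReal_le_ofReal
        rw [← hD]
        exact htoReal
end

section
/- For every λ ∈ (0, 3/b), the process B_0 = 1, B_i = exp( −λ²W_i / (2(1 − λb/3)) ) · cosh(λ‖Y_i‖) for i ∈ {1,…,n}, is a positive supermartingale with respect to {𝓕_i}: for every i ∈ {1,…,n}, almost surely E[B_i | 𝓕_{i−1}] ≤ B_{i−1}. -/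
open MeasureTheory Finset
open Filter Nat Real
open scoped RealInnerProductSpace Topology

private lemma two_mul_three_pow_le_factorial (k : ℕ) : 2 * 3 ^ k ≤ (k + 2)! := by
  induction k with
  | zero => simp [Nat.factorial]
  | succ k ih =>
      have : (k + 3)! = (k + 3) * (k + 2)! := rfl
      calc 2 * 3 ^ (k + 1) = 3 * (2 * 3 ^ k) := by ring
        _ ≤ 3 * (k + 2)! := by omega
        _ ≤ (k + 3) * (k + 2)! := by
            have : (3:ℕ) ≤ k + 3 := by omega
            exact Nat.mul_le_mul_right _ this
        _ = (k + 3)! := rfl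

private lemma bernstein_exp_bound {v : ℝ} (h0 : 0 ≤ v) (h3 : v < 3) :
    Real.exp v - 1 - v ≤ v ^ 2 / (2 * (1 - v / 3)) := by
  have hsum := Real.summable_pow_div_factorial v
  have hexp : Real.exp v = ∑' n : ℕ, v ^ n / n ! := by
    rw [Real.exp_eq_exp_ℝ, NormedSpace.exp_eq_tsum_div]
  have htail : (∑ i ∈ Finset.range 2, v ^ i / i !) + ∑' k : ℕ, v ^ (k + 2) / (k + 2)!
      = ∑' n : ℕ, v ^ n / n ! := Summable.sum_add_tsum_nat_add 2 hsum
  have hrange : (∑ i ∈ Finset.range 2, v ^ i / i !) = 1 + v := by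
    simp [Finset.sum_range_succ, Nat.factorial]
  have htail' : ∑' k : ℕ, v ^ (k + 2) / (k + 2)! = Real.exp v - 1 - v := by
    rw [hexp, ← htail, hrange]; ring
  have hv3 : v / 3 < 1 := by linarith
  have hv30 : 0 ≤ v / 3 := by linarith
  have hgeom : Summable (fun k : ℕ => v ^ 2 / 2 * (v / 3) ^ k) :=
    (summable_geometric_of_lt_one hv30 hv3).mul_left _
  have hterm : ∀ k : ℕ, v ^ (k + 2) / (k + 2)! ≤ v ^ 2 / 2 * (v / 3) ^ k := by
    intro k
    have hfac : (2 * 3 ^ k : ℝ) ≤ ((k + 2)! : ℝ) := by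
      exact_mod_cast Nat.cast_le.2 (two_mul_three_pow_le_factorial k)
    have h1 : v ^ (k + 2) / ((k + 2)! : ℝ) ≤ v ^ (k + 2) / (2 * 3 ^ k) := by
      gcongr
    refine h1.trans (le_of_eq ?_)
    rw [pow_add, div_pow]
    field_simp
  have hsum2 : Summable (fun k : ℕ => v ^ (k + 2) / ((k + 2)! : ℝ)) :=
    (summable_nat_add_iff 2).2 hsum
  have := Summable.tsum_le_tsum hterm hsum2 hgeom
  rw [htail'] at this
  refine this.trans (le_of_eq ?_)
  rw [tsum_mul_left, tsum_geometric_of_lt_one hv30 hv3]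
  have h13 : (1 : ℝ) - v / 3 ≠ 0 := by linarith
  field_simp

private lemma sinh_le_mul_cosh {a : ℝ} (ha : 0 ≤ a) : Real.sinh a ≤ a * Real.cosh a := by
  have hder : ∀ x : ℝ, HasDerivAt (fun x => x * Real.cosh x - Real.sinh x)
      (x * Real.sinh x) x := by
    intro x
    have h1 : HasDerivAt (fun x : ℝ => x * Real.cosh x)
        (1 * Real.cosh x + x * Real.sinh x) x :=
      (hasDerivAt_id x).mul (Real.hasDerivAt_cosh x)
    have h2 := h1.sub (Real.hasDerivAt_sinh x)
    have h3 : x * Real.sinh x = 1 * Real.cosh x + x * Real.sinh x - Real.cosh x := by ring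
    rw [h3]
    exact h2
  have hmono : MonotoneOn (fun x : ℝ => x * Real.cosh x - Real.sinh x) (Set.Ici 0) := by
    apply monotoneOn_of_deriv_nonneg (convex_Ici 0)
    · exact ((continuous_id.mul Real.continuous_cosh).sub Real.continuous_sinh).continuousOn
    · intro x _
      exact (hder x).differentiableAt.differentiableWithinAt
    · intro x hx
      rw [interior_Ici] at hx
      rw [(hder x).deriv]
      exact mul_nonneg (le_of_lt hx) (Real.sinh_nonneg_iff.2 (le_of_lt hx))
  have := hmono Set.self_mem_Ici (Set.mem_Ici.2 ha) ha
  simp only [Real.cosh_zero, Real.sinh_zero, mul_zero, zero_mul, sub_zero, mul_one] at this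
  linarith [this]

private lemma sinh_div_mono {a a' : ℝ} (ha : 0 < a) (h : a ≤ a') :
    Real.sinh a / a ≤ Real.sinh a' / a' := by
  have ha' : 0 < a' := lt_of_lt_of_le ha h
  rw [div_le_div_iff₀ ha ha']
  -- sinh a * a' ≤ sinh a' * a
  have hder : ∀ x : ℝ, HasDerivAt (fun x => Real.sinh a * x - a * Real.sinh x)
      (Real.sinh a - a * Real.cosh x) x := by
    intro x
    have h1 := ((hasDerivAt_id x).const_mul (Real.sinh a)).sub
      ((Real.hasDerivAt_sinh x).const_mul a)
    have h3 : Real.sinh a - a * Real.cosh x = Real.sinh a * 1 - a * Real.cosh x := by ring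
    rw [h3]
    exact h1
  have hanti : AntitoneOn (fun x : ℝ => Real.sinh a * x - a * Real.sinh x) (Set.Icc a a') := by
    apply antitoneOn_of_deriv_nonpos (convex_Icc a a')
    · exact ((continuous_const.mul continuous_id).sub
        (continuous_const.mul Real.continuous_sinh)).continuousOn
    · intro x _
      exact (hder x).differentiableAt.differentiableWithinAt
    · intro x hx
      rw [interior_Icc] at hx
      rw [(hder x).deriv]
      have h1 : Real.sinh a ≤ a * Real.cosh a := sinh_le_mul_cosh ha.le
      have h2 : Real.cosh a ≤ Real.cosh x := by
        rw [Real.cosh_le_cosh]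
        rw [abs_of_nonneg ha.le, abs_of_nonneg (ha.trans hx.1).le]
        exact hx.1.le
      nlinarith [ha.le]
  have := hanti (Set.left_mem_Icc.2 h) (Set.right_mem_Icc.2 h) h
  simp only at this
  nlinarith [this]

private lemma convexOn_cosh_sqrt {l : ℝ} (hl : 0 < l) :
    ConvexOn ℝ (Set.Ici 0) (fun u : ℝ => Real.cosh (l * Real.sqrt u)) := by
  have hderiv : ∀ u : ℝ, 0 < u → HasDerivAt (fun u : ℝ => Real.cosh (l * Real.sqrt u))
      (Real.sinh (l * Real.sqrt u) * (l * (1 / (2 * Real.sqrt u)))) u := by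
    intro u hu
    have hs : HasDerivAt (fun u : ℝ => l * Real.sqrt u) (l * (1 / (2 * Real.sqrt u))) u :=
      (Real.hasDerivAt_sqrt (ne_of_gt hu)).const_mul l
    exact (Real.hasDerivAt_cosh (l * Real.sqrt u)).comp u hs
  apply MonotoneOn.convexOn_of_deriv (convex_Ici 0)
  · exact (Real.continuous_cosh.comp (continuous_const.mul Real.continuous_sqrt)).continuousOn
  · rw [interior_Ici]
    intro u hu
    exact (hderiv u hu).differentiableAt.differentiableWithinAt
  · rw [interior_Ici]
    intro u hu u' hu' huu'
    rw [(hderiv u hu).deriv, (hderiv u' hu').deriv]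
    have hsu : 0 < Real.sqrt u := Real.sqrt_pos.2 hu
    have hsu' : 0 < Real.sqrt u' := Real.sqrt_pos.2 hu'
    have hle : Real.sqrt u ≤ Real.sqrt u' := Real.sqrt_le_sqrt huu'
    have key : Real.sinh (l * Real.sqrt u) / (l * Real.sqrt u)
        ≤ Real.sinh (l * Real.sqrt u') / (l * Real.sqrt u') :=
      sinh_div_mono (by positivity) (by nlinarith)
    have e1 : Real.sinh (l * Real.sqrt u) * (l * (1 / (2 * Real.sqrt u)))
        = l ^ 2 / 2 * (Real.sinh (l * Real.sqrt u) / (l * Real.sqrt u)) := by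
      field_simp
    have e2 : Real.sinh (l * Real.sqrt u') * (l * (1 / (2 * Real.sqrt u')))
        = l ^ 2 / 2 * (Real.sinh (l * Real.sqrt u') / (l * Real.sqrt u')) := by
      field_simp
    rw [e1, e2]
    have : (0:ℝ) ≤ l ^ 2 / 2 := by positivity
    exact mul_le_mul_of_nonneg_left key this

private lemma key_scalar {l r s t : ℝ} (hl : 0 < l) (hr : 0 < r) (hs : 0 < s)
    (ht : 0 ≤ t) (h1 : |r - s| ≤ t) (h2 : t ≤ r + s) :
    Real.cosh (l * t) ≤ Real.cosh (l * r) * Real.cosh (l * s)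
      + (t ^ 2 - r ^ 2 - s ^ 2) / (2 * r * s) * (Real.sinh (l * r) * Real.sinh (l * s)) := by
  set u₁ : ℝ := (r - s) ^ 2 with hu₁
  set u₂ : ℝ := (r + s) ^ 2 with hu₂
  have hd : u₂ - u₁ = 4 * (r * s) := by rw [hu₁, hu₂]; ring
  have hrs : 0 < r * s := mul_pos hr hs
  have hne : u₂ - u₁ ≠ 0 := by rw [hd]; positivity
  have hlt : u₁ < u₂ := by nlinarith
  have hu1t : u₁ ≤ t ^ 2 := by
    have := pow_le_pow_left₀ (abs_nonneg (r - s)) h1 2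
    rwa [sq_abs] at this
  have hu2t : t ^ 2 ≤ u₂ := pow_le_pow_left₀ ht h2 2
  set θ : ℝ := (u₂ - t ^ 2) / (u₂ - u₁) with hθ
  have hθ4 : θ * (4 * (r * s)) = u₂ - t ^ 2 := by
    rw [hθ, ← hd, div_mul_cancel₀ _ hne]
  have hθ0 : 0 ≤ θ := div_nonneg (by linarith) (by linarith)
  have hθ1' : 0 ≤ 1 - θ := by
    have : θ ≤ 1 := by
      rw [hθ, div_le_one (by linarith)]
      linarith
    linarith
  have hcomb : θ * u₁ + (1 - θ) * u₂ = t ^ 2 := by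
    have h4 := hθ4
    rw [← hd] at h4
    linear_combination (-1 : ℝ) * h4
  have hcvx := (convexOn_cosh_sqrt hl).2 (Set.mem_Ici.2 (sq_nonneg (r - s)))
    (Set.mem_Ici.2 (sq_nonneg (r + s))) hθ0 hθ1' (by ring : θ + (1 - θ) = 1)
  simp only [smul_eq_mul] at hcvx
  rw [hcomb] at hcvx
  have e0 : Real.sqrt (t ^ 2) = t := Real.sqrt_sq ht
  have e1 : Real.cosh (l * Real.sqrt u₁)
      = Real.cosh (l * r) * Real.cosh (l * s) - Real.sinh (l * r) * Real.sinh (l * s) := by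
    rw [hu₁, Real.sqrt_sq_eq_abs,
      show l * |r - s| = |l * (r - s)| by rw [abs_mul, abs_of_nonneg hl.le],
      Real.cosh_abs, show l * (r - s) = l * r - l * s by ring, Real.cosh_sub]
  have e2 : Real.cosh (l * Real.sqrt u₂)
      = Real.cosh (l * r) * Real.cosh (l * s) + Real.sinh (l * r) * Real.sinh (l * s) := by
    rw [hu₂, Real.sqrt_sq (by linarith), show l * (r + s) = l * r + l * s by ring,
      Real.cosh_add]
  rw [e0, e1, e2] at hcvx
  refine hcvx.trans (le_of_eq ?_)
  have h2θ : (1 - 2 * θ) * (2 * r * s) = t ^ 2 - r ^ 2 - s ^ 2 := by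
    have hu2e : u₂ = (r + s) ^ 2 := hu₂
    linear_combination (-1 : ℝ) * hθ4 + hu2e
  have hq : (t ^ 2 - r ^ 2 - s ^ 2) / (2 * r * s) = 1 - 2 * θ := by
    rw [← h2θ, mul_div_cancel_right₀ _ (by positivity : 2 * r * s ≠ 0)]
  rw [hq]
  ring

private lemma exp_lin_bound {l b s : ℝ} (hl : 0 < l) (hlb : l * b < 3)
    (hs : 0 ≤ s) (hsb : s ≤ b) :
    Real.exp (l * s) - l * s ≤ 1 + l ^ 2 / (2 * (1 - l * b / 3)) * s ^ 2 := by
  have hv0 : 0 ≤ l * s := mul_nonneg hl.le hs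
  have hvb : l * s ≤ l * b := mul_le_mul_of_nonneg_left hsb hl.le
  have hv3 : l * s < 3 := lt_of_le_of_lt hvb hlb
  have h1 := bernstein_exp_bound hv0 hv3
  have hpos : (0:ℝ) < 1 - l * b / 3 := by linarith
  have h2 : (l * s) ^ 2 / (2 * (1 - l * s / 3)) ≤ (l * s) ^ 2 / (2 * (1 - l * b / 3)) := by
    gcongr
  have h3' : (l * s) ^ 2 / (2 * (1 - l * b / 3)) = l ^ 2 / (2 * (1 - l * b / 3)) * s ^ 2 := by
    rw [mul_pow]
    ring
  nlinarith [h1, h2]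

noncomputable def freedmanWv {F : Type*} [NormedAddCommGroup F] [InnerProductSpace ℝ F]
    (l : ℝ) (y : F) : F :=
  (if ‖y‖ = 0 then 0 else l * Real.sinh (l * ‖y‖) / ‖y‖) • y

private lemma key_vector {F : Type*} [NormedAddCommGroup F] [InnerProductSpace ℝ F]
    {l b : ℝ} (hl : 0 < l) (hb : 0 < b) (hlb : l * b < 3) (y x : F) (hx : ‖x‖ ≤ b) :
    Real.cosh (l * ‖y + x‖) ≤
      Real.cosh (l * ‖y‖) * (1 + l ^ 2 / (2 * (1 - l * b / 3)) * ‖x‖ ^ 2)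
        + ⟪freedmanWv l y, x⟫ := by
  have hpos : (0:ℝ) < 1 - l * b / 3 := by nlinarith [mul_pos hl hb]
  have hK0 : 0 ≤ l ^ 2 / (2 * (1 - l * b / 3)) := by positivity
  by_cases hx0 : ‖x‖ = 0
  · have : x = 0 := norm_eq_zero.1 hx0
    subst this
    simp only [add_zero, norm_zero, inner_zero_right, hx0]
    nlinarith [Real.cosh_pos (l * ‖y‖)]
  by_cases hy0 : ‖y‖ = 0
  · have hy' : y = 0 := norm_eq_zero.1 hy0
    subst hy'
    rw [freedmanWv]
    simp only [norm_zero, mul_zero, Real.cosh_zero, zero_add, smul_zero, inner_zero_left,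
      add_zero, one_mul]
    have hs0 : 0 ≤ ‖x‖ := norm_nonneg x
    have h1 : Real.cosh (l * ‖x‖) ≤ Real.exp (l * ‖x‖) - l * ‖x‖ := by
      have h2 : l * ‖x‖ ≤ Real.sinh (l * ‖x‖) :=
        Real.self_le_sinh_iff.2 (mul_nonneg hl.le hs0)
      have h3 := Real.cosh_add_sinh (l * ‖x‖)
      linarith
    have h4 := exp_lin_bound hl hlb hs0 hx
    linarith
  · have hr : 0 < ‖y‖ := (norm_nonneg y).lt_of_ne' hy0
    have hs : 0 < ‖x‖ := (norm_nonneg x).lt_of_ne' hx0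
    have ht : 0 ≤ ‖y + x‖ := norm_nonneg _
    have h1 : |‖y‖ - ‖x‖| ≤ ‖y + x‖ := by
      have := abs_norm_sub_norm_le y (-x)
      simpa [sub_neg_eq_add] using this
    have h2 : ‖y + x‖ ≤ ‖y‖ + ‖x‖ := norm_add_le y x
    have hks := key_scalar hl hr hs ht h1 h2
    have hinner : ‖y + x‖ ^ 2 - ‖y‖ ^ 2 - ‖x‖ ^ 2 = 2 * ⟪y, x⟫ := by
      rw [@norm_add_sq_real]
      ring
    rw [hinner] at hks
    set c : ℝ := ⟪y, x⟫ / (‖y‖ * ‖x‖) with hc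
    have hcoef : 2 * ⟪y, x⟫ / (2 * ‖y‖ * ‖x‖) = c := by
      rw [hc]
      rw [div_eq_div_iff (by positivity) (by positivity)]
      ring
    rw [hcoef] at hks
    have hc1 : |c| ≤ 1 := by
      rw [hc, abs_div, div_le_one (by positivity : (0:ℝ) < |‖y‖ * ‖x‖|)]
      calc |⟪y, x⟫| ≤ ‖y‖ * ‖x‖ := abs_real_inner_le_norm y x
        _ ≤ |‖y‖ * ‖x‖| := le_abs_self _
    set Sr : ℝ := Real.sinh (l * ‖y‖) with hSr
    set Ss : ℝ := Real.sinh (l * ‖x‖) with hSs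
    set A : ℝ := Real.cosh (l * ‖y‖) with hA
    set B : ℝ := Real.cosh (l * ‖x‖) with hB
    set u : ℝ := l * ‖x‖ with hu
    have hu0 : 0 ≤ u := mul_nonneg hl.le hs.le
    have hSs_u : u ≤ Ss := Real.self_le_sinh_iff.2 hu0
    have hSr0 : 0 ≤ Sr := Real.sinh_nonneg_iff.2 (mul_nonneg hl.le hr.le)
    have hSrA : Sr ≤ A := by
      have h5 := Real.cosh_sub_sinh (l * ‖y‖)
      have h6 := Real.exp_pos (-(l * ‖y‖))
      rw [← hSr, ← hA] at h5
      linarith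
    have hA0 : 0 < A := Real.cosh_pos _
    have hw : ⟪freedmanWv l y, x⟫ = c * Sr * u := by
      rw [freedmanWv, if_neg hy0, real_inner_smul_left, hc, hSr, hu]
      field_simp
    have step1 : c * Sr * (Ss - u) ≤ A * (Ss - u) := by
      apply mul_le_mul_of_nonneg_right _ (by linarith)
      calc c * Sr ≤ 1 * Sr := mul_le_mul_of_nonneg_right (abs_le.1 hc1).2 hSr0
        _ = Sr := one_mul _
        _ ≤ A := hSrA
    have hcs : B + Ss = Real.exp u := Real.cosh_add_sinh u
    have hexp : Real.exp u - u ≤ 1 + l ^ 2 / (2 * (1 - l * b / 3)) * ‖x‖ ^ 2 :=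
      exp_lin_bound hl hlb hs.le hx
    calc Real.cosh (l * ‖y + x‖)
        ≤ A * B + c * (Sr * Ss) := hks
      _ = A * B + c * Sr * (Ss - u) + ⟪freedmanWv l y, x⟫ := by rw [hw]; ring
      _ ≤ A * B + A * (Ss - u) + ⟪freedmanWv l y, x⟫ := by linarith
      _ = A * (B + Ss - u) + ⟪freedmanWv l y, x⟫ := by ring
      _ = A * (Real.exp u - u) + ⟪freedmanWv l y, x⟫ := by rw [← hcs]
      _ ≤ A * (1 + l ^ 2 / (2 * (1 - l * b / 3)) * ‖x‖ ^ 2) + ⟪freedmanWv l y, x⟫ := by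
          have := mul_le_mul_of_nonneg_left hexp hA0.le
          linarith

section CondexpInner

variable {α F : Type*} [NormedAddCommGroup F] [InnerProductSpace ℝ F] [CompleteSpace F]
  {m m0 : MeasurableSpace α} {μ : Measure α}

private lemma setIntegral_inner_simpleFunc (hm : m ≤ m0) [IsFiniteMeasure μ]
    (s : @SimpleFunc α m F) {X : α → F} (hX : Integrable X μ)
    {A : Set α} (hA : MeasurableSet[m] A) :
    ∫ ω in A, ⟪s ω, X ω⟫ ∂μ = ∫ ω in A, ⟪s ω, (μ[X|m]) ω⟫ ∂μ := by
  haveI : SigmaFinite (μ.trim hm) := by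
    have : IsFiniteMeasure (μ.trim hm) := isFiniteMeasure_trim hm
    infer_instance
  apply @SimpleFunc.induction _ _ m _
    (fun s : @SimpleFunc α m F =>
      ∫ ω in A, ⟪s ω, X ω⟫ ∂μ = ∫ ω in A, ⟪s ω, (μ[X|m]) ω⟫ ∂μ)
    (fun c {B} hB => ?_) (fun f g _ hf hg => ?_) s
  · -- indicator case
    classical
    simp only [@SimpleFunc.coe_piecewise _ _ m, @SimpleFunc.coe_const _ _ m,
      @SimpleFunc.coe_zero _ _ m, Set.piecewise_eq_indicator]
    have h1 : ∀ (Z : α → F), ∀ ω, ⟪B.piecewise (Function.const α c) (Function.const α 0) ω, Z ω⟫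
        = B.indicator (fun ω => ⟪c, Z ω⟫) ω := by
      intro Z ω
      by_cases hω : ω ∈ B
      · rw [Set.piecewise_eq_of_mem _ _ _ hω, Set.indicator_of_mem hω]
        rfl
      · rw [Set.piecewise_eq_of_notMem _ _ _ hω, Set.indicator_of_notMem hω]
        simp [Function.const]
    simp_rw [h1]
    rw [setIntegral_indicator (hm B hB), setIntegral_indicator (hm B hB),
      integral_inner hX.integrableOn, integral_inner integrable_condExp.integrableOn,
      setIntegral_condExp hm hX ((hA.inter hB) : MeasurableSet[m] (A ∩ B))]
  · -- add case
    have hfg : ∀ ω, ((f + g : @SimpleFunc α m F) : α → F) ω = f ω + g ω := by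
      intro ω; rw [@SimpleFunc.coe_add _ _ m]; rfl
    obtain ⟨Cf, hCf⟩ := @SimpleFunc.exists_forall_norm_le α F m _ f
    obtain ⟨Cg, hCg⟩ := @SimpleFunc.exists_forall_norm_le α F m _ g
    have hintf : ∀ (Z : α → F), Integrable Z μ →
        Integrable (fun ω => ⟪f ω, Z ω⟫) μ := fun Z hZ =>
      Integrable.mono' (hZ.norm.const_mul Cf)
        (((f.stronglyMeasurable.mono hm).aestronglyMeasurable).inner hZ.1)
        (Eventually.of_forall fun ω => (norm_inner_le_norm _ _).trans
          (mul_le_mul_of_nonneg_right (hCf ω) (norm_nonneg _)))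
    have hintg : ∀ (Z : α → F), Integrable Z μ →
        Integrable (fun ω => ⟪g ω, Z ω⟫) μ := fun Z hZ =>
      Integrable.mono' (hZ.norm.const_mul Cg)
        (((g.stronglyMeasurable.mono hm).aestronglyMeasurable).inner hZ.1)
        (Eventually.of_forall fun ω => (norm_inner_le_norm _ _).trans
          (mul_le_mul_of_nonneg_right (hCg ω) (norm_nonneg _)))
    simp_rw [hfg, inner_add_left]
    rw [integral_add ((hintf X hX).integrableOn) ((hintg X hX).integrableOn),
      integral_add ((hintf _ integrable_condExp).integrableOn)
        ((hintg _ integrable_condExp).integrableOn), hf, hg]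

private lemma setIntegral_inner_condexp (hm : m ≤ m0) [IsFiniteMeasure μ]
    {v X : α → F} (hv : StronglyMeasurable[m] v) {c : ℝ} (hvb : ∀ᵐ ω ∂μ, ‖v ω‖ ≤ c)
    (hX : Integrable X μ) {A : Set α} (hA : MeasurableSet[m] A) :
    ∫ ω in A, ⟪v ω, X ω⟫ ∂μ = ∫ ω in A, ⟪v ω, (μ[X|m]) ω⟫ ∂μ := by
  by_cases hμ : μ = 0
  · subst hμ; simp
  have : (ae μ).NeBot := ae_neBot.2 hμ
  have hc : 0 ≤ c := by
    rcases hvb.exists with ⟨ω, hω⟩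
    exact (norm_nonneg _).trans hω
  set fs := hv.approxBounded c with hfs
  have h_tendsto : ∀ᵐ ω ∂μ, Tendsto (fun n => fs n ω) atTop (𝓝 (v ω)) :=
    hv.tendsto_approxBounded_ae hvb
  have h_bdd : ∀ n ω, ‖fs n ω‖ ≤ c := hv.norm_approxBounded_le hc
  have key : ∀ (Z : α → F), Integrable Z μ →
      Tendsto (fun n => ∫ ω in A, ⟪fs n ω, Z ω⟫ ∂μ) atTop (𝓝 (∫ ω in A, ⟪v ω, Z ω⟫ ∂μ)) := by
    intro Z hZ
    refine tendsto_integral_of_dominated_convergence (fun ω => c * ‖Z ω‖)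
      (fun n => ((((fs n).stronglyMeasurable.mono hm).aestronglyMeasurable).inner
        hZ.1).restrict) ((hZ.norm.const_mul c).integrableOn) (fun n => ?_) ?_
    · exact Eventually.of_forall fun ω => (norm_inner_le_norm _ _).trans
        (mul_le_mul_of_nonneg_right (h_bdd n ω) (norm_nonneg _))
    · refine ae_restrict_of_ae (h_tendsto.mono fun ω hω => ?_)
      exact hω.inner tendsto_const_nhds
  have h1 := key X hX
  have h2 := key (μ[X|m]) integrable_condExp
  have heq : ∀ n, ∫ ω in A, ⟪fs n ω, X ω⟫ ∂μ = ∫ ω in A, ⟪fs n ω, (μ[X|m]) ω⟫ ∂μ :=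
    fun n => setIntegral_inner_simpleFunc hm (fs n) hX hA
  simp_rw [heq] at h1
  exact tendsto_nhds_unique h1 h2

private lemma condexp_inner_eq_zero (hm : m ≤ m0) [IsFiniteMeasure μ]
    {v X : α → F} (hv : StronglyMeasurable[m] v) {c : ℝ} (hvb : ∀ᵐ ω ∂μ, ‖v ω‖ ≤ c)
    (hX : Integrable X μ) (hX0 : μ[X|m] =ᵐ[μ] 0)
    (hint : Integrable (fun ω => ⟪v ω, X ω⟫) μ) :
    μ[fun ω => ⟪v ω, X ω⟫|m] =ᵐ[μ] 0 := by
  haveI : SigmaFinite (μ.trim hm) := by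
    have : IsFiniteMeasure (μ.trim hm) := isFiniteMeasure_trim hm
    infer_instance
  have h := ae_eq_condExp_of_forall_setIntegral_eq hm hint
    (g := fun _ => (0:ℝ))
    (fun s _ _ => (integrable_zero _ _ _).integrableOn)
    (fun s hs _ => ?_) ?_
  · exact h.symm
  · rw [setIntegral_inner_condexp hm hv hvb hX hs]
    have : ∀ᵐ ω ∂(μ.restrict s), ⟪v ω, (μ[X|m]) ω⟫ = 0 := by
      refine ae_restrict_of_ae (hX0.mono fun ω hω => ?_)
      rw [hω]
      exact inner_zero_right _
    rw [integral_congr_ae this]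
  · exact stronglyMeasurable_const.aestronglyMeasurable

end CondexpInner

set_option maxHeartbeats 1000000 in
/-- For every `λ ∈ (0, 3/b)`, the process
`B_0 = 1`, `B_i = exp(−λ² W_i / (2(1 − λb/3))) · cosh(λ‖Y_i‖)` for `i ∈ [n]`,
is a positive supermartingale with respect to the filtration:
for every `i ∈ [n]`, almost surely `E[B_i | ℱ_{i−1}] ≤ B_{i−1}`. -/
theorem freedman_hilbert_supermartingale
    {Ω : Type*} {m0 : MeasurableSpace Ω} {P : Measure Ω} [IsProbabilityMeasure P]
    {E : Type*} [NormedAddCommGroup E] [InnerProductSpace ℝ E] [CompleteSpace E]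
    [SecondCountableTopology E]
    (n : ℕ) (ℱ : Filtration ℕ m0)
    (X : ℕ → Ω → E)
    (hadapted : ∀ i, 1 ≤ i → i ≤ n → StronglyMeasurable[ℱ i] (X i))
    (hint : ∀ i, 1 ≤ i → i ≤ n → Integrable (X i) P)
    (hmds : ∀ i, 1 ≤ i → i ≤ n → P[X i | ℱ (i - 1)] =ᵐ[P] 0)
    (b : ℝ) (hb : 0 < b)
    (hbound : ∀ i, 1 ≤ i → i ≤ n → ∀ᵐ ω ∂P, ‖X i ω‖ ≤ b)
    (Y : ℕ → Ω → E) (hY : ∀ k ω, Y k ω = ∑ j ∈ Finset.Icc 1 k, X j ω)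
    (W : ℕ → Ω → ℝ)
    (hW : ∀ k ω, W k ω = ∑ j ∈ Finset.Icc 1 k, (P[(fun ω' => ‖X j ω'‖ ^ 2) | ℱ (j - 1)]) ω)
    (lam : ℝ) (hlam : lam ∈ Set.Ioo 0 (3 / b))
    (B : ℕ → Ω → ℝ)
    (hB0 : ∀ ω, B 0 ω = 1)
    (hB : ∀ i, 1 ≤ i → i ≤ n → ∀ ω,
      B i ω = Real.exp (-(lam ^ 2 * W i ω) / (2 * (1 - lam * b / 3)))
                * Real.cosh (lam * ‖Y i ω‖)) :
    (∀ i, i ≤ n → ∀ ω, 0 < B i ω) ∧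
      (∀ i, 1 ≤ i → i ≤ n → ∀ᵐ ω ∂P, (P[B i | ℱ (i - 1)]) ω ≤ B (i - 1) ω) := by
  obtain ⟨hlam0, hlam3⟩ := hlam
  have hlb : lam * b < 3 := (lt_div_iff₀ hb).1 hlam3
  have hpos : (0:ℝ) < 1 - lam * b / 3 := by linarith
  set K : ℝ := lam ^ 2 / (2 * (1 - lam * b / 3)) with hK
  have hK0 : 0 ≤ K := by positivity
  have harg : ∀ w : ℝ, -(lam ^ 2 * w) / (2 * (1 - lam * b / 3)) = -(K * w) := by
    intro w; rw [hK]; ring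
  constructor
  · intro i hi ω
    rcases Nat.eq_zero_or_pos i with h0 | h1
    · rw [h0, hB0]; norm_num
    · rw [hB i h1 hi ω]
      exact mul_pos (Real.exp_pos _) (Real.cosh_pos _)
  intro i hi1 hin
  have hm : ℱ (i - 1) ≤ m0 := ℱ.le _
  haveI hsf : SigmaFinite (P.trim hm) := by
    have : IsFiniteMeasure (P.trim hm) := isFiniteMeasure_trim hm
    infer_instance
  -- abbreviations
  set σ : Ω → ℝ := P[(fun ω' => ‖X i ω'‖ ^ 2) | ℱ (i - 1)] with hσdef
  set phi : Ω → ℝ := fun ω => Real.cosh (lam * ‖Y (i - 1) ω‖) with hphidef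
  set f : Ω → ℝ := fun ω => Real.exp (-(K * W i ω)) with hfdef
  set g : Ω → ℝ := fun ω => Real.cosh (lam * ‖Y i ω‖) with hgdef
  set u : Ω → ℝ := fun ω => 1 + K * ‖X i ω‖ ^ 2 with hudef
  set v : Ω → E := fun ω => freedmanWv lam (Y (i - 1) ω) with hvdef
  -- pointwise splits
  have hi' : i - 1 + 1 = i := Nat.succ_pred_eq_of_pos hi1
  have hYsplit : ∀ ω, Y i ω = Y (i - 1) ω + X i ω := by
    intro ω
    rw [hY, hY, ← hi', Finset.sum_Icc_succ_top (Nat.le_add_left 1 _), hi']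
  have hWsplit : ∀ ω, W i ω = W (i - 1) ω + σ ω := by
    intro ω
    rw [hW, hW, ← hi', Finset.sum_Icc_succ_top (Nat.le_add_left 1 _), hi', hσdef]
  -- measurability
  have hXi_sm : StronglyMeasurable[m0] (X i) := (hadapted i hi1 hin).mono (ℱ.le i)
  have hXi_int : Integrable (X i) P := hint i hi1 hin
  have hYsm : ∀ k, k ≤ n → StronglyMeasurable[ℱ k] (Y k) := by
    intro k hk
    rw [show Y k = fun ω => ∑ j ∈ Finset.Icc 1 k, X j ω from funext (hY k)]
    refine Finset.stronglyMeasurable_fun_sum _ fun j hj => ?_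
    rw [Finset.mem_Icc] at hj
    exact (hadapted j hj.1 (hj.2.trans hk)).mono (ℱ.mono hj.2)
  have hYim_sm : StronglyMeasurable[ℱ (i - 1)] (Y (i - 1)) :=
    hYsm (i - 1) (le_trans (Nat.sub_le i 1) hin)
  have hYi_sm0 : StronglyMeasurable[m0] (Y i) := (hYsm i hin).mono (ℱ.le i)
  have hW_sm : StronglyMeasurable[ℱ (i - 1)] (W i) := by
    rw [show W i = fun ω => ∑ j ∈ Finset.Icc 1 i,
      (P[(fun ω' => ‖X j ω'‖ ^ 2) | ℱ (j - 1)]) ω from funext (hW i)]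
    refine Finset.stronglyMeasurable_fun_sum _ fun j hj => ?_
    rw [Finset.mem_Icc] at hj
    exact stronglyMeasurable_condExp.mono (ℱ.mono (Nat.sub_le_sub_right hj.2 1))
  have hf_sm : StronglyMeasurable[ℱ (i - 1)] f :=
    Real.continuous_exp.comp_stronglyMeasurable ((hW_sm.const_mul K).neg)
  have hphi_sm : StronglyMeasurable[ℱ (i - 1)] phi :=
    Real.continuous_cosh.comp_stronglyMeasurable (hYim_sm.norm.const_mul lam)
  have hg_sm0 : StronglyMeasurable[m0] g :=
    Real.continuous_cosh.comp_stronglyMeasurable (hYi_sm0.norm.const_mul lam)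
  have hX2_sm0 : StronglyMeasurable[m0] (fun ω => ‖X i ω‖ ^ 2) := by
    have := hXi_sm.norm.mul hXi_sm.norm
    simp only [pow_two]
    exact this
  -- a.e. bounds
  have hXb : ∀ᵐ ω ∂P, ‖X i ω‖ ≤ b := hbound i hi1 hin
  have hYb : ∀ k, k ≤ n → ∀ᵐ ω ∂P, ‖Y k ω‖ ≤ (Finset.Icc 1 k).card * b := by
    intro k hk
    have h1 : ∀ᵐ ω ∂P, ∀ j ∈ Finset.Icc 1 k, ‖X j ω‖ ≤ b := by
      rw [eventually_all_finset]
      intro j hj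
      rw [Finset.mem_Icc] at hj
      exact hbound j hj.1 (hj.2.trans hk)
    filter_upwards [h1] with ω hω
    rw [hY]
    calc ‖∑ j ∈ Finset.Icc 1 k, X j ω‖ ≤ ∑ j ∈ Finset.Icc 1 k, ‖X j ω‖ :=
          norm_sum_le _ _
      _ ≤ ∑ _j ∈ Finset.Icc 1 k, b := Finset.sum_le_sum hω
      _ = (Finset.Icc 1 k).card * b := by rw [Finset.sum_const, nsmul_eq_mul]
  set C1 : ℝ := (Finset.Icc 1 (i - 1)).card * b with hC1def
  have hC1 : 0 ≤ C1 := by positivity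
  have hYbi1 : ∀ᵐ ω ∂P, ‖Y (i - 1) ω‖ ≤ C1 := hYb (i - 1) (le_trans (Nat.sub_le i 1) hin)
  set C2 : ℝ := (Finset.Icc 1 i).card * b with hC2def
  have hYbi : ∀ᵐ ω ∂P, ‖Y i ω‖ ≤ C2 := hYb i hin
  have hσ0 : ∀ᵐ ω ∂P, 0 ≤ σ ω :=
    condExp_nonneg (Eventually.of_forall fun ω => sq_nonneg _)
  have hW0 : ∀ᵐ ω ∂P, 0 ≤ W i ω := by
    have h1 : ∀ᵐ ω ∂P, ∀ j ∈ Finset.Icc 1 i,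
        0 ≤ (P[(fun ω' => ‖X j ω'‖ ^ 2) | ℱ (j - 1)]) ω := by
      rw [eventually_all_finset]
      intro j hj
      exact condExp_nonneg (Eventually.of_forall fun ω => sq_nonneg _)
    filter_upwards [h1] with ω hω
    rw [hW]
    exact Finset.sum_nonneg hω
  -- integrability
  have hX2_int : Integrable (fun ω => ‖X i ω‖ ^ 2) P := by
    refine Integrable.mono' (integrable_const (b ^ 2)) hX2_sm0.aestronglyMeasurable ?_
    filter_upwards [hXb] with ω hω
    rw [Real.norm_eq_abs, abs_of_nonneg (sq_nonneg _)]
    exact pow_le_pow_left₀ (norm_nonneg _) hω 2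
  have hg_int : Integrable g P := by
    refine Integrable.mono' (integrable_const (Real.cosh (lam * C2)))
      hg_sm0.aestronglyMeasurable ?_
    filter_upwards [hYbi] with ω hω
    rw [hgdef, Real.norm_eq_abs, abs_of_pos (Real.cosh_pos _), Real.cosh_le_cosh]
    rw [abs_of_nonneg (by positivity), abs_of_nonneg (by positivity)]
    exact mul_le_mul_of_nonneg_left hω hlam0.le
  have hphi_bound : ∀ᵐ ω ∂P, ‖phi ω‖ ≤ Real.cosh (lam * C1) := by
    filter_upwards [hYbi1] with ω hω
    rw [hphidef, Real.norm_eq_abs, abs_of_pos (Real.cosh_pos _), Real.cosh_le_cosh]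
    rw [abs_of_nonneg (by positivity), abs_of_nonneg (by positivity)]
    exact mul_le_mul_of_nonneg_left hω hlam0.le
  have hu_int : Integrable u P := by
    rw [hudef]
    exact (integrable_const 1).add (hX2_int.const_mul K)
  have hu_sm0 : StronglyMeasurable[m0] u := by
    rw [hudef]
    exact stronglyMeasurable_const.add (hX2_sm0.const_mul K)
  have hphiu_int : Integrable (fun ω => phi ω * u ω) P := by
    refine Integrable.mono' (integrable_const (Real.cosh (lam * C1) * (1 + K * b ^ 2)))
      (((hphi_sm.mono hm).mul hu_sm0).aestronglyMeasurable) ?_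
    filter_upwards [hphi_bound, hXb] with ω h1 h2
    rw [Real.norm_eq_abs, abs_mul]
    have hu0 : 0 ≤ u ω := by
      have h9 : u ω = 1 + K * ‖X i ω‖ ^ 2 := rfl
      rw [h9]
      positivity
    have hub : u ω ≤ 1 + K * b ^ 2 := by
      have h8 : ‖X i ω‖ ^ 2 ≤ b ^ 2 := pow_le_pow_left₀ (norm_nonneg _) h2 2
      have h9 : u ω = 1 + K * ‖X i ω‖ ^ 2 := rfl
      nlinarith
    rw [abs_of_nonneg hu0]
    have h3 : |phi ω| ≤ Real.cosh (lam * C1) := by rwa [Real.norm_eq_abs] at h1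
    have h4 : (0:ℝ) ≤ |phi ω| := abs_nonneg _
    nlinarith [Real.cosh_pos (lam * C1)]
  -- v : strongly measurable and bounded
  have hv_sm : StronglyMeasurable[ℱ (i - 1)] v := by
    have hnorm : Measurable[ℱ (i - 1)] fun ω => ‖Y (i - 1) ω‖ := hYim_sm.norm.measurable
    have hsc : Measurable[ℱ (i - 1)] fun ω =>
        lam * Real.sinh (lam * ‖Y (i - 1) ω‖) / ‖Y (i - 1) ω‖ :=
      ((Real.continuous_sinh.measurable.comp (hnorm.const_mul lam)).const_mul lam).div hnorm
    have hite : Measurable[ℱ (i - 1)] fun ω =>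
        (if ‖Y (i - 1) ω‖ = 0 then 0 else
          lam * Real.sinh (lam * ‖Y (i - 1) ω‖) / ‖Y (i - 1) ω‖) :=
      Measurable.ite (hnorm (measurableSet_singleton 0)) measurable_const hsc
    exact hite.stronglyMeasurable.smul hYim_sm
  have hv_bound : ∀ᵐ ω ∂P, ‖v ω‖ ≤ lam * Real.sinh (lam * C1) := by
    filter_upwards [hYbi1] with ω hω
    have h9 : v ω = (if ‖Y (i - 1) ω‖ = 0 then 0 else
        lam * Real.sinh (lam * ‖Y (i - 1) ω‖) / ‖Y (i - 1) ω‖) • Y (i - 1) ω := rfl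
    rw [h9]
    by_cases h0 : ‖Y (i - 1) ω‖ = 0
    · rw [if_pos h0, zero_smul, norm_zero]
      have : 0 ≤ Real.sinh (lam * C1) := Real.sinh_nonneg_iff.2 (by positivity)
      positivity
    · rw [if_neg h0, norm_smul, Real.norm_eq_abs]
      have hY0 : 0 < ‖Y (i - 1) ω‖ := (norm_nonneg _).lt_of_ne' h0
      have hsinh0 : 0 ≤ Real.sinh (lam * ‖Y (i - 1) ω‖) :=
        Real.sinh_nonneg_iff.2 (by positivity)
      rw [abs_of_nonneg (by positivity)]
      rw [div_mul_cancel₀ _ (ne_of_gt hY0)]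
      have : Real.sinh (lam * ‖Y (i - 1) ω‖) ≤ Real.sinh (lam * C1) :=
        Real.sinh_le_sinh.2 (mul_le_mul_of_nonneg_left hω hlam0.le)
      exact mul_le_mul_of_nonneg_left this hlam0.le
  have hvX_int : Integrable (fun ω => ⟪v ω, X i ω⟫) P := by
    refine Integrable.mono' (hXi_int.norm.const_mul (lam * Real.sinh (lam * C1)))
      (((hv_sm.mono hm).aestronglyMeasurable).inner hXi_int.1) ?_
    filter_upwards [hv_bound] with ω hω
    exact (norm_inner_le_norm _ _).trans (mul_le_mul_of_nonneg_right hω (norm_nonneg _))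
  -- bounds on f
  have hf_bound : ∀ᵐ ω ∂P, ‖f ω‖ ≤ 1 := by
    filter_upwards [hW0] with ω hω
    rw [hfdef, Real.norm_eq_abs, abs_of_pos (Real.exp_pos _), Real.exp_le_one_iff]
    nlinarith
  -- pointwise key inequality
  have hgle : g ≤ᵐ[P] fun ω => phi ω * u ω + ⟪v ω, X i ω⟫ := by
    filter_upwards [hXb] with ω hω
    have h := key_vector hlam0 hb hlb (Y (i - 1) ω) (X i ω) hω
    rw [← hK] at h
    simp only [hgdef, hphidef, hudef, hvdef]
    rw [hYsplit ω]
    exact h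
  have hg2_int : Integrable (fun ω => phi ω * u ω + ⟪v ω, X i ω⟫) P := hphiu_int.add hvX_int
  -- B i = f * g
  have hBfg : B i = f * g := by
    funext ω
    rw [hB i hi1 hin ω, harg (W i ω)]
    rfl
  -- condexp computations
  have h1 : P[B i|ℱ (i - 1)] =ᵐ[P] f * P[g|ℱ (i - 1)] := by
    rw [hBfg]
    exact condExp_stronglyMeasurable_mul_of_bound hm hf_sm hg_int 1 hf_bound
  have h2 : P[g|ℱ (i - 1)] ≤ᵐ[P] P[fun ω => phi ω * u ω + ⟪v ω, X i ω⟫|ℱ (i - 1)] :=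
    condExp_mono hg_int hg2_int hgle
  have h3 : P[fun ω => phi ω * u ω + ⟪v ω, X i ω⟫|ℱ (i - 1)]
      =ᵐ[P] P[fun ω => phi ω * u ω|ℱ (i - 1)] + P[fun ω => ⟪v ω, X i ω⟫|ℱ (i - 1)] :=
    condExp_add hphiu_int hvX_int _
  have h4 : P[fun ω => phi ω * u ω|ℱ (i - 1)] =ᵐ[P] phi * P[u|ℱ (i - 1)] :=
    condExp_stronglyMeasurable_mul_of_bound hm hphi_sm hu_int (Real.cosh (lam * C1)) hphi_bound
  have h5 : P[u|ℱ (i - 1)] =ᵐ[P] fun ω => 1 + K * σ ω := by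
    have he : u = (fun _ => (1:ℝ)) + K • (fun ω => ‖X i ω‖ ^ 2) := by
      funext ω
      simp [hudef, smul_eq_mul]
    rw [he]
    have ha := condExp_add (m := ℱ (i - 1)) (integrable_const (1:ℝ))
      ((hX2_int.smul K) : Integrable (K • fun ω => ‖X i ω‖ ^ 2) P)
    have hb' := condExp_smul (m := ℱ (i - 1)) (μ := P) K (fun ω => ‖X i ω‖ ^ 2)
    filter_upwards [ha, hb'] with ω hω1 hω2
    rw [hω1]
    simp only [Pi.add_apply, Pi.smul_apply, smul_eq_mul]
    rw [hω2, condExp_const hm]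
    simp [hσdef, smul_eq_mul]
  have h6 : P[fun ω => ⟪v ω, X i ω⟫|ℱ (i - 1)] =ᵐ[P] 0 :=
    condexp_inner_eq_zero hm hv_sm hv_bound hXi_int (hmds i hi1 hin) hvX_int
  -- B (i-1) formula
  have hBpred : ∀ ω, B (i - 1) ω
      = Real.exp (-(K * W (i - 1) ω)) * Real.cosh (lam * ‖Y (i - 1) ω‖) := by
    intro ω
    rcases Nat.eq_zero_or_pos (i - 1) with h0 | h1
    · rw [h0, hB0]
      have hw0 : W 0 ω = 0 := by rw [hW]; simp
      have hy0 : Y 0 ω = 0 := by rw [hY]; simp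
      rw [hw0, hy0]
      simp
    · rw [hB (i - 1) h1 (le_trans (Nat.sub_le i 1) hin) ω, harg (W (i - 1) ω)]
  -- final assembly
  filter_upwards [h1, h2, h3, h4, h5, h6, hσ0] with ω e1 e2 e3 e4 e5 e6 eσ
  have hfω : 0 < f ω := Real.exp_pos _
  have hphiω : 0 < phi ω := Real.cosh_pos _
  calc (P[B i|ℱ (i - 1)]) ω = f ω * (P[g|ℱ (i - 1)]) ω := by
        rw [e1]; rfl
    _ ≤ f ω * (P[fun ω => phi ω * u ω + ⟪v ω, X i ω⟫|ℱ (i - 1)]) ω :=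
        mul_le_mul_of_nonneg_left e2 hfω.le
    _ = f ω * ((P[fun ω => phi ω * u ω|ℱ (i - 1)]) ω
          + (P[fun ω => ⟪v ω, X i ω⟫|ℱ (i - 1)]) ω) := by rw [e3]; rfl
    _ = f ω * (phi ω * (1 + K * σ ω)) := by
        rw [e4, e6]
        simp only [Pi.mul_apply, Pi.zero_apply, add_zero]
        rw [e5]
    _ ≤ B (i - 1) ω := by
        rw [hBpred ω]
        set w0 : ℝ := W (i - 1) ω
        set s0 : ℝ := σ ω
        have hfeq : f ω = Real.exp (-(K * w0)) * Real.exp (-(K * s0)) := by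
          rw [hfdef]
          simp only
          rw [hWsplit ω, ← Real.exp_add]
          ring_nf
          rfl
        have ht : 1 + K * s0 ≤ Real.exp (K * s0) := by
          have := Real.add_one_le_exp (K * s0)
          linarith
        have hb2 : Real.exp (-(K * s0)) * (1 + K * s0) ≤ 1 := by
          have h7 : Real.exp (-(K * s0)) * (1 + K * s0)
              ≤ Real.exp (-(K * s0)) * Real.exp (K * s0) :=
            mul_le_mul_of_nonneg_left ht (Real.exp_pos _).le
          rw [← Real.exp_add] at h7
          simpa using h7
        have hphieq : Real.cosh (lam * ‖Y (i - 1) ω‖) = phi ω := rfl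
        rw [hphieq]
        calc f ω * (phi ω * (1 + K * s0))
            = Real.exp (-(K * w0)) * phi ω * (Real.exp (-(K * s0)) * (1 + K * s0)) := by
              rw [hfeq]; ring
          _ ≤ Real.exp (-(K * w0)) * phi ω * 1 := by
              apply mul_le_mul_of_nonneg_left hb2
              positivity
          _ = Real.exp (-(K * w0)) * phi ω := by ring
end

section
/- The operator A on the product space E^S equipped with the supremum norm ‖ξ‖ = max_{s∈S} ‖ξ(s)‖, defined by (Aξ)(s) = (1 − αλ(s))·ξ(s) + αλ(s)·Σ_{s'∈S} T(s,s')ξ(s'), is a bounded linear operator with operator norm ‖A‖ ≤ 1 − α·μ·(1 − √γ). -/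
open Finset

/-- The operator `A` on the product space `E^S` with the supremum norm, defined by
`(Aξ)(s) = (1 − αλ(s)) ξ(s) + αλ(s) Σ_{s'} T(s,s') ξ(s')`, is a bounded linear operator
with operator norm `‖A‖ ≤ 1 − αμ(1 − √γ)`. -/
theorem effective_operator_norm_bound
    {E : Type*} [NormedAddCommGroup E] [NormedSpace ℝ E]
    {S : Type*} [Fintype S] [Nonempty S]
    (γ : ℝ) (hγ : γ ∈ Set.Ico (0 : ℝ) 1)
    (P : S → S → ℝ) (hP : ∀ s s', 0 ≤ P s s') (hProw : ∀ s, ∑ s', P s s' = 1)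
    (T : S → S → E →L[ℝ] E) (hT : ∀ s s', ‖T s s'‖ ≤ Real.sqrt γ * P s s')
    (μ : ℝ) (hμ : μ ∈ Set.Ioc (0 : ℝ) 1)
    (l : S → ℝ) (hl : ∀ s, μ ≤ l s ∧ l s ≤ 1)
    (α : ℝ) (hα : α ∈ Set.Icc (0 : ℝ) 1) :
    ∃ A : (S → E) →L[ℝ] (S → E),
      (∀ (ξ : S → E) (s : S),
        A ξ s = (1 - α * l s) • ξ s + (α * l s) • ∑ s', T s s' (ξ s')) ∧
      ‖A‖ ≤ 1 - α * μ * (1 - Real.sqrt γ) := by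
  obtain ⟨hγ0, hγ1⟩ := hγ
  obtain ⟨hμ0, hμ1⟩ := hμ
  obtain ⟨hα0, hα1⟩ := hα
  have hsγ0 : 0 ≤ Real.sqrt γ := Real.sqrt_nonneg γ
  have hsγ1 : Real.sqrt γ < 1 := by
    rw [show (1:ℝ) = Real.sqrt 1 by simp]
    exact Real.sqrt_lt_sqrt hγ0 hγ1
  set C : ℝ := 1 - α * μ * (1 - Real.sqrt γ) with hC
  have hC0 : 0 ≤ C := by
    have h1 : α * μ ≤ 1 := by nlinarith
    have h2 : 1 - Real.sqrt γ ≤ 1 := by linarith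
    have : α * μ * (1 - Real.sqrt γ) ≤ 1 := by nlinarith
    linarith
  set L : (S → E) →ₗ[ℝ] (S → E) :=
    { toFun := fun ξ s => (1 - α * l s) • ξ s + (α * l s) • ∑ s', T s s' (ξ s')
      map_add' := by
        intro ξ η
        funext s
        simp [Finset.sum_add_distrib, smul_add]
        abel
      map_smul' := by
        intro c ξ
        funext s
        simp [Finset.smul_sum, smul_comm c]
    } with hL
  have hbound : ∀ ξ : S → E, ‖L ξ‖ ≤ C * ‖ξ‖ := by
    intro ξ
    apply pi_norm_le_iff_of_nonneg (by positivity) |>.2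
    intro s
    have hls := hl s
    have hαl0 : 0 ≤ α * l s := by nlinarith
    have hαl1 : α * l s ≤ 1 := by nlinarith
    have hξs : ‖ξ s‖ ≤ ‖ξ‖ := norm_le_pi_norm ξ s
    have hsum : ‖∑ s', T s s' (ξ s')‖ ≤ Real.sqrt γ * ‖ξ‖ := by
      calc ‖∑ s', T s s' (ξ s')‖ ≤ ∑ s', ‖T s s' (ξ s')‖ := norm_sum_le _ _
        _ ≤ ∑ s', Real.sqrt γ * P s s' * ‖ξ‖ := by
            apply Finset.sum_le_sum
            intro s' _
            calc ‖T s s' (ξ s')‖ ≤ ‖T s s'‖ * ‖ξ s'‖ := (T s s').le_opNorm _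
              _ ≤ (Real.sqrt γ * P s s') * ‖ξ‖ := by
                  exact mul_le_mul (hT s s') (norm_le_pi_norm ξ s') (norm_nonneg _)
                    (mul_nonneg hsγ0 (hP s s'))
        _ = Real.sqrt γ * ‖ξ‖ := by
            rw [← Finset.sum_mul, ← Finset.mul_sum, hProw s, mul_one]
    have hLs : L ξ s = (1 - α * l s) • ξ s + (α * l s) • ∑ s', T s s' (ξ s') := rfl
    rw [hLs]
    calc ‖(1 - α * l s) • ξ s + (α * l s) • ∑ s', T s s' (ξ s')‖
        ≤ ‖(1 - α * l s) • ξ s‖ + ‖(α * l s) • ∑ s', T s s' (ξ s')‖ := norm_add_le _ _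
      _ = (1 - α * l s) * ‖ξ s‖ + (α * l s) * ‖∑ s', T s s' (ξ s')‖ := by
          rw [norm_smul, norm_smul, Real.norm_of_nonneg (by linarith),
            Real.norm_of_nonneg hαl0]
      _ ≤ (1 - α * l s) * ‖ξ‖ + (α * l s) * (Real.sqrt γ * ‖ξ‖) := by
          gcongr
      _ = (1 - α * l s * (1 - Real.sqrt γ)) * ‖ξ‖ := by ring
      _ ≤ C * ‖ξ‖ := by
          apply mul_le_mul_of_nonneg_right _ (norm_nonneg _)
          rw [hC]
          have : α * μ ≤ α * l s := by nlinarith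
          nlinarith
  refine ⟨L.mkContinuous C hbound, fun ξ s => rfl, ?_⟩
  exact L.mkContinuous_norm_le hC0 hbound
end

section
/- For every ν ∈ H and every s, s' ∈ S: ‖(1 − αλ(s))·[s = s']·ν + αλ(s)·T(s,s')ν‖² ≤ [(1 − αμ) + αμ√γ] · [(1 − αλ(s))·[s = s'] + αλ(s)·√γ·P(s,s')] · ‖ν‖², where [s = s'] denotes 1 if s = s' and 0 otherwise. -/
open Finset

/-- Entrywise bound: for every `ν ∈ H` and `s, s' ∈ S`,
`‖(1 − αλ(s))[s=s']ν + αλ(s) T(s,s')ν‖² ≤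
 ((1 − αμ) + αμ√γ) ((1 − αλ(s))[s=s'] + αλ(s)√γ P(s,s')) ‖ν‖²`. -/
theorem entrywise_operator_bound
    {H : Type*} [NormedAddCommGroup H] [InnerProductSpace ℝ H]
    {S : Type*} [Fintype S] [Nonempty S] [DecidableEq S]
    (γ : ℝ) (hγ : γ ∈ Set.Ico (0 : ℝ) 1)
    (P : S → S → ℝ) (hP : ∀ s s', 0 ≤ P s s') (hProw : ∀ s, ∑ s', P s s' = 1)
    (T : S → S → H →L[ℝ] H)
    (hT : ∀ s s' (ν : H), ‖T s s' ν‖ ≤ Real.sqrt γ * P s s' * ‖ν‖)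
    (μ : ℝ) (hμ : μ ∈ Set.Ioc (0 : ℝ) 1)
    (l : S → ℝ) (hl : ∀ s, μ ≤ l s ∧ l s ≤ 1)
    (α : ℝ) (hα : α ∈ Set.Icc (0 : ℝ) 1) :
    ∀ (ν : H) (s s' : S),
      ‖((1 - α * l s) * (if s = s' then (1 : ℝ) else 0)) • ν + (α * l s) • T s s' ν‖ ^ 2
        ≤ ((1 - α * μ) + α * μ * Real.sqrt γ)
            * ((1 - α * l s) * (if s = s' then (1 : ℝ) else 0)
                + α * l s * Real.sqrt γ * P s s')
            * ‖ν‖ ^ 2 := by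
  intro ν s s'
  obtain ⟨hγ0, hγ1⟩ := hγ
  obtain ⟨hμ0, hμ1⟩ := hμ
  obtain ⟨hα0, hα1⟩ := hα
  obtain ⟨hl1, hl2⟩ := hl s
  have hsg0 : 0 ≤ Real.sqrt γ := Real.sqrt_nonneg γ
  have hsg1 : Real.sqrt γ ≤ 1 := by
    rw [show (1:ℝ) = Real.sqrt 1 by simp]
    exact Real.sqrt_le_sqrt hγ1.le
  have hP1 : P s s' ≤ 1 := by
    calc P s s' ≤ ∑ t, P s t := Finset.single_le_sum (fun t _ => hP s t) (Finset.mem_univ s')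
    _ = 1 := hProw s
  have hb0 : 0 ≤ α * l s := mul_nonneg hα0 (le_trans hμ0.le hl1)
  have hb1 : α * l s ≤ 1 := by nlinarith
  set c : ℝ := (1 - α * l s) * (if s = s' then (1:ℝ) else 0) with hc
  have hc0 : 0 ≤ c := by
    rw [hc]; split <;> nlinarith
  set d : ℝ := α * l s * Real.sqrt γ * P s s' with hd
  have hl0 : 0 ≤ l s := le_trans hμ0.le hl1
  have hd0 : 0 ≤ d := mul_nonneg (mul_nonneg hb0 hsg0) (hP s s')
  have hnorm : ‖c • ν + (α * l s) • T s s' ν‖ ≤ (c + d) * ‖ν‖ := by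
    calc ‖c • ν + (α * l s) • T s s' ν‖
        ≤ ‖c • ν‖ + ‖(α * l s) • T s s' ν‖ := norm_add_le _ _
      _ = c * ‖ν‖ + (α * l s) * ‖T s s' ν‖ := by
          rw [norm_smul, norm_smul, Real.norm_eq_abs, Real.norm_eq_abs,
            abs_of_nonneg hc0, abs_of_nonneg hb0]
      _ ≤ c * ‖ν‖ + (α * l s) * (Real.sqrt γ * P s s' * ‖ν‖) := by
          gcongr; exact hT s s' ν
      _ = (c + d) * ‖ν‖ := by rw [hd]; ring
  have hkey : c + d ≤ (1 - α * μ) + α * μ * Real.sqrt γ := by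
    rw [hc, hd]
    have hA : 0 ≤ α * l s * Real.sqrt γ * (1 - P s s') :=
      mul_nonneg (mul_nonneg hb0 hsg0) (by linarith)
    have hB : 0 ≤ α * (l s - μ) * (1 - Real.sqrt γ) :=
      mul_nonneg (mul_nonneg hα0 (by linarith)) (by linarith)
    have hlP : l s * P s s' ≤ 1 := by nlinarith
    have hC : 0 ≤ α * Real.sqrt γ * (1 - l s * P s s') :=
      mul_nonneg (mul_nonneg hα0 hsg0) (by linarith)
    have hD : 0 ≤ α * (1 - μ) * (1 - Real.sqrt γ) :=
      mul_nonneg (mul_nonneg hα0 (by linarith)) (by linarith)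
    split
    · nlinarith [hA, hB]
    · nlinarith [hC, hD]
  have hsq : ‖c • ν + (α * l s) • T s s' ν‖ ^ 2 ≤ ((c + d) * ‖ν‖) ^ 2 := by
    have := norm_nonneg (c • ν + (α * l s) • T s s' ν)
    nlinarith
  calc ‖c • ν + (α * l s) • T s s' ν‖ ^ 2 ≤ ((c + d) * ‖ν‖) ^ 2 := hsq
    _ = (c + d) * (c + d) * ‖ν‖ ^ 2 := by ring
    _ ≤ ((1 - α * μ) + α * μ * Real.sqrt γ) * (c + d) * ‖ν‖ ^ 2 := by
        exact mul_le_mul_of_nonneg_right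
          (mul_le_mul_of_nonneg_right hkey (add_nonneg hc0 hd0)) (sq_nonneg _)
end

section
/- For every n ∈ ℕ, every ν ∈ H, and every s, s' ∈ S: ‖𝒰_n(s,s')ν‖² ≤ u_n · U_n(s,s') · ‖ν‖², where 𝒰_n is the n-fold product (in the ring of S × S matrices with entries in the continuous linear operators on H) 𝒰_n = ∏_{i=1}^n (I − α_i·Λ(I − 𝒯)), with (Λ(I − 𝒯))(s,s') = λ(s)·([s = s']·id_H − T(s,s')); U_n is the real S × S matrix U_n = ∏_{i=1}^n (I − α_i·Λ(I − √γ·P)), with Λ = diag(λ(s)); and u_n = ∏_{i=1}^n (1 − α_i·μ·(1 − √γ)). -/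
open Finset

/-- For the `n`-fold products
`𝒰_n = ∏_{i=1}^n (I − α_i Λ(I − 𝒯))` (matrices of continuous linear operators on `H`),
`U_n = ∏_{i=1}^n (I − α_i Λ(I − √γ P))` (real matrices), and
`u_n = ∏_{i=1}^n (1 − α_i μ (1 − √γ))`, one has
`‖𝒰_n(s,s') ν‖² ≤ u_n · U_n(s,s') · ‖ν‖²` for every `n`, `ν ∈ H`, `s, s' ∈ S`. -/
theorem product_operator_entrywise_bound
    {H : Type*} [NormedAddCommGroup H] [InnerProductSpace ℝ H]
    {S : Type*} [Fintype S] [Nonempty S] [DecidableEq S]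
    (γ : ℝ) (hγ : γ ∈ Set.Ico (0 : ℝ) 1)
    (P : S → S → ℝ) (hP : ∀ s s', 0 ≤ P s s') (hProw : ∀ s, ∑ s', P s s' = 1)
    (T : S → S → H →L[ℝ] H)
    (hT : ∀ s s' (ν : H), ‖T s s' ν‖ ≤ Real.sqrt γ * P s s' * ‖ν‖)
    (μ : ℝ) (hμ : μ ∈ Set.Ioc (0 : ℝ) 1)
    (l : S → ℝ) (hl : ∀ s, μ ≤ l s ∧ l s ≤ 1)
    (α : ℕ → ℝ) (hα : ∀ i, α i ∈ Set.Icc (0 : ℝ) 1)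
    (𝒰 : ℕ → Matrix S S (H →L[ℝ] H))
    (h𝒰0 : 𝒰 0 = 1)
    (h𝒰succ : ∀ i : ℕ,
      𝒰 (i + 1) =
        (1 - α (i + 1) •
          Matrix.of (fun s s' : S =>
            l s • ((if s = s' then (1 : H →L[ℝ] H) else 0) - T s s'))) * 𝒰 i)
    (U : ℕ → Matrix S S ℝ)
    (hU0 : U 0 = 1)
    (hUsucc : ∀ i : ℕ,
      U (i + 1) =
        (1 - α (i + 1) •
          Matrix.of (fun s s' : S =>
            l s * ((if s = s' then (1 : ℝ) else 0) - Real.sqrt γ * P s s'))) * U i)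
    (u : ℕ → ℝ)
    (hu : ∀ n : ℕ, u n = ∏ i ∈ Finset.Icc 1 n, (1 - α i * μ * (1 - Real.sqrt γ))) :
    ∀ (n : ℕ) (ν : H) (s s' : S),
      ‖(𝒰 n s s') ν‖ ^ 2 ≤ u n * U n s s' * ‖ν‖ ^ 2 := by
  obtain ⟨hγ0, hγ1⟩ := hγ
  obtain ⟨hμ0, hμ1⟩ := hμ
  set g := Real.sqrt γ with hgdef
  have hg0 : 0 ≤ g := Real.sqrt_nonneg γ
  have hg1 : g < 1 := by
    rw [hgdef, show (1:ℝ) = Real.sqrt 1 by simp]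
    exact Real.sqrt_lt_sqrt hγ0 hγ1
  -- step factors of u are nonnegative
  have hfac : ∀ i : ℕ, 0 ≤ 1 - α i * μ * (1 - g) := by
    intro i
    have hαμ : α i * μ ≤ 1 := by
      nlinarith [(hα i).1, (hα i).2, hμ0.le, hμ1]
    have hαμ0 : 0 ≤ α i * μ := mul_nonneg (hα i).1 hμ0.le
    nlinarith
  have hu0 : ∀ n, 0 ≤ u n := by
    intro n; rw [hu n]; exact Finset.prod_nonneg fun i _ => hfac i
  -- entries of the real step matrix
  have hGnn : ∀ (i : ℕ) (s t : S),
      0 ≤ (if s = t then (1:ℝ) else 0) - α (i+1) * (l s * ((if s = t then (1:ℝ) else 0) - g * P s t)) := by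
    intro i s t
    have hαi := hα (i+1)
    have hls := hl s
    have hal0 : 0 ≤ α (i+1) * l s := mul_nonneg hαi.1 (le_trans hμ0.le hls.1)
    have hal1 : α (i+1) * l s ≤ 1 := by
      calc α (i+1) * l s ≤ 1 * 1 := mul_le_mul hαi.2 hls.2 (le_trans hμ0.le hls.1) zero_le_one
      _ = 1 := by ring
    have hgP : 0 ≤ g * P s t := mul_nonneg hg0 (hP s t)
    by_cases h : s = t
    · subst h
      rw [if_pos rfl]
      nlinarith [hP s s, mul_nonneg hg0 (hP s s)]
    · rw [if_neg h]
      nlinarith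
  -- key induction
  have key : ∀ n, (∀ s s', 0 ≤ U n s s') ∧ (∀ s, ∑ s', U n s s' ≤ u n) ∧
      (∀ s s' (ν : H), ‖(𝒰 n s s') ν‖ ≤ U n s s' * ‖ν‖) := by
    intro n
    induction n with
    | zero =>
      refine ⟨?_, ?_, ?_⟩
      · intro s s'
        rw [hU0]
        by_cases h : s = s' <;> simp [Matrix.one_apply, h]
      · intro s
        rw [hU0, hu]
        simp [Matrix.one_apply]
      · intro s s' ν
        rw [h𝒰0, hU0]
        by_cases h : s = s' <;> simp [Matrix.one_apply, h]
    | succ i ih =>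
      obtain ⟨ihnn, ihsum, ihop⟩ := ih
      set a := α (i+1) with hadef
      set G : S → S → ℝ := fun s t =>
        (if s = t then (1:ℝ) else 0) - a * (l s * ((if s = t then (1:ℝ) else 0) - g * P s t)) with hGdef
      have hUent : ∀ s s', U (i+1) s s' = ∑ t, G s t * U i t s' := by
        intro s s'
        rw [hUsucc i]
        simp [Matrix.mul_apply, Matrix.sub_apply, Matrix.one_apply, hGdef, hadef]
      have hUent𝒰 : ∀ s s', 𝒰 (i+1) s s' =
          ∑ t, ((if s = t then (1 : H →L[ℝ] H) else 0) -
            a • (l s • ((if s = t then (1 : H →L[ℝ] H) else 0) - T s t))) * 𝒰 i t s' := by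
        intro s s'
        rw [h𝒰succ i]
        simp [Matrix.mul_apply, Matrix.sub_apply, Matrix.one_apply, hadef]
      -- operator entry bound for the step factor
      have hFbound : ∀ (s t : S) (w : H),
          ‖((if s = t then (1 : H →L[ℝ] H) else 0) -
            a • (l s • ((if s = t then (1 : H →L[ℝ] H) else 0) - T s t))) w‖ ≤ G s t * ‖w‖ := by
        intro s t w
        have hαi := hα (i+1)
        have hls := hl s
        have hal0 : 0 ≤ a * l s := mul_nonneg hαi.1 (le_trans hμ0.le hls.1)
        have hal1 : a * l s ≤ 1 := by
          calc a * l s ≤ 1 * 1 := mul_le_mul hαi.2 hls.2 (le_trans hμ0.le hls.1) zero_le_one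
          _ = 1 := by ring
        by_cases h : s = t
        · subst h
          simp only [eq_self_iff_true, if_true, hGdef]
          have hexp : ((1 : H →L[ℝ] H) - a • (l s • ((1 : H →L[ℝ] H) - T s s))) w
              = (1 - a * l s) • w + (a * l s) • (T s s w) := by
            simp [ContinuousLinearMap.sub_apply, ContinuousLinearMap.smul_apply, smul_smul,
              sub_smul, smul_sub]
            module
          rw [hexp]
          calc ‖(1 - a * l s) • w + (a * l s) • (T s s w)‖
              ≤ ‖(1 - a * l s) • w‖ + ‖(a * l s) • (T s s w)‖ := norm_add_le _ _
            _ = (1 - a * l s) * ‖w‖ + (a * l s) * ‖T s s w‖ := by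
                rw [norm_smul, norm_smul, Real.norm_eq_abs, Real.norm_eq_abs,
                  abs_of_nonneg (by linarith), abs_of_nonneg hal0]
            _ ≤ (1 - a * l s) * ‖w‖ + (a * l s) * (g * P s s * ‖w‖) := by
                have := hT s s w
                nlinarith
            _ = (1 - a * (l s * (1 - g * P s s))) * ‖w‖ := by ring
        · simp only [if_neg h, hGdef]
          have hexp : ((0 : H →L[ℝ] H) - a • (l s • ((0 : H →L[ℝ] H) - T s t))) w
              = (a * l s) • (T s t w) := by
            simp [ContinuousLinearMap.sub_apply, ContinuousLinearMap.smul_apply, smul_smul]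
          rw [hexp, norm_smul, Real.norm_eq_abs, abs_of_nonneg hal0]
          have := hT s t w
          nlinarith
      refine ⟨?_, ?_, ?_⟩
      · intro s s'
        rw [hUent s s']
        exact Finset.sum_nonneg fun t _ => mul_nonneg (hGnn i s t) (ihnn t s')
      · intro s
        have hid : ∑ t, (if s = t then (1:ℝ) else 0) = 1 := by simp
        have hrowG : ∑ t, G s t = 1 - a * l s * (1 - g) := by
          simp only [hGdef]
          rw [Finset.sum_sub_distrib, hid]
          have h2 : ∑ t, a * (l s * ((if s = t then (1:ℝ) else 0) - g * P s t))
              = a * (l s * (1 - g)) := by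
            rw [← Finset.mul_sum]
            congr 1
            rw [← Finset.mul_sum]
            congr 1
            rw [Finset.sum_sub_distrib, hid, ← Finset.mul_sum, hProw s, mul_one]
          rw [h2]; ring
        have hls := hl s
        have hstep : 1 - a * l s * (1 - g) ≤ 1 - a * μ * (1 - g) := by
          have h1 : a * (1 - g) * μ ≤ a * (1 - g) * l s :=
            mul_le_mul_of_nonneg_left hls.1
              (mul_nonneg (hα (i+1)).1 (by linarith))
          nlinarith
        calc ∑ s', U (i+1) s s'
            = ∑ s', ∑ t, G s t * U i t s' := by
              exact Finset.sum_congr rfl fun s' _ => hUent s s'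
          _ = ∑ t, G s t * ∑ s', U i t s' := by
              rw [Finset.sum_comm]
              exact Finset.sum_congr rfl fun t _ => (Finset.mul_sum _ _ _).symm
          _ ≤ ∑ t, G s t * u i := by
              refine Finset.sum_le_sum fun t _ =>
                mul_le_mul_of_nonneg_left (ihsum t) (hGnn i s t)
          _ = (1 - a * l s * (1 - g)) * u i := by rw [← Finset.sum_mul, hrowG]
          _ ≤ (1 - a * μ * (1 - g)) * u i := mul_le_mul_of_nonneg_right hstep (hu0 i)
          _ = u (i+1) := by
              rw [hu (i+1), hu i, Finset.prod_Icc_succ_top (by omega : 1 ≤ i + 1)]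
              ring
      · intro s s' ν
        rw [hUent𝒰 s s', hUent s s']
        calc ‖(∑ t, ((if s = t then (1 : H →L[ℝ] H) else 0) -
              a • (l s • ((if s = t then (1 : H →L[ℝ] H) else 0) - T s t))) * 𝒰 i t s') ν‖
            = ‖∑ t, ((if s = t then (1 : H →L[ℝ] H) else 0) -
              a • (l s • ((if s = t then (1 : H →L[ℝ] H) else 0) - T s t))) ((𝒰 i t s') ν)‖ := by
              rw [ContinuousLinearMap.sum_apply]
              simp [ContinuousLinearMap.mul_apply]
          _ ≤ ∑ t, ‖((if s = t then (1 : H →L[ℝ] H) else 0) -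
              a • (l s • ((if s = t then (1 : H →L[ℝ] H) else 0) - T s t))) ((𝒰 i t s') ν)‖ :=
              norm_sum_le _ _
          _ ≤ ∑ t, G s t * ‖(𝒰 i t s') ν‖ :=
              Finset.sum_le_sum fun t _ => hFbound s t _
          _ ≤ ∑ t, G s t * (U i t s' * ‖ν‖) :=
              Finset.sum_le_sum fun t _ =>
                mul_le_mul_of_nonneg_left (ihop t s' ν) (hGnn i s t)
          _ = (∑ t, G s t * U i t s') * ‖ν‖ := by
              rw [Finset.sum_mul]; exact Finset.sum_congr rfl fun t _ => by ring
  -- conclude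
  intro n ν s s'
  obtain ⟨hnn, hsum, hop⟩ := key n
  have hUle : U n s s' ≤ u n :=
    le_trans (Finset.single_le_sum (fun t _ => hnn s t) (Finset.mem_univ s')) (hsum s)
  have h1 : ‖(𝒰 n s s') ν‖ ^ 2 ≤ (U n s s' * ‖ν‖) ^ 2 :=
    pow_le_pow_left₀ (norm_nonneg _) (hop s s' ν) 2
  have h2 : U n s s' * (U n s s' * ‖ν‖ ^ 2) ≤ u n * (U n s s' * ‖ν‖ ^ 2) :=
    mul_le_mul_of_nonneg_right hUle (mul_nonneg (hnn s s') (sq_nonneg _))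
  calc ‖(𝒰 n s s') ν‖ ^ 2 ≤ (U n s s' * ‖ν‖) ^ 2 := h1
    _ = U n s s' * (U n s s' * ‖ν‖ ^ 2) := by ring
    _ ≤ u n * (U n s s' * ‖ν‖ ^ 2) := h2
    _ = u n * U n s s' * ‖ν‖ ^ 2 := by ring
end

section
/- For any integers 0 ≤ m ≤ t, the following inequality holds entrywise (in every matrix entry): Σ_{k=m+1}^{t} α_k · ∏_{i=k+1}^{t} ( I − α_i·Λ·(I − √γ·P) ) ≤ (I − √γ·P)^{−1} · Λ^{−1}, where the matrix I − √γ·P is invertible with inverse (I − √γ·P)^{−1} = Σ_{j=0}^{∞} (√γ·P)^j having nonnegative entries, and Λ^{−1} = diag(1/λ(s)). -/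
attribute [local instance] Matrix.linftyOpNormedRing Matrix.linftyOpNormedAlgebra


open Finset

/-- Entrywise bound on sums of step-size-weighted matrix products:
`Σ_{k=m+1}^t α_k ∏_{i=k+1}^t (I − α_i Λ (I − √γ P)) ≤ (I − √γ P)⁻¹ Λ⁻¹` entrywise,
where `I − √γ P` is invertible and its inverse has nonnegative entries. -/
theorem sum_lr_matrix_upper_bound
    {S : Type*} [Fintype S] [Nonempty S] [DecidableEq S]
    (γ : ℝ) (hγ : γ ∈ Set.Ioo (0 : ℝ) 1)
    (P : Matrix S S ℝ) (hP : ∀ s s', 0 ≤ P s s') (hProw : ∀ s, ∑ s', P s s' = 1)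
    (l : S → ℝ) (hl : ∀ s, 0 < l s ∧ l s ≤ 1)
    (α : ℕ → ℝ) (hα : ∀ i, α i ∈ Set.Icc (0 : ℝ) 1)
    (G : ℕ → ℕ → Matrix S S ℝ)
    (hGdiag : ∀ k : ℕ, G k k = 1)
    (hGstep : ∀ k t : ℕ, k ≤ t →
      G k (t + 1) =
        (1 - α (t + 1) • (Matrix.diagonal l * (1 - Real.sqrt γ • P))) * G k t)
    (m t : ℕ) (hmt : m ≤ t) :
    IsUnit (1 - Real.sqrt γ • P) ∧
    (∀ s s', 0 ≤ (1 - Real.sqrt γ • P)⁻¹ s s') ∧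
    (∀ s s' : S,
      (∑ k ∈ Finset.Icc (m + 1) t, α k • G k t) s s'
        ≤ ((1 - Real.sqrt γ • P)⁻¹ * Matrix.diagonal (fun s => (l s)⁻¹)) s s') := by
  obtain ⟨hγ0, hγ1⟩ := hγ
  set c := Real.sqrt γ with hcdef
  have hc0 : 0 ≤ c := Real.sqrt_nonneg γ
  have hc1 : c < 1 := by
    rw [hcdef, show (1:ℝ) = Real.sqrt 1 by simp]
    exact Real.sqrt_lt_sqrt hγ0.le hγ1
  -- entries of c • P are nonnegative
  have hcP : ∀ s s', 0 ≤ (c • P) s s' := fun s s' => by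
    simpa [Matrix.smul_apply] using mul_nonneg hc0 (hP s s')
  have hPle : ∀ s s', P s s' ≤ 1 := fun s s' => by
    calc P s s' ≤ ∑ x, P s x :=
      Finset.single_le_sum (fun x _ => hP s x) (Finset.mem_univ s')
    _ = 1 := hProw s
  -- norm bound
  have hnorm : ‖c • P‖ < 1 := by
    have h1 : ‖P‖ = 1 := by
      rw [Matrix.linfty_opNorm_def]
      have hrow : ∀ i : S, (∑ j, ‖P i j‖₊ : NNReal) = 1 := by
        intro i
        have : ((∑ j, ‖P i j‖₊ : NNReal) : ℝ) = 1 := by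
          push_cast
          rw [← hProw i]
          exact Finset.sum_congr rfl fun j _ => Real.norm_of_nonneg (hP i j)
        exact_mod_cast this
      simp_rw [hrow]
      rw [Finset.sup_const Finset.univ_nonempty]
      simp
    rw [norm_smul, h1, mul_one, Real.norm_eq_abs, abs_of_nonneg hc0]
    exact hc1
  have hU : IsUnit (1 - c • P) := isUnit_one_sub_of_norm_lt_one hnorm
  have hmulinv : (1 - c • P) * (1 - c • P)⁻¹ = 1 :=
    Matrix.mul_nonsing_inv _ ((Matrix.isUnit_iff_isUnit_det _).mp hU)
  have hinv_eq : (1 - c • P)⁻¹ = Ring.inverse (1 - c • P) :=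
    Matrix.inv_eq_right_inv (Ring.mul_inverse_cancel _ hU)
  have hsum : HasSum (fun n : ℕ => (c • P) ^ n) ((1 - c • P)⁻¹) := by
    rw [hinv_eq]; exact hasSum_geom_series_inverse _ hnorm
  -- powers have nonnegative entries
  have hpow : ∀ (n : ℕ) (s s' : S), 0 ≤ ((c • P) ^ n) s s' := by
    intro n
    induction n with
    | zero => intro s s'; simp only [pow_zero, Matrix.one_apply]; positivity
    | succ n ih =>
      intro s s'
      rw [pow_succ, Matrix.mul_apply]
      exact Finset.sum_nonneg fun x _ => mul_nonneg (ih s x) (hcP x s')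
  have hinvnn : ∀ s s', 0 ≤ (1 - c • P)⁻¹ s s' := by
    intro s s'
    let φ : Matrix S S ℝ →ₗ[ℝ] ℝ :=
      { toFun := fun M => M s s', map_add' := fun _ _ => rfl, map_smul' := fun _ _ => rfl }
    have h2 : HasSum (fun n : ℕ => ((c • P) ^ n) s s') ((1 - c • P)⁻¹ s s') :=
      hsum.map φ.toAddMonoidHom φ.continuous_of_finiteDimensional
    exact hasSum_le (fun n => hpow n s s') hasSum_zero h2
  set M : Matrix S S ℝ := (1 - c • P)⁻¹ * Matrix.diagonal (fun s => (l s)⁻¹) with hMdef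
  have hMnn : ∀ s s', 0 ≤ M s s' := by
    intro s s'
    rw [hMdef, Matrix.mul_diagonal]
    exact mul_nonneg (hinvnn s s') (inv_nonneg.mpr (hl s').1.le)
  have hDM : (Matrix.diagonal l * (1 - c • P)) * M = 1 := by
    rw [hMdef, Matrix.mul_assoc, ← Matrix.mul_assoc (1 - c • P), hmulinv, Matrix.one_mul,
      Matrix.diagonal_mul_diagonal]
    have : (fun s => l s * (l s)⁻¹) = fun _ => (1 : ℝ) := by
      funext s; exact mul_inv_cancel₀ (ne_of_gt (hl s).1)
    rw [this, Matrix.diagonal_one]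
  -- entries of the step matrices are nonnegative
  have hAnn : ∀ (a : ℝ), a ∈ Set.Icc (0:ℝ) 1 → ∀ s s',
      0 ≤ (1 - a • (Matrix.diagonal l * (1 - c • P))) s s' := by
    intro a ha s s'
    have h1 : (Matrix.diagonal l * (1 - c • P)) s s'
        = l s * ((if s = s' then 1 else 0) - c * P s s') := by
      rw [Matrix.diagonal_mul]
      simp [Matrix.sub_apply, Matrix.one_apply, Matrix.smul_apply]
    have h2 : (1 - a • (Matrix.diagonal l * (1 - c • P))) s s'
        = (if s = s' then 1 else 0) - a * (l s * ((if s = s' then 1 else 0) - c * P s s')) := by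
      simp [Matrix.sub_apply, Matrix.smul_apply, Matrix.one_apply, h1]
    rw [h2]
    obtain ⟨ha0, ha1⟩ := ha
    obtain ⟨hl0, hl1⟩ := hl s
    by_cases h : s = s'
    · subst h
      rw [if_pos rfl]
      have hP1 : c * P s s ≤ 1 := mul_le_one₀ hc1.le (hP s s) (hPle s s)
      have hP0 : 0 ≤ c * P s s := mul_nonneg hc0 (hP s s)
      have h3 : 0 ≤ 1 - c * P s s := by linarith
      have h4 : l s * (1 - c * P s s) ≤ 1 :=
        mul_le_one₀ hl1 h3 (by linarith)
      have h5 : 0 ≤ l s * (1 - c * P s s) := mul_nonneg hl0.le h3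
      have h6 : a * (l s * (1 - c * P s s)) ≤ 1 :=
        mul_le_one₀ ha1 h5 h4
      nlinarith
    · rw [if_neg h]
      have : 0 ≤ a * (l s * (c * P s s')) :=
        mul_nonneg ha0 (mul_nonneg hl0.le (mul_nonneg hc0 (hP s s')))
      nlinarith
  -- main induction
  have main : ∀ t' : ℕ, m ≤ t' → ∀ s s' : S,
      0 ≤ (∑ k ∈ Finset.Icc (m + 1) t', α k • G k t') s s' ∧
      (∑ k ∈ Finset.Icc (m + 1) t', α k • G k t') s s' ≤ M s s' := by
    intro t'
    induction t' with
    | zero =>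
      intro h s s'
      rw [Finset.Icc_eq_empty_of_lt (by omega), Finset.sum_empty]
      exact ⟨le_of_eq (by simp), by simpa using hMnn s s'⟩
    | succ t' ih =>
      intro h s s'
      rcases Nat.eq_or_lt_of_le h with heq | hlt
      · -- m = t' + 1 : empty sum
        rw [← heq]
        rw [Finset.Icc_eq_empty_of_lt (by omega), Finset.sum_empty]
        exact ⟨le_of_eq (by simp), by simpa using hMnn s s'⟩
      · have hmt' : m ≤ t' := by omega
        set A' : Matrix S S ℝ :=
          1 - α (t' + 1) • (Matrix.diagonal l * (1 - c • P)) with hA'def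
        have hsplit : (∑ k ∈ Finset.Icc (m + 1) (t' + 1), α k • G k (t' + 1))
            = A' * (∑ k ∈ Finset.Icc (m + 1) t', α k • G k t') + α (t' + 1) • (1 : Matrix S S ℝ) := by
          rw [Finset.sum_Icc_succ_top (by omega : m + 1 ≤ t' + 1)]
          congr 1
          · rw [Finset.mul_sum]
            refine Finset.sum_congr rfl fun k hk => ?_
            have hk' : k ≤ t' := (Finset.mem_Icc.mp hk).2
            rw [hGstep k t' hk', Matrix.mul_smul]
          · rw [hGdiag (t' + 1)]
        have hBnn := fun x y => (ih hmt' x y).1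
        have hBle := fun x y => (ih hmt' x y).2
        have hA'nn : ∀ x y, 0 ≤ A' x y := hAnn (α (t' + 1)) (hα (t' + 1))
        have hAM : A' * M = M - α (t' + 1) • (1 : Matrix S S ℝ) := by
          rw [hA'def, Matrix.sub_mul, Matrix.one_mul, Matrix.smul_mul, hDM]
        constructor
        · rw [hsplit]
          refine add_nonneg ?_ ?_
          · rw [Matrix.mul_apply]
            exact Finset.sum_nonneg fun x _ => mul_nonneg (hA'nn s x) (hBnn x s')
          · simp only [Matrix.smul_apply, Matrix.one_apply, smul_eq_mul]
            have := (hα (t' + 1)).1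
            positivity
        · rw [hsplit]
          have h4 : (A' * (∑ k ∈ Finset.Icc (m + 1) t', α k • G k t')) s s'
              ≤ (A' * M) s s' := by
            rw [Matrix.mul_apply, Matrix.mul_apply]
            exact Finset.sum_le_sum fun x _ =>
              mul_le_mul_of_nonneg_left (hBle x s') (hA'nn s x)
          calc (A' * (∑ k ∈ Finset.Icc (m + 1) t', α k • G k t')
                + α (t' + 1) • (1 : Matrix S S ℝ)) s s'
              = (A' * (∑ k ∈ Finset.Icc (m + 1) t', α k • G k t')) s s'
                + (α (t' + 1) • (1 : Matrix S S ℝ)) s s' := by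
                simp [Matrix.add_apply]
            _ ≤ (A' * M) s s' + (α (t' + 1) • (1 : Matrix S S ℝ)) s s' := by
                exact add_le_add_left h4 _
            _ = M s s' := by
                rw [hAM]
                simp [Matrix.sub_apply, Matrix.smul_apply]
  exact ⟨hU, hinvnn, fun s s' => (main t hmt s s').2⟩
end

section
/- For every vector v ∈ ℝ^S with nonnegative entries, ‖(I − √γ·P)^{−1} v‖_∞ ≤ 2·‖(I − γ·P)^{−1} v‖_∞, where ‖·‖_∞ denotes the maximum absolute value of the entries. -/
open Finset

open scoped NNReal

section Aux

attribute [local instance] Matrix.linftyOpNormedAddCommGroup Matrix.linftyOpNormedRing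
  Matrix.linftyOpNormedAlgebra

variable {S : Type*} [Fintype S] [Nonempty S] [DecidableEq S]

lemma aux_norm_le_one (P : Matrix S S ℝ) (hP : ∀ s s', 0 ≤ P s s')
    (hProw : ∀ s, ∑ s', P s s' = 1) : ‖P‖ ≤ 1 := by
  rw [Matrix.linfty_opNorm_def]
  have h : ∀ i : S, ∑ j, ‖P i j‖₊ ≤ (1 : ℝ≥0) := by
    intro i
    have : ((∑ j, ‖P i j‖₊ : ℝ≥0) : ℝ) = 1 := by
      push_cast
      rw [← hProw i]
      exact Finset.sum_congr rfl fun j _ => abs_of_nonneg (hP i j)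
    exact le_of_eq (by exact_mod_cast this)
  have : (Finset.univ.sup fun i : S => ∑ j, ‖P i j‖₊) ≤ (1 : ℝ≥0) :=
    Finset.sup_le fun i _ => h i
  exact_mod_cast this

lemma aux_isUnit (P : Matrix S S ℝ) (hP : ∀ s s', 0 ≤ P s s')
    (hProw : ∀ s, ∑ s', P s s' = 1) (c : ℝ) (hc0 : 0 ≤ c) (hc1 : c < 1) :
    IsUnit (1 - c • P) := by
  have h : ‖c • P‖ < 1 := by
    calc ‖c • P‖ ≤ ‖c‖ * ‖P‖ := norm_smul_le c P
      _ ≤ c * 1 := by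
          have h1 := aux_norm_le_one P hP hProw
          rw [Real.norm_eq_abs, abs_of_nonneg hc0]
          exact mul_le_mul_of_nonneg_left h1 hc0
      _ < 1 := by linarith
  exact ⟨Units.oneSub (c • P) h, rfl⟩

end Aux

lemma mulVec_norm_le {S : Type*} [Fintype S] [Nonempty S]
    (P : Matrix S S ℝ) (hP : ∀ s s', 0 ≤ P s s')
    (hProw : ∀ s, ∑ s', P s s' = 1) (w : S → ℝ) : ‖P.mulVec w‖ ≤ ‖w‖ := by
  have h0 : (0:ℝ) ≤ ‖w‖ := norm_nonneg w
  rw [pi_norm_le_iff_of_nonneg h0]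
  intro i
  calc ‖P.mulVec w i‖ = |∑ j, P i j * w j| := rfl
    _ ≤ ∑ j, |P i j * w j| := Finset.abs_sum_le_sum_abs _ _
    _ ≤ ∑ j, P i j * ‖w‖ := by
        apply Finset.sum_le_sum
        intro j _
        rw [abs_mul, abs_of_nonneg (hP i j)]
        exact mul_le_mul_of_nonneg_left (norm_le_pi_norm w j) (hP i j)
    _ = ‖w‖ := by rw [← Finset.sum_mul, hProw i, one_mul]

/-- Resolvent bound: `‖(1 - c•P)⁻¹ z‖ ≤ ‖z‖ / (1 - c)`. -/
lemma resolvent_norm_le {S : Type*} [Fintype S] [Nonempty S] [DecidableEq S]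
    (P : Matrix S S ℝ) (hP : ∀ s s', 0 ≤ P s s')
    (hProw : ∀ s, ∑ s', P s s' = 1) (c : ℝ) (hc0 : 0 ≤ c) (hc1 : c < 1) (z : S → ℝ) :
    (1 - c) * ‖((1 - c • P)⁻¹).mulVec z‖ ≤ ‖z‖ := by
  have hU : IsUnit (1 - c • P) := aux_isUnit P hP hProw c hc0 hc1
  have hd : IsUnit (1 - c • P).det := (Matrix.isUnit_iff_isUnit_det _).mp hU
  set u : S → ℝ := ((1 - c • P)⁻¹).mulVec z with hu
  have hz : (1 - c • P).mulVec u = z := by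
    rw [hu, Matrix.mulVec_mulVec, Matrix.mul_nonsing_inv _ hd, Matrix.one_mulVec]
  have hexp : u = z + c • P.mulVec u := by
    have : (1 - c • P).mulVec u = u - c • P.mulVec u := by
      rw [Matrix.sub_mulVec, Matrix.one_mulVec, Matrix.smul_mulVec]
    rw [this] at hz
    rw [← hz]; abel
  have hb : ‖u‖ ≤ ‖z‖ + c * ‖u‖ := by
    calc ‖u‖ = ‖z + c • P.mulVec u‖ := by rw [← hexp]
      _ ≤ ‖z‖ + ‖c • P.mulVec u‖ := norm_add_le _ _
      _ ≤ ‖z‖ + c * ‖u‖ := by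
          rw [norm_smul, Real.norm_eq_abs, abs_of_nonneg hc0]
          have := mulVec_norm_le P hP hProw u
          nlinarith
  nlinarith

/-- For every entrywise-nonnegative vector `v`,
`‖(I − √γ P)⁻¹ v‖_∞ ≤ 2 ‖(I − γ P)⁻¹ v‖_∞`. -/
theorem sqrt_gamma_resolvent_bound
    {S : Type*} [Fintype S] [Nonempty S] [DecidableEq S]
    (γ : ℝ) (hγ : γ ∈ Set.Ioo (0 : ℝ) 1)
    (P : Matrix S S ℝ) (hP : ∀ s s', 0 ≤ P s s') (hProw : ∀ s, ∑ s', P s s' = 1) :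
    ∀ v : S → ℝ, (∀ s, 0 ≤ v s) →
      ‖((1 - Real.sqrt γ • P)⁻¹).mulVec v‖ ≤ 2 * ‖((1 - γ • P)⁻¹).mulVec v‖ := by
  intro v _
  obtain ⟨hγ0, hγ1⟩ := hγ
  have hs0 : 0 ≤ Real.sqrt γ := Real.sqrt_nonneg γ
  have hs1 : Real.sqrt γ < 1 := by
    rw [show (1:ℝ) = Real.sqrt 1 from (Real.sqrt_one).symm]
    exact Real.sqrt_lt_sqrt (le_of_lt hγ0) hγ1
  have hsq : Real.sqrt γ * Real.sqrt γ = γ := Real.mul_self_sqrt (le_of_lt hγ0)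
  set c : ℝ := Real.sqrt γ
  set A : Matrix S S ℝ := 1 - c • P with hA
  set C : Matrix S S ℝ := 1 - γ • P with hC
  have hAU : IsUnit A := aux_isUnit P hP hProw _ hs0 hs1
  have hAd : IsUnit A.det := (Matrix.isUnit_iff_isUnit_det _).mp hAU
  have hCU : IsUnit C := aux_isUnit P hP hProw _ (le_of_lt hγ0) hγ1
  have hCd : IsUnit C.det := (Matrix.isUnit_iff_isUnit_det _).mp hCU
  set y : S → ℝ := (C⁻¹).mulVec v with hy
  have hvy : C.mulVec y = v := by
    rw [hy, Matrix.mulVec_mulVec, Matrix.mul_nonsing_inv _ hCd, Matrix.one_mulVec]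
  -- C = A + (c*(1-c)) • P
  have hCA : C = A + (c * (1 - c)) • P := by
    rw [hC, hA]
    rw [show (c * (1 - c)) • P = c • P - γ • P by
      rw [← hsq]; rw [← sub_smul]; ring_nf]
    abel
  have key : (A⁻¹).mulVec v = y + (c * (1 - c)) • (A⁻¹).mulVec (P.mulVec y) := by
    rw [← hvy, hCA, Matrix.add_mulVec, Matrix.smul_mulVec]
    rw [Matrix.mulVec_add]
    congr 1
    · rw [Matrix.mulVec_mulVec, Matrix.nonsing_inv_mul _ hAd, Matrix.one_mulVec]
    · rw [Matrix.mulVec_smul]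
  rw [key]
  have hres := resolvent_norm_le P hP hProw c hs0 hs1 (P.mulVec y)
  have hPy : ‖P.mulVec y‖ ≤ ‖y‖ := mulVec_norm_le P hP hProw y
  have h1c : (0:ℝ) < 1 - c := by linarith
  have hAinv : ‖(A⁻¹).mulVec (P.mulVec y)‖ ≤ ‖y‖ / (1 - c) := by
    rw [le_div_iff₀ h1c]
    calc ‖(A⁻¹).mulVec (P.mulVec y)‖ * (1 - c)
        = (1 - c) * ‖(A⁻¹).mulVec (P.mulVec y)‖ := by ring
      _ ≤ ‖P.mulVec y‖ := hres
      _ ≤ ‖y‖ := hPy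
  calc ‖y + (c * (1 - c)) • (A⁻¹).mulVec (P.mulVec y)‖
      ≤ ‖y‖ + ‖(c * (1 - c)) • (A⁻¹).mulVec (P.mulVec y)‖ := norm_add_le _ _
    _ = ‖y‖ + (c * (1 - c)) * ‖(A⁻¹).mulVec (P.mulVec y)‖ := by
        rw [norm_smul, Real.norm_eq_abs, abs_of_nonneg (by nlinarith : (0:ℝ) ≤ c * (1-c))]
    _ ≤ ‖y‖ + (c * (1 - c)) * (‖y‖ / (1 - c)) := by
        gcongr
    _ = (1 + c) * ‖y‖ := by field_simp
    _ ≤ 2 * ‖y‖ := by nlinarith [norm_nonneg y]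
end

section
/- For any two Borel probability measures μ, ν on ℝ supported in [0, 1/(1−γ)]: ∫₀^{1/(1−γ)} | F_{Π_K μ}(x) − F_{Π_K ν}(x) | dx ≤ ∫₀^{1/(1−γ)} | F_μ(x) − F_ν(x) | dx; that is, the categorical (Cramér) projection Π_K is non-expansive with respect to the 1-Wasserstein distance. -/
open MeasureTheory Finset

lemma realstep (u : ℝ) : min 1 (max 0 (1 - u)) = min 1 (max 0 (-u)) + max 0 (1 - |u|) := by
  rcases le_total u 0 with h | h
  · rw [abs_of_nonpos h]
    rcases le_total u (-1) with h1 | h1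
    · rw [min_eq_left (by rw [le_max_iff]; right; linarith),
        min_eq_left (by rw [le_max_iff]; right; linarith),
        max_eq_left (by linarith)]
      ring
    · rw [min_eq_left (by rw [le_max_iff]; right; linarith),
        min_eq_right (by rw [max_le_iff]; constructor <;> linarith),
        max_eq_right (by linarith), max_eq_right (by linarith)]
      linarith
  · rw [abs_of_nonneg h, max_eq_left (by linarith : -u ≤ 0),
      min_eq_right zero_le_one, zero_add,
      min_eq_right (max_le zero_le_one (by linarith))]

lemma hat_sum (ι : ℝ) (hι : 0 < ι) (j : ℕ) (y : ℝ) (hy : 0 ≤ y) :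
    ∑ k ∈ Finset.range (j+1), max 0 (1 - |y - k*ι|/ι)
      = min 1 (max 0 ((((j:ℝ)+1)*ι - y) / ι)) := by
  induction j with
  | zero =>
      simp only [Finset.range_one, Finset.sum_singleton, Nat.cast_zero, zero_mul, sub_zero,
        zero_add, one_mul, abs_of_nonneg hy]
      have h1 : (ι - y) / ι = 1 - y/ι := by field_simp
      rw [h1, min_eq_right (max_le zero_le_one
        (by nlinarith [div_nonneg hy hι.le]))]
  | succ n ih =>
      rw [Finset.sum_range_succ, ih]
      set A : ℝ := ((n:ℝ)+1)*ι with hAdef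
      have hc : ((n+1:ℕ):ℝ) * ι = A := by push_cast [hAdef]; ring
      have e1 : ((((n:ℕ)+1:ℕ):ℝ)+1)*ι - y = ι * (1 - (y - A)/ι) := by
        push_cast; field_simp [hAdef]; ring
      have e1' : (ι * (1 - (y - A)/ι)) / ι = 1 - (y - A)/ι := by field_simp
      have e2 : (A - y)/ι = -((y - A)/ι) := by ring
      have e3 : |y - A| / ι = |(y - A)/ι| := by rw [abs_div, abs_of_pos hι]
      rw [hc, e1, e1', e2, e3, realstep ((y - A)/ι)]

lemma tri_eq_vol (a ι y : ℝ) (hι : 0 < ι) :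
    min 1 (max 0 ((a + ι - y)/ι)) * ι
      = (volume (Set.Ioc a (a+ι) ∩ Set.Ioi y)).toReal := by
  rw [Set.Ioc_inter_Ioi, Real.volume_Ioc, ENNReal.toReal_ofReal']
  rcases le_total y a with h | h
  · rw [max_eq_left h, min_eq_left, max_eq_left (by linarith)]
    · ring
    · rw [le_max_iff]; right; rw [le_div_iff₀ hι]; linarith
  · rw [max_eq_right h]
    rcases le_total y (a + ι) with h1 | h1
    · rw [min_eq_right, max_eq_right (div_nonneg (by linarith) hι.le),
        max_eq_left (by linarith)]
      · rw [div_mul_cancel₀ _ hι.ne']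
      · rw [max_le_iff]; exact ⟨zero_le_one, by rw [div_le_one hι]; linarith⟩
    · rw [max_eq_left (by rw [div_nonpos_iff]; right; exact ⟨by linarith, hι.le⟩),
        max_eq_right (by linarith), min_eq_right zero_le_one]
      ring

lemma avg_eq (μ : Measure ℝ) [IsProbabilityMeasure μ] (a ι : ℝ) (hι : 0 < ι) :
    (∫ y, min 1 (max 0 ((a + ι - y)/ι)) ∂μ) * ι
      = ∫ t in Set.Ioc a (a+ι), (μ (Set.Iio t)).toReal := by
  have hS : MeasurableSet {p : ℝ × ℝ | p.2 < p.1} :=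
    measurableSet_lt measurable_snd measurable_fst
  have swap : ∫⁻ y, (volume.restrict (Set.Ioc a (a+ι))) (Set.Ioi y) ∂μ
      = ∫⁻ t in Set.Ioc a (a+ι), μ (Set.Iio t) := by
    have h1 : ∀ y : ℝ, (volume.restrict (Set.Ioc a (a+ι))) (Set.Ioi y)
        = ∫⁻ t in Set.Ioc a (a+ι),
            ({p : ℝ × ℝ | p.2 < p.1} : Set (ℝ×ℝ)).indicator 1 (t, y) := by
      intro y
      rw [← lintegral_indicator_one measurableSet_Ioi]
      exact lintegral_congr fun t => rfl
    have h2 : ∀ t : ℝ, μ (Set.Iio t)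
        = ∫⁻ y, ({p : ℝ × ℝ | p.2 < p.1} : Set (ℝ×ℝ)).indicator 1 (t, y) ∂μ := by
      intro t
      rw [← lintegral_indicator_one measurableSet_Iio]
      exact lintegral_congr fun y => rfl
    simp_rw [h1]
    rw [lintegral_lintegral_swap]
    · exact lintegral_congr fun t => (h2 t).symm
    · exact ((measurable_one.indicator hS).comp
        (measurable_snd.prodMk measurable_fst)).aemeasurable
  calc (∫ y, min 1 (max 0 ((a + ι - y)/ι)) ∂μ) * ι
      = ∫ y, min 1 (max 0 ((a + ι - y)/ι)) * ι ∂μ := (integral_mul_const ι _).symm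
    _ = ∫ y, ((volume.restrict (Set.Ioc a (a+ι))) (Set.Ioi y)).toReal ∂μ := by
        refine integral_congr_ae (ae_of_all _ fun y => ?_)
        show min 1 (max 0 ((a + ι - y)/ι)) * ι
          = ((volume.restrict (Set.Ioc a (a+ι))) (Set.Ioi y)).toReal
        rw [Measure.restrict_apply measurableSet_Ioi]
        rw [Set.inter_comm]
        exact tri_eq_vol a ι y hι
    _ = (∫⁻ y, (volume.restrict (Set.Ioc a (a+ι))) (Set.Ioi y) ∂μ).toReal := by
        refine integral_toReal ?_ (ae_of_all _ fun y => ?_)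
        · exact (Antitone.measurable (fun y z hyz =>
            measure_mono (Set.Ioi_subset_Ioi hyz))).aemeasurable
        · exact lt_of_le_of_lt (measure_mono (Set.subset_univ _))
            (by rw [Measure.restrict_apply_univ, Real.volume_Ioc]; exact ENNReal.ofReal_lt_top)
    _ = (∫⁻ t in Set.Ioc a (a+ι), μ (Set.Iio t)).toReal := by rw [swap]
    _ = ∫ t in Set.Ioc a (a+ι), (μ (Set.Iio t)).toReal := by
        refine (integral_toReal ?_ (ae_of_all _ fun t => ?_)).symm
        · exact (Monotone.measurable (fun s t hst =>
            measure_mono (Set.Iio_subset_Iio hst))).aemeasurable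
        · exact lt_of_le_of_lt prob_le_one (by norm_num)

lemma proj_apply (K : ℕ) (ι : ℝ) (hι : 0 < ι) (ρ : Measure ℝ) (j : ℕ) (hj : j < K)
    (x : ℝ) (hx : x ∈ Set.Ioc ((j:ℝ)*ι) (((j:ℝ)+1)*ι)) :
    ((∑ k ∈ Finset.range (K+1),
        ENNReal.ofReal (∫ y, max 0 (1 - |y - k*ι|/ι) ∂ρ) • Measure.dirac ((k:ℝ)*ι))
      (Set.Ico 0 x)).toReal
    = ∑ k ∈ Finset.range (j+1), ∫ y, max 0 (1 - |y - k*ι|/ι) ∂ρ := by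
  rw [Measure.finset_sum_apply]
  have key : ∑ k ∈ Finset.range (K+1),
      (ENNReal.ofReal (∫ y, max 0 (1 - |y - k*ι|/ι) ∂ρ) • Measure.dirac ((k:ℝ)*ι))
        (Set.Ico 0 x)
      = ∑ k ∈ Finset.range (j+1), ENNReal.ofReal (∫ y, max 0 (1 - |y - k*ι|/ι) ∂ρ) := by
    have step1 : ∀ k ∈ Finset.range (K+1),
        (ENNReal.ofReal (∫ y, max 0 (1 - |y - k*ι|/ι) ∂ρ) • Measure.dirac ((k:ℝ)*ι))
          (Set.Ico 0 x)
        = if k ≤ j then ENNReal.ofReal (∫ y, max 0 (1 - |y - k*ι|/ι) ∂ρ) else 0 := by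
      intro k _
      rw [Measure.smul_apply, smul_eq_mul, Measure.dirac_apply' _ measurableSet_Ico]
      by_cases hkj : k ≤ j
      · rw [if_pos hkj, Set.indicator_of_mem, Pi.one_apply, mul_one]
        refine ⟨by positivity, ?_⟩
        have : (k:ℝ) ≤ j := Nat.cast_le.2 hkj
        nlinarith [hx.1]
      · rw [if_neg hkj, Set.indicator_of_notMem, mul_zero]
        intro hmem
        have h1 : ((j:ℝ)+1) ≤ (k:ℝ) := by exact_mod_cast (by omega : j + 1 ≤ k)
        have := hmem.2
        nlinarith [hx.2]
    rw [Finset.sum_congr rfl step1,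
      ← Finset.sum_subset (Finset.range_subset_range.2 (by omega : j + 1 ≤ K + 1))
        (fun k _ hk' => if_neg (by simp only [Finset.mem_range, not_lt] at hk'; omega))]
    exact Finset.sum_congr rfl fun k hk =>
      if_pos (Nat.lt_succ_iff.1 (Finset.mem_range.1 hk))
  rw [key, ENNReal.toReal_sum (fun k _ => ENNReal.ofReal_ne_top)]
  exact Finset.sum_congr rfl fun k _ => ENNReal.toReal_ofReal
    (integral_nonneg fun y => le_max_left _ _)

lemma sum_eq_avg (ρ : Measure ℝ) [IsProbabilityMeasure ρ] (ι : ℝ) (hι : 0 < ι)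
    (hae : ∀ᵐ y ∂ρ, 0 ≤ y) (j : ℕ) :
    (∑ k ∈ Finset.range (j+1), ∫ y, max 0 (1 - |y - k*ι|/ι) ∂ρ) * ι
      = ∫ t in Set.Ioc ((j:ℝ)*ι) ((j:ℝ)*ι + ι), (ρ (Set.Iio t)).toReal := by
  have hint : ∀ k : ℕ, Integrable (fun y : ℝ => max 0 (1 - |y - k*ι|/ι)) ρ := by
    intro k
    refine Integrable.mono' (integrable_const 1) ?_ (ae_of_all _ fun y => ?_)
    · exact (Continuous.max continuous_const (by continuity)).aestronglyMeasurable
    · rw [Real.norm_eq_abs, abs_of_nonneg (le_max_left _ _)]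
      have h0 : 0 ≤ |y - (k:ℝ)*ι| / ι := div_nonneg (abs_nonneg _) hι.le
      exact max_le zero_le_one (by linarith)
  rw [← integral_finset_sum _ (fun k _ => hint k)]
  have step : ∫ y, ∑ k ∈ Finset.range (j+1), max 0 (1 - |y - k*ι|/ι) ∂ρ
      = ∫ y, min 1 (max 0 (((j:ℝ)*ι + ι - y)/ι)) ∂ρ := by
    refine integral_congr_ae (hae.mono fun y hy => ?_)
    have := hat_sum ι hι j y hy
    rw [show ((j:ℝ)+1)*ι - y = (j:ℝ)*ι + ι - y by ring] at this
    exact this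
  rw [step]
  exact avg_eq ρ ((j:ℝ)*ι) ι hι

/-- The categorical (Cramér) projection `Π_K` onto the grid `x_k = k/(K(1−γ))`,
`k = 0, …, K`, is non-expansive with respect to the `1`-Wasserstein distance
(expressed via cumulative functions) on probability measures supported in
`[0, 1/(1−γ)]`. -/
theorem categorical_projection_w1_nonexpansive
    (γ : ℝ) (hγ : γ ∈ Set.Ioo (0 : ℝ) 1)
    (K : ℕ) (hK : 1 ≤ K)
    (ι : ℝ) (hι : ι = 1 / (K * (1 - γ)))
    (μ ν : Measure ℝ) [IsProbabilityMeasure μ] [IsProbabilityMeasure ν]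
    (hμ : μ (Set.Icc 0 (1 / (1 - γ)))ᶜ = 0)
    (hν : ν (Set.Icc 0 (1 / (1 - γ)))ᶜ = 0)
    (proj : Measure ℝ → Measure ℝ)
    (hproj : ∀ ρ : Measure ℝ,
      proj ρ = ∑ k ∈ Finset.range (K + 1),
        ENNReal.ofReal (∫ x, max 0 (1 - |x - k * ι| / ι) ∂ρ) •
          Measure.dirac ((k : ℝ) * ι)) :
    (∫ x in (0:ℝ)..(1 / (1 - γ)),
        |((proj μ) (Set.Ico 0 x)).toReal - ((proj ν) (Set.Ico 0 x)).toReal|)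
      ≤ ∫ x in (0:ℝ)..(1 / (1 - γ)),
          |(μ (Set.Ico 0 x)).toReal - (ν (Set.Ico 0 x)).toReal| := by
  have hγ1 : 0 < 1 - γ := by linarith [hγ.2]
  have hK0 : (0:ℝ) < K := by exact_mod_cast hK
  have hι0 : 0 < ι := by rw [hι]; positivity
  have hKι : (K:ℝ) * ι = 1 / (1 - γ) := by
    rw [hι]; field_simp
  -- almost everywhere nonnegativity
  have hae : ∀ ρ : Measure ℝ, ρ (Set.Icc 0 (1 / (1 - γ)))ᶜ = 0 → ∀ᵐ y ∂ρ, 0 ≤ y := by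
    intro ρ hρ
    rw [ae_iff]
    refine measure_mono_null (fun y hy => ?_) hρ
    simp only [Set.mem_setOf_eq, not_le] at hy
    simp only [Set.mem_compl_iff, Set.mem_Icc, not_and, not_le]
    intro h; linarith
  -- replace Iio by Ico for nonnegative endpoints
  have hIio : ∀ ρ : Measure ℝ, ρ (Set.Icc 0 (1 / (1 - γ)))ᶜ = 0 → ∀ t : ℝ, 0 ≤ t →
      ρ (Set.Iio t) = ρ (Set.Ico 0 t) := by
    intro ρ hρ t ht
    have h0 : ρ (Set.Iio 0) = 0 := by
      refine measure_mono_null (fun y hy => ?_) hρ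
      simp only [Set.mem_Iio] at hy
      simp only [Set.mem_compl_iff, Set.mem_Icc, not_and, not_le]
      intro h; linarith
    refine le_antisymm ?_ (measure_mono fun y hy => hy.2)
    calc ρ (Set.Iio t) ≤ ρ (Set.Iio 0 ∪ Set.Ico 0 t) := by
          refine measure_mono fun y hy => ?_
          rcases lt_or_ge y 0 with h | h
          · exact Or.inl h
          · exact Or.inr ⟨h, hy⟩
      _ ≤ ρ (Set.Iio 0) + ρ (Set.Ico 0 t) := measure_union_le _ _
      _ = ρ (Set.Ico 0 t) := by rw [h0, zero_add]
  have hle : ∀ j : ℕ, ((j:ℕ):ℝ)*ι ≤ (((j+1:ℕ)):ℝ)*ι := by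
    intro j
    have : ((j:ℕ):ℝ) ≤ (((j+1:ℕ)):ℝ) := by exact_mod_cast Nat.le_succ j
    nlinarith
  -- integrability of cumulative differences
  have hcdf_int : ∀ (ρ : Measure ℝ), IsProbabilityMeasure ρ → ∀ a b : ℝ,
      IntegrableOn (fun x => (ρ (Set.Ico 0 x)).toReal) (Set.Ioc a b) volume := by
    intro ρ hρ a b
    have hmono : Monotone (fun x => (ρ (Set.Ico 0 x)).toReal) := fun s t hst =>
      ENNReal.toReal_mono (measure_ne_top _ _)
        (measure_mono (Set.Ico_subset_Ico le_rfl hst))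
    refine Integrable.mono' (g := fun _ => (1:ℝ)) (integrableOn_const (ne_of_lt ?_))
      hmono.measurable.aestronglyMeasurable.restrict (ae_of_all _ fun x => ?_)
    · rw [Real.volume_Ioc]; exact ENNReal.ofReal_lt_top
    · rw [Real.norm_eq_abs, abs_of_nonneg ENNReal.toReal_nonneg]
      exact le_trans (ENNReal.toReal_mono ENNReal.one_ne_top prob_le_one) (by simp)
  have hdiff_int : ∀ a b : ℝ, IntegrableOn
      (fun x => |(μ (Set.Ico 0 x)).toReal - (ν (Set.Ico 0 x)).toReal|)
      (Set.Ioc a b) volume :=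
    fun a b => ((hcdf_int μ inferInstance a b).sub (hcdf_int ν inferInstance a b)).abs
  -- constancy of the projected CDF difference on grid intervals
  have hconstP : ∀ j : ℕ, j < K → ∀ x ∈ Set.Ioc (((j:ℕ):ℝ)*ι) ((((j+1:ℕ)):ℝ)*ι),
      |((proj μ) (Set.Ico 0 x)).toReal - ((proj ν) (Set.Ico 0 x)).toReal|
      = |(∑ k ∈ Finset.range (j+1), ∫ y, max 0 (1 - |y - k*ι|/ι) ∂μ)
          - (∑ k ∈ Finset.range (j+1), ∫ y, max 0 (1 - |y - k*ι|/ι) ∂ν)| := by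
    intro j hj x hx
    have hmem : x ∈ Set.Ioc ((j:ℝ)*ι) (((j:ℝ)+1)*ι) :=
      ⟨hx.1, le_trans hx.2 (by push_cast; linarith)⟩
    rw [hproj μ, hproj ν, proj_apply K ι hι0 μ j hj x hmem,
      proj_apply K ι hι0 ν j hj x hmem]
  -- per-interval inequality
  have key : ∀ j : ℕ, j < K →
      (∫ x in (((j:ℕ):ℝ)*ι)..((((j+1:ℕ)):ℝ)*ι),
          |((proj μ) (Set.Ico 0 x)).toReal - ((proj ν) (Set.Ico 0 x)).toReal|)
        ≤ ∫ x in (((j:ℕ):ℝ)*ι)..((((j+1:ℕ)):ℝ)*ι),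
          |(μ (Set.Ico 0 x)).toReal - (ν (Set.Ico 0 x)).toReal| := by
    intro j hj
    have hconst := hconstP j hj
    rw [intervalIntegral.integral_of_le (hle j), intervalIntegral.integral_of_le (hle j),
      setIntegral_congr_fun measurableSet_Ioc hconst, setIntegral_const, smul_eq_mul]
    have hvol : (volume (Set.Ioc (((j:ℕ):ℝ)*ι) ((((j+1:ℕ)):ℝ)*ι))).toReal = ι := by
      rw [Real.volume_Ioc, ENNReal.toReal_ofReal (by linarith [hle j])]
      push_cast; ring
    rw [measureReal_def, hvol]
    -- rewrite constant via averaged cumulative functions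
    have havgμ := sum_eq_avg μ ι hι0 (hae μ hμ) j
    have havgν := sum_eq_avg ν ι hι0 (hae ν hν) j
    have hIocEq : Set.Ioc ((j:ℝ)*ι) ((j:ℝ)*ι + ι)
        = Set.Ioc (((j:ℕ):ℝ)*ι) ((((j+1:ℕ)):ℝ)*ι) := by
      congr 1 <;> push_cast <;> ring
    rw [hIocEq] at havgμ havgν
    have hFμ' : IntegrableOn (fun t => (μ (Set.Iio t)).toReal)
        (Set.Ioc (((j:ℕ):ℝ)*ι) ((((j+1:ℕ)):ℝ)*ι)) volume := by
      have hmono : Monotone (fun t => (μ (Set.Iio t)).toReal) := fun s t hst =>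
        ENNReal.toReal_mono (measure_ne_top _ _) (measure_mono (Set.Iio_subset_Iio hst))
      refine Integrable.mono' (g := fun _ => (1:ℝ)) (integrableOn_const (ne_of_lt ?_))
        hmono.measurable.aestronglyMeasurable.restrict (ae_of_all _ fun x => ?_)
      · rw [Real.volume_Ioc]; exact ENNReal.ofReal_lt_top
      · rw [Real.norm_eq_abs, abs_of_nonneg ENNReal.toReal_nonneg]
        exact le_trans (ENNReal.toReal_mono ENNReal.one_ne_top prob_le_one) (by simp)
    have hFν' : IntegrableOn (fun t => (ν (Set.Iio t)).toReal)
        (Set.Ioc (((j:ℕ):ℝ)*ι) ((((j+1:ℕ)):ℝ)*ι)) volume := by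
      have hmono : Monotone (fun t => (ν (Set.Iio t)).toReal) := fun s t hst =>
        ENNReal.toReal_mono (measure_ne_top _ _) (measure_mono (Set.Iio_subset_Iio hst))
      refine Integrable.mono' (g := fun _ => (1:ℝ)) (integrableOn_const (ne_of_lt ?_))
        hmono.measurable.aestronglyMeasurable.restrict (ae_of_all _ fun x => ?_)
      · rw [Real.volume_Ioc]; exact ENNReal.ofReal_lt_top
      · rw [Real.norm_eq_abs, abs_of_nonneg ENNReal.toReal_nonneg]
        exact le_trans (ENNReal.toReal_mono ENNReal.one_ne_top prob_le_one) (by simp)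
    calc ι * |(∑ k ∈ Finset.range (j+1), ∫ y, max 0 (1 - |y - k*ι|/ι) ∂μ)
            - (∑ k ∈ Finset.range (j+1), ∫ y, max 0 (1 - |y - k*ι|/ι) ∂ν)|
        = |(∑ k ∈ Finset.range (j+1), ∫ y, max 0 (1 - |y - k*ι|/ι) ∂μ) * ι
            - (∑ k ∈ Finset.range (j+1), ∫ y, max 0 (1 - |y - k*ι|/ι) ∂ν) * ι| := by
          rw [← sub_mul, abs_mul, abs_of_pos hι0]; ring
      _ = |∫ t in Set.Ioc (((j:ℕ):ℝ)*ι) ((((j+1:ℕ)):ℝ)*ι),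
            ((μ (Set.Iio t)).toReal - (ν (Set.Iio t)).toReal)| := by
          rw [havgμ, havgν, integral_sub hFμ' hFν']
      _ ≤ ∫ t in Set.Ioc (((j:ℕ):ℝ)*ι) ((((j+1:ℕ)):ℝ)*ι),
            |(μ (Set.Iio t)).toReal - (ν (Set.Iio t)).toReal| := by
          simpa only [Real.norm_eq_abs] using
            norm_integral_le_integral_norm
              (f := fun t => (μ (Set.Iio t)).toReal - (ν (Set.Iio t)).toReal)
              (μ := volume.restrict (Set.Ioc (((j:ℕ):ℝ)*ι) ((((j+1:ℕ)):ℝ)*ι)))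
      _ = ∫ t in Set.Ioc (((j:ℕ):ℝ)*ι) ((((j+1:ℕ)):ℝ)*ι),
            |(μ (Set.Ico 0 t)).toReal - (ν (Set.Ico 0 t)).toReal| := by
          refine setIntegral_congr_fun measurableSet_Ioc (fun t ht => ?_)
          have ht0 : (0:ℝ) ≤ t := le_trans (by positivity) ht.1.le
          rw [hIio μ hμ t ht0, hIio ν hν t ht0]
  -- interval integrability for summation
  have hPint : ∀ j : ℕ, j < K → IntervalIntegrable
      (fun x => |((proj μ) (Set.Ico 0 x)).toReal - ((proj ν) (Set.Ico 0 x)).toReal|)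
      volume (((j:ℕ):ℝ)*ι) ((((j+1:ℕ)):ℝ)*ι) := by
    intro j hj
    rw [intervalIntegrable_iff_integrableOn_Ioc_of_le (hle j)]
    refine IntegrableOn.congr_fun
      (f := fun _ => |(∑ k ∈ Finset.range (j+1), ∫ y, max 0 (1 - |y - k*ι|/ι) ∂μ)
          - (∑ k ∈ Finset.range (j+1), ∫ y, max 0 (1 - |y - k*ι|/ι) ∂ν)|)
      (integrableOn_const (ne_of_lt ?_)) (fun x hx => (hconstP j hj x hx).symm)
      measurableSet_Ioc
    rw [Real.volume_Ioc]; exact ENNReal.ofReal_lt_top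
  have hQint : ∀ j : ℕ, j < K → IntervalIntegrable
      (fun x => |(μ (Set.Ico 0 x)).toReal - (ν (Set.Ico 0 x)).toReal|)
      volume (((j:ℕ):ℝ)*ι) ((((j+1:ℕ)):ℝ)*ι) := by
    intro j _
    rw [intervalIntegrable_iff_integrableOn_Ioc_of_le (hle j)]
    exact hdiff_int _ _
  -- assemble
  have hsumP := intervalIntegral.sum_integral_adjacent_intervals
    (f := fun x => |((proj μ) (Set.Ico 0 x)).toReal - ((proj ν) (Set.Ico 0 x)).toReal|)
    (μ := volume) (a := fun k : ℕ => ((k:ℕ):ℝ)*ι) (n := K) hPint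
  have hsumQ := intervalIntegral.sum_integral_adjacent_intervals
    (f := fun x => |(μ (Set.Ico 0 x)).toReal - (ν (Set.Ico 0 x)).toReal|)
    (μ := volume) (a := fun k : ℕ => ((k:ℕ):ℝ)*ι) (n := K) hQint
  simp only [Nat.cast_zero, zero_mul] at hsumP hsumQ
  rw [hKι] at hsumP hsumQ
  rw [← hsumP, ← hsumQ]
  exact Finset.sum_le_sum fun j hj => key j (Finset.mem_range.1 hj)
end

section
/- The normed space (𝓜, ‖·‖_{W₁}) is not complete: the sequence μ_n = Σ_{i=1}^n ( δ_{1/i + 2^{−i}} − δ_{1/i − 2^{−i}} ), n = 1, 2, …, lies in 𝓜, is a Cauchy sequence with respect to ‖·‖_{W₁} (indeed ‖μ_n − μ_{n+k}‖_{W₁} ≤ 2^{1−n} for all n, k), yet there is no ν ∈ 𝓜 with ‖μ_n − ν‖_{W₁} → 0 as n → ∞. -/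
open MeasureTheory Filter

/-! ### Auxiliary arithmetic lemmas -/

lemma ZW_nat_sq : ∀ i : ℕ, i*(i+1) ≤ 2^(i+1) := by
  intro i
  induction i with
  | zero => decide
  | succ n ih =>
    rcases Nat.lt_or_ge n 2 with h | h
    · interval_cases n <;> decide
    · calc (n+1)*(n+1+1) ≤ 2*(n*(n+1)) := by nlinarith
        _ ≤ 2*2^(n+1) := by omega
        _ = 2^(n+1+1) := by ring

lemma ZW_nat_gap : ∀ i : ℕ, 7 ≤ i → 3*(i*(i+1)) < 2^(i+1) := by
  intro i hi
  induction i with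
  | zero => omega
  | succ n ih =>
    rcases Nat.lt_or_ge n 7 with h | h
    · have : n = 6 := by omega
      subst this; decide
    · have := ih h
      calc 3*((n+1)*(n+1+1)) ≤ 2*(3*(n*(n+1))) := by nlinarith
        _ < 2*2^(n+1) := by omega
        _ = 2^(n+1+1) := by ring

noncomputable def ZWa (i : ℕ) : ℝ := (1:ℝ)/i + (2:ℝ)^(-(i:ℤ))
noncomputable def ZWb (i : ℕ) : ℝ := (1:ℝ)/i - (2:ℝ)^(-(i:ℤ))

lemma ZW_zpow_eq (i : ℕ) : (2:ℝ)^(-(i:ℤ)) = ((2:ℝ)^i)⁻¹ := by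
  rw [zpow_neg, zpow_natCast]

lemma ZW_zpow_pos (i : ℕ) : (0:ℝ) < (2:ℝ)^(-(i:ℤ)) := by
  rw [ZW_zpow_eq]; positivity

lemma ZW_zpow_succ_eq (i : ℕ) : (2:ℝ)^(-(i:ℤ)) = 2 * (2:ℝ)^(-((i+1:ℕ):ℤ)) := by
  rw [ZW_zpow_eq, ZW_zpow_eq, pow_succ]
  field_simp

lemma ZWb_nonneg {i : ℕ} (hi : 1 ≤ i) : 0 ≤ ZWb i := by
  have h1 : (i:ℝ) ≤ (2:ℝ)^i := by exact_mod_cast (Nat.lt_two_pow_self (n := i)).le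
  have hi' : (0:ℝ) < i := by exact_mod_cast hi
  rw [ZWb, ZW_zpow_eq, sub_nonneg, one_div]
  exact inv_anti₀ hi' h1

lemma ZWa_le_two {i : ℕ} (hi : 1 ≤ i) : ZWa i ≤ 2 := by
  have hi' : (1:ℝ) ≤ i := by exact_mod_cast hi
  have h1 : (1:ℝ)/i ≤ 1 := by
    rw [div_le_one (by linarith)]; linarith
  have h2 : (2:ℝ)^(-(i:ℤ)) ≤ 1 := by
    rw [ZW_zpow_eq]
    exact inv_le_one_of_one_le₀ (one_le_pow₀ (by norm_num))
  unfold ZWa; linarith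

lemma ZWb_lt_ZWa (i : ℕ) : ZWb i < ZWa i := by
  have := ZW_zpow_pos i
  unfold ZWa ZWb; linarith

lemma ZWa_anti {i j : ℕ} (hi : 1 ≤ i) (hij : i ≤ j) : ZWa j ≤ ZWa i := by
  have hi' : (0:ℝ) < i := by exact_mod_cast hi
  have hij' : (i:ℝ) ≤ j := by exact_mod_cast hij
  have h1 : (1:ℝ)/j ≤ 1/i := one_div_le_one_div_of_le hi' hij'
  have h2 : (2:ℝ)^(-(j:ℤ)) ≤ (2:ℝ)^(-(i:ℤ)) := by
    apply zpow_le_zpow_right₀ (by norm_num)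
    omega
  unfold ZWa; linarith

lemma ZW_inv_prod_ge (i : ℕ) (hi : 1 ≤ i) :
    (2:ℝ)^(-((i+1:ℕ):ℤ)) ≤ 1/((i:ℝ)*(i+1)) := by
  have hi' : (0:ℝ) < i := by exact_mod_cast hi
  have hkey : ((i:ℝ))*((i:ℝ)+1) ≤ (2:ℝ)^(i+1) := by exact_mod_cast ZW_nat_sq i
  rw [ZW_zpow_eq, one_div]
  exact inv_anti₀ (by positivity) hkey

lemma ZWb_step {i : ℕ} (hi : 1 ≤ i) : ZWb (i+1) ≤ ZWb i := by
  have hi' : (0:ℝ) < i := by exact_mod_cast hi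
  have h1 := ZW_inv_prod_ge i hi
  have h2 := ZW_zpow_succ_eq i
  have h3 : (1:ℝ)/i - 1/((i:ℕ)+1:ℕ) = 1/((i:ℝ)*(i+1)) := by
    push_cast
    field_simp
    ring
  have h4 : ((((i:ℕ)+1:ℕ)):ℝ) = (i:ℝ)+1 := by push_cast; ring
  unfold ZWb
  rw [h4] at *
  push_cast at *
  nlinarith [ZW_zpow_pos (i+1)]

lemma ZWb_anti {i j : ℕ} (hi : 1 ≤ i) (hij : i ≤ j) : ZWb j ≤ ZWb i := by
  induction j, hij using Nat.le_induction with
  | base => exact le_refl _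
  | succ n hn ih => exact le_trans (ZWb_step (le_trans hi hn)) ih

lemma ZW_gap {i : ℕ} (hi : 7 ≤ i) : ZWa (i+1) < ZWb i := by
  have hi' : (0:ℝ) < i := by
    have : (7:ℝ) ≤ i := by exact_mod_cast hi
    linarith
  have hkey : 3*(((i:ℝ))*((i:ℝ)+1)) < (2:ℝ)^(i+1) := by exact_mod_cast ZW_nat_gap i hi
  have h2 : (2:ℝ)^(-((i+1:ℕ):ℤ)) = ((2:ℝ)^(i+1))⁻¹ := ZW_zpow_eq (i+1)
  have h3 := ZW_zpow_succ_eq i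
  have hp : (0:ℝ) < (2:ℝ)^(i+1) := by positivity
  have hq : (0:ℝ) < (i:ℝ)*((i:ℝ)+1) := by positivity
  have hlt : 3*((2:ℝ)^(i+1))⁻¹ < 1/((i:ℝ)*((i:ℝ)+1)) := by
    have e2 : (2:ℝ)^(i+1) * ((2:ℝ)^(i+1))⁻¹ = 1 := mul_inv_cancel₀ (ne_of_gt hp)
    have e3 : ((i:ℝ)*((i:ℝ)+1)) * (1/((i:ℝ)*((i:ℝ)+1))) = 1 := by field_simp
    nlinarith [inv_pos.mpr hp, one_div_pos.mpr hq]
  unfold ZWa ZWb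
  rw [h2, h3] at *
  push_cast
  have e1 : (1:ℝ)/i - 1/((i:ℝ)+1) = 1/((i:ℝ)*((i:ℝ)+1)) := by
    field_simp
    ring
  nlinarith

/-! ### Vector measure helper lemmas -/

lemma ZW_vm_sum_apply {α : Type*} [MeasurableSpace α] {ι : Type*} (s : Finset ι)
    (v : ι → MeasureTheory.VectorMeasure α ℝ) (E : Set α) :
    (∑ i ∈ s, v i) E = ∑ i ∈ s, (v i) E := by
  classical
  induction s using Finset.induction with
  | empty => simp
  | insert _ _ h ih => rw [Finset.sum_insert h, VectorMeasure.add_apply, ih, Finset.sum_insert h]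

open Classical in
lemma ZW_dirac_sm_apply (a : ℝ) (E : Set ℝ) (hE : MeasurableSet E) :
    (Measure.dirac a).toSignedMeasure E = if a ∈ E then 1 else 0 := by
  rw [Measure.toSignedMeasure_apply_measurable hE, measureReal_def, Measure.dirac_apply' a hE]
  by_cases h : a ∈ E <;> simp [h]

/-- The step function `x ↦ χ_{(a, ∞)}(x)`. -/
noncomputable def ZWstep (a : ℝ) : ℝ → ℝ := Set.indicator (Set.Ioi a) (fun _ => (1:ℝ))

lemma ZWstep_of_lt {a x : ℝ} (h : a < x) : ZWstep a x = 1 :=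
  Set.indicator_of_mem (Set.mem_Ioi.mpr h) _

lemma ZWstep_of_le {a x : ℝ} (h : x ≤ a) : ZWstep a x = 0 :=
  Set.indicator_of_notMem (by simpa using h) _

/-- The cumulative function of `μ_n`. -/
noncomputable def ZWG (n : ℕ) (x : ℝ) : ℝ :=
  ∑ i ∈ Finset.Icc 1 n, (ZWstep (ZWa i) x - ZWstep (ZWb i) x)

lemma ZW_mu_Ico (n : ℕ) (x : ℝ) :
    (∑ i ∈ Finset.Icc 1 n,
      ((Measure.dirac (ZWa i)).toSignedMeasure - (Measure.dirac (ZWb i)).toSignedMeasure)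
      : MeasureTheory.SignedMeasure ℝ) (Set.Ico 0 x) = ZWG n x := by
  rw [ZW_vm_sum_apply, ZWG]
  refine Finset.sum_congr rfl fun i hi => ?_
  have hi1 : 1 ≤ i := (Finset.mem_Icc.mp hi).1
  rw [VectorMeasure.sub_apply, ZW_dirac_sm_apply _ _ measurableSet_Ico,
    ZW_dirac_sm_apply _ _ measurableSet_Ico]
  have h0b : 0 ≤ ZWb i := ZWb_nonneg hi1
  have h0a : 0 ≤ ZWa i := le_trans h0b (ZWb_lt_ZWa i).le
  congr 1
  · rcases lt_or_ge (ZWa i) x with h | h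
    · rw [if_pos ⟨h0a, h⟩, ZWstep_of_lt h]
    · rw [if_neg (fun hc => absurd hc.2 (not_lt.mpr h)), ZWstep_of_le h]
  · rcases lt_or_ge (ZWb i) x with h | h
    · rw [if_pos ⟨h0b, h⟩, ZWstep_of_lt h]
    · rw [if_neg (fun hc => absurd hc.2 (not_lt.mpr h)), ZWstep_of_le h]

lemma ZWstep_integrableOn (a : ℝ) {s : Set ℝ} (hs : MeasureTheory.volume s < ⊤) :
    MeasureTheory.IntegrableOn (ZWstep a) s := by
  apply MeasureTheory.Integrable.indicator
  · exact MeasureTheory.integrableOn_const hs.ne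
  · exact measurableSet_Ioi

lemma ZWG_integrableOn (n : ℕ) {s : Set ℝ} (hs : MeasureTheory.volume s < ⊤) :
    MeasureTheory.IntegrableOn (ZWG n) s := by
  unfold ZWG
  apply MeasureTheory.integrable_finset_sum
  intro i _
  exact (ZWstep_integrableOn _ hs).sub (ZWstep_integrableOn _ hs)

lemma ZW_abs_step_sub {b a : ℝ} (hba : b ≤ a) (x : ℝ) :
    |ZWstep a x - ZWstep b x| = Set.indicator (Set.Ioc b a) (fun _ => (1:ℝ)) x := by
  rcases le_or_gt x b with h | h
  · rw [ZWstep_of_le (le_trans h hba), ZWstep_of_le h,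
      Set.indicator_of_notMem (fun hc => absurd hc.1 (not_lt.mpr h))]
    simp
  · rcases le_or_gt x a with h2 | h2
    · rw [ZWstep_of_le h2, ZWstep_of_lt h, Set.indicator_of_mem (Set.mem_Ioc.mpr ⟨h, h2⟩)]
      norm_num
    · rw [ZWstep_of_lt h2, ZWstep_of_lt (lt_of_le_of_lt hba h2),
        Set.indicator_of_notMem (fun hc => absurd hc.2 (not_le.mpr h2))]
      simp

lemma ZW_indicator_integral {b a M : ℝ} (hba : b ≤ a) (hM : 0 ≤ M) :
    ∫ x in Set.Ioc 0 M, Set.indicator (Set.Ioc b a) (fun _ => (1:ℝ)) x ≤ a - b := by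
  rw [MeasureTheory.setIntegral_indicator measurableSet_Ioc, MeasureTheory.setIntegral_const]
  have h1 : MeasureTheory.volume (Set.Ioc 0 M ∩ Set.Ioc b a) ≤ MeasureTheory.volume (Set.Ioc b a) :=
    measure_mono Set.inter_subset_right
  have h2 : MeasureTheory.volume (Set.Ioc b a) = ENNReal.ofReal (a - b) := Real.volume_Ioc
  have h3 : (MeasureTheory.volume (Set.Ioc 0 M ∩ Set.Ioc b a)).toReal ≤
      (MeasureTheory.volume (Set.Ioc b a)).toReal := by
    apply ENNReal.toReal_mono _ h1
    rw [h2]; exact ENNReal.ofReal_ne_top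
  calc (MeasureTheory.volume (Set.Ioc 0 M ∩ Set.Ioc b a)).toReal • (1:ℝ)
      = (MeasureTheory.volume (Set.Ioc 0 M ∩ Set.Ioc b a)).toReal := by rw [smul_eq_mul, mul_one]
    _ ≤ (MeasureTheory.volume (Set.Ioc b a)).toReal := h3
    _ = a - b := by rw [h2, ENNReal.toReal_ofReal (by linarith)]

lemma ZW_geom_bound (n k : ℕ) :
    ∑ i ∈ Finset.Ioc n (n+k), (ZWa i - ZWb i) ≤ (2:ℝ)^((1:ℤ) - n) := by
  have hterm : ∀ i : ℕ, ZWa i - ZWb i = 2 * (2:ℝ)^(-(i:ℤ)) := by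
    intro i; unfold ZWa ZWb; ring
  simp only [hterm]
  have hre : Finset.Ioc n (n+k) = Finset.Ico (n+1) (n+k+1) := by
    rw [← Finset.Icc_add_one_left_eq_Ioc, ← Finset.Ico_add_one_right_eq_Icc]
  rw [hre, Finset.sum_Ico_eq_sum_range]
  have hkk : n + k + 1 - (n + 1) = k := by omega
  rw [hkk]
  have hterm2 : ∀ j : ℕ, 2 * (2:ℝ)^(-((n+1+j:ℕ):ℤ)) =
      (2:ℝ)^(-(n:ℤ)) * (1/2:ℝ)^j := by
    intro j
    have : (-((n+1+j:ℕ):ℤ)) = (-(n:ℤ)) + (-1) + (-(j:ℤ)) := by push_cast; ring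
    rw [this, zpow_add₀ (two_ne_zero), zpow_add₀ (two_ne_zero)]
    have h1 : (2:ℝ)^(-(1:ℤ)) = 1/2 := by norm_num
    have h2 : (2:ℝ)^(-(j:ℤ)) = (1/2:ℝ)^j := by
      rw [ZW_zpow_eq, one_div, inv_pow]
    rw [h1, h2]; ring
  simp only [hterm2]
  rw [← Finset.mul_sum]
  have hgeo := sum_geometric_two_le k
  have hpos : (0:ℝ) < (2:ℝ)^(-(n:ℤ)) := ZW_zpow_pos n
  calc (2:ℝ)^(-(n:ℤ)) * ∑ j ∈ Finset.range k, (1/2:ℝ)^j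
      ≤ (2:ℝ)^(-(n:ℤ)) * 2 := by
        apply mul_le_mul_of_nonneg_left hgeo hpos.le
    _ = (2:ℝ)^((1:ℤ) - n) := by
        rw [sub_eq_add_neg, zpow_add₀ (two_ne_zero)]
        norm_num; ring

/-- On `Ioo (ZWb i) (ZWa i)`, for `8 ≤ i ≤ n`, the cumulative function equals `-1`. -/
lemma ZWG_on_I {i n : ℕ} (hi : 8 ≤ i) (hn : i ≤ n) {x : ℝ}
    (hx : x ∈ Set.Ioo (ZWb i) (ZWa i)) : ZWG n x = -1 := by
  rw [ZWG]
  rw [Finset.sum_eq_single i]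
  · rw [ZWstep_of_le hx.2.le, ZWstep_of_lt hx.1]; norm_num
  · intro j hj hne
    have hj1 : 1 ≤ j := (Finset.mem_Icc.mp hj).1
    rcases lt_or_gt_of_ne hne with hlt | hgt
    · -- j < i : x < ZWb j, both steps vanish
      have h1 : ZWb (i-1) ≤ ZWb j := ZWb_anti hj1 (by omega)
      have h2 : ZWa i < ZWb (i-1) := by
        have := ZW_gap (i := i-1) (by omega)
        have hii : i - 1 + 1 = i := by omega
        rwa [hii] at this
      have hxb : x ≤ ZWb j := le_trans (le_of_lt (lt_trans hx.2 h2)) h1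
      rw [ZWstep_of_le (le_trans hxb (le_trans (ZWb_lt_ZWa j).le (le_refl _))),
        ZWstep_of_le hxb]
      ring
    · -- j > i : ZWa j < x, both steps are 1
      have h1 : ZWa j ≤ ZWa (i+1) := ZWa_anti (by omega) (by omega)
      have h2 : ZWa (i+1) < ZWb i := ZW_gap (by omega)
      have hxa : ZWa j < x := lt_trans (lt_of_le_of_lt h1 h2) hx.1
      rw [ZWstep_of_lt hxa, ZWstep_of_lt (lt_trans (ZWb_lt_ZWa j) hxa |>.trans_le (le_refl _) |> (fun h => h))]
      · ring
  · intro hnotmem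
    exact absurd (Finset.mem_Icc.mpr ⟨by omega, hn⟩) hnotmem

/-- On `Ioo (ZWa (i+1)) (ZWb i)`, for `8 ≤ i`, the cumulative function vanishes. -/
lemma ZWG_on_J {i n : ℕ} (hi : 8 ≤ i) {x : ℝ}
    (hx : x ∈ Set.Ioo (ZWa (i+1)) (ZWb i)) : ZWG n x = 0 := by
  rw [ZWG]
  apply Finset.sum_eq_zero
  intro j hj
  have hj1 : 1 ≤ j := (Finset.mem_Icc.mp hj).1
  rcases le_or_gt j i with hle | hgt
  · -- j ≤ i : x < ZWb j ≤ ZWa j, both steps vanish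
    have h1 : ZWb i ≤ ZWb j := ZWb_anti hj1 hle
    have hxb : x ≤ ZWb j := le_trans hx.2.le h1
    rw [ZWstep_of_le (le_trans hxb (ZWb_lt_ZWa j).le), ZWstep_of_le hxb]
    ring
  · -- j ≥ i+1 : ZWb j < ZWa j ≤ ZWa (i+1) < x, both steps are 1
    have h1 : ZWa j ≤ ZWa (i+1) := ZWa_anti (by omega) hgt
    have hxa : ZWa j < x := lt_of_le_of_lt h1 hx.1
    rw [ZWstep_of_lt hxa, ZWstep_of_lt (lt_trans (ZWb_lt_ZWa j) hxa)]
    ring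

/-! ### Total variation support lemma -/

noncomputable def ZWw (n : ℕ) : MeasureTheory.Measure ℝ :=
  ∑ i ∈ Finset.Icc 1 n, (Measure.dirac (ZWa i) + Measure.dirac (ZWb i))

lemma ZW_mu_ac (n : ℕ) :
    (∑ i ∈ Finset.Icc 1 n,
      ((Measure.dirac (ZWa i)).toSignedMeasure - (Measure.dirac (ZWb i)).toSignedMeasure)
      : MeasureTheory.SignedMeasure ℝ) ≪ᵥ (ZWw n).toENNRealVectorMeasure := by
  refine VectorMeasure.AbsolutelyContinuous.mk fun S hS hS0 => ?_
  rw [Measure.toENNRealVectorMeasure_apply_measurable hS] at hS0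
  rw [ZWw, Measure.finset_sum_apply] at hS0
  rw [ZW_vm_sum_apply]
  refine Finset.sum_eq_zero fun i hi => ?_
  have h := Finset.sum_eq_zero_iff.mp hS0 i hi
  rw [Measure.add_apply, add_eq_zero] at h
  rw [VectorMeasure.sub_apply, ZW_dirac_sm_apply _ _ hS, ZW_dirac_sm_apply _ _ hS]
  rw [Measure.dirac_apply' _ hS, Measure.dirac_apply' _ hS] at h
  have ha : ZWa i ∉ S := by
    intro hmem
    rw [Set.indicator_of_mem hmem] at h
    exact one_ne_zero h.1
  have hb : ZWb i ∉ S := by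
    intro hmem
    rw [Set.indicator_of_mem hmem] at h
    exact one_ne_zero h.2
  simp [ha, hb]

lemma ZW_mu_tv (n : ℕ) {M : ℝ} (hM : 2 ≤ M) :
    (∑ i ∈ Finset.Icc 1 n,
      ((Measure.dirac (ZWa i)).toSignedMeasure - (Measure.dirac (ZWb i)).toSignedMeasure)
      : MeasureTheory.SignedMeasure ℝ).totalVariation (Set.Icc 0 M)ᶜ = 0 := by
  have hac := (SignedMeasure.absolutelyContinuous_ennreal_iff _ _).mp (ZW_mu_ac n)
  rw [VectorMeasure.ennrealToMeasure_toENNRealVectorMeasure] at hac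
  apply hac
  rw [ZWw, Measure.finset_sum_apply]
  refine Finset.sum_eq_zero fun i hi => ?_
  have hi1 : 1 ≤ i := (Finset.mem_Icc.mp hi).1
  have h0b : 0 ≤ ZWb i := ZWb_nonneg hi1
  have h0a : 0 ≤ ZWa i := le_trans h0b (ZWb_lt_ZWa i).le
  have haM : ZWa i ≤ M := le_trans (ZWa_le_two hi1) hM
  have hbM : ZWb i ≤ M := le_trans (ZWb_lt_ZWa i).le haM
  rw [Measure.add_apply, Measure.dirac_apply' _ (measurableSet_Icc.compl),
    Measure.dirac_apply' _ (measurableSet_Icc.compl),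
    Set.indicator_of_notMem (by simp [Set.mem_Icc]; exact ⟨h0a, haM⟩),
    Set.indicator_of_notMem (by simp [Set.mem_Icc]; exact ⟨h0b, hbM⟩)]
  simp

lemma ZW_cum_integrable (m : MeasureTheory.Measure ℝ) [MeasureTheory.IsFiniteMeasure m]
    {s : Set ℝ} (hs : MeasureTheory.volume s < ⊤) :
    MeasureTheory.IntegrableOn (fun x : ℝ => (m (Set.Ico 0 x)).toReal) s := by
  have hmono : Monotone (fun x : ℝ => (m (Set.Ico 0 x)).toReal) := by
    intro x y hxy
    apply ENNReal.toReal_mono (measure_ne_top m _)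
    exact measure_mono (Set.Ico_subset_Ico le_rfl hxy)
  apply MeasureTheory.Measure.integrableOn_of_bounded hs.ne
    hmono.measurable.aestronglyMeasurable (M := (m Set.univ).toReal)
  apply Filter.Eventually.of_forall
  intro x
  rw [Real.norm_eq_abs, abs_of_nonneg ENNReal.toReal_nonneg]
  exact ENNReal.toReal_mono (measure_ne_top m _) (measure_mono (Set.subset_univ _))


/-- The set of zero-mass finite signed Borel measures supported in `[0, M]`. -/
def zeroMassMeasures (M : ℝ) : Set (MeasureTheory.SignedMeasure ℝ) :=
  {ν | ν Set.univ = 0 ∧ ν.totalVariation (Set.Icc 0 M)ᶜ = 0}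

/-- The `W₁` norm of a zero-mass signed measure, `‖ν‖_{W₁} = ∫₀^M |ν([0,x))| dx`. -/
noncomputable def w1Norm (M : ℝ) (ν : MeasureTheory.SignedMeasure ℝ) : ℝ :=
  ∫ x in (0:ℝ)..M, |ν (Set.Ico 0 x)|

/-- `(𝓜, ‖·‖_{W₁})` is not complete: the sequence
`μ_n = Σ_{i=1}^n (δ_{1/i + 2^{−i}} − δ_{1/i − 2^{−i}})` lies in `𝓜`, is Cauchy for the
`W₁` norm (indeed `‖μ_n − μ_{n+k}‖_{W₁} ≤ 2^{1−n}`), but has no limit in `𝓜`. -/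
theorem zeroMassMeasures_w1_not_complete
    (M : ℝ) (hM : 2 ≤ M)
    (μ : ℕ → MeasureTheory.SignedMeasure ℝ)
    (hμ : ∀ n : ℕ, μ n = ∑ i ∈ Finset.Icc 1 n,
      ((Measure.dirac ((1 : ℝ) / i + (2 : ℝ) ^ (-(i : ℤ)))).toSignedMeasure -
        (Measure.dirac ((1 : ℝ) / i - (2 : ℝ) ^ (-(i : ℤ)))).toSignedMeasure)) :
    (∀ n : ℕ, 1 ≤ n → μ n ∈ zeroMassMeasures M) ∧
    (∀ n k : ℕ, 1 ≤ n → w1Norm M (μ n - μ (n + k)) ≤ (2 : ℝ) ^ ((1 : ℤ) - n)) ∧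
    ¬ ∃ ν ∈ zeroMassMeasures M,
        Tendsto (fun n => w1Norm M (μ n - ν)) atTop (nhds 0) := by
  have hM0 : (0:ℝ) ≤ M := by linarith
  have hvol : MeasureTheory.volume (Set.Ioc (0:ℝ) M) < ⊤ := by
    rw [Real.volume_Ioc]; exact ENNReal.ofReal_lt_top
  have hμ' : ∀ n, μ n = ∑ i ∈ Finset.Icc 1 n,
      ((Measure.dirac (ZWa i)).toSignedMeasure - (Measure.dirac (ZWb i)).toSignedMeasure) := by
    intro n; rw [hμ n]; rfl
  have hcum : ∀ n x, (μ n) (Set.Ico 0 x) = ZWG n x := by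
    intro n x; rw [hμ']; exact ZW_mu_Ico n x
  refine ⟨?_, ?_, ?_⟩
  · -- Part 1: each μ n lies in the space
    intro n _
    constructor
    · rw [hμ', ZW_vm_sum_apply]
      refine Finset.sum_eq_zero fun i _ => ?_
      rw [VectorMeasure.sub_apply, ZW_dirac_sm_apply _ _ MeasurableSet.univ,
        ZW_dirac_sm_apply _ _ MeasurableSet.univ]
      simp
    · rw [hμ']; exact ZW_mu_tv n hM
  · -- Part 2: Cauchy estimate
    intro n k _
    have hint_eq : ∀ x : ℝ, (μ n - μ (n+k)) (Set.Ico 0 x) =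
        -(∑ i ∈ Finset.Ioc n (n+k), (ZWstep (ZWa i) x - ZWstep (ZWb i) x)) := by
      intro x
      rw [VectorMeasure.sub_apply, hcum, hcum, ZWG, ZWG]
      have e : ∀ m : ℕ, Finset.Icc 1 m = Finset.Ioc 0 m := fun m => Finset.Icc_add_one_left_eq_Ioc 0 m
      rw [e n, e (n+k),
        ← Finset.sum_Ioc_consecutive _ (Nat.zero_le n) (Nat.le_add_right n k)]
      ring
    rw [w1Norm, intervalIntegral.integral_of_le hM0]
    simp only [hint_eq, abs_neg]
    have hintF : MeasureTheory.IntegrableOn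
        (fun x => |∑ i ∈ Finset.Ioc n (n+k), (ZWstep (ZWa i) x - ZWstep (ZWb i) x)|)
        (Set.Ioc 0 M) := by
      apply MeasureTheory.Integrable.abs
      apply MeasureTheory.integrable_finset_sum
      intro i _
      exact (ZWstep_integrableOn _ hvol).sub (ZWstep_integrableOn _ hvol)
    have hintI : ∀ i : ℕ, MeasureTheory.IntegrableOn
        (fun x => Set.indicator (Set.Ioc (ZWb i) (ZWa i)) (fun _ => (1:ℝ)) x)
        (Set.Ioc 0 M) := by
      intro i
      apply MeasureTheory.Integrable.indicator
      · exact MeasureTheory.integrableOn_const hvol.ne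
      · exact measurableSet_Ioc
    calc ∫ x in Set.Ioc 0 M, |∑ i ∈ Finset.Ioc n (n+k), (ZWstep (ZWa i) x - ZWstep (ZWb i) x)|
        ≤ ∫ x in Set.Ioc 0 M, ∑ i ∈ Finset.Ioc n (n+k),
            Set.indicator (Set.Ioc (ZWb i) (ZWa i)) (fun _ => (1:ℝ)) x := by
          apply MeasureTheory.integral_mono hintF
          · exact MeasureTheory.integrable_finset_sum _ (fun i _ => hintI i)
          · intro x
            calc |∑ i ∈ Finset.Ioc n (n+k), (ZWstep (ZWa i) x - ZWstep (ZWb i) x)|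
                ≤ ∑ i ∈ Finset.Ioc n (n+k), |ZWstep (ZWa i) x - ZWstep (ZWb i) x| :=
                  Finset.abs_sum_le_sum_abs _ _
              _ = ∑ i ∈ Finset.Ioc n (n+k),
                  Set.indicator (Set.Ioc (ZWb i) (ZWa i)) (fun _ => (1:ℝ)) x :=
                  Finset.sum_congr rfl fun i _ => ZW_abs_step_sub (ZWb_lt_ZWa i).le x
      _ = ∑ i ∈ Finset.Ioc n (n+k), ∫ x in Set.Ioc 0 M,
            Set.indicator (Set.Ioc (ZWb i) (ZWa i)) (fun _ => (1:ℝ)) x :=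
          MeasureTheory.integral_finset_sum _ (fun i _ => hintI i)
      _ ≤ ∑ i ∈ Finset.Ioc n (n+k), (ZWa i - ZWb i) :=
          Finset.sum_le_sum fun i _ => ZW_indicator_integral (ZWb_lt_ZWa i).le hM0
      _ ≤ (2:ℝ)^((1:ℤ) - n) := ZW_geom_bound n k
  · -- Part 3: no limit in the space
    rintro ⟨ν, _, htend⟩
    set g : ℝ → ℝ := fun x => ν (Set.Ico 0 x) with hgdef
    have hrep : g = fun x : ℝ =>
        (ν.toJordanDecomposition.posPart (Set.Ico 0 x)).toReal -
        (ν.toJordanDecomposition.negPart (Set.Ico 0 x)).toReal := by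
      funext x
      show ν (Set.Ico 0 x) = _
      conv_lhs => rw [← ν.toSignedMeasure_toJordanDecomposition]
      rw [MeasureTheory.JordanDecomposition.toSignedMeasure, VectorMeasure.sub_apply,
        Measure.toSignedMeasure_apply_measurable measurableSet_Ico,
        Measure.toSignedMeasure_apply_measurable measurableSet_Ico, measureReal_def, measureReal_def]
    have hg_int : MeasureTheory.IntegrableOn g (Set.Ioc 0 M) := by
      rw [hrep]
      exact (ZW_cum_integrable _ hvol).sub (ZW_cum_integrable _ hvol)
    have hw1 : ∀ n, w1Norm M (μ n - ν) = ∫ x in Set.Ioc 0 M, |ZWG n x - g x| := by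
      intro n
      rw [w1Norm, intervalIntegral.integral_of_le hM0]
      congr 1
      funext x
      rw [VectorMeasure.sub_apply, hcum]
    have hkey : ∀ (s : Set ℝ) (c : ℝ) (N : ℕ), MeasurableSet s → s ⊆ Set.Ioc 0 M →
        MeasureTheory.volume s ≠ 0 →
        (∀ n, N ≤ n → ∀ x ∈ s, ZWG n x = c) → ∃ x ∈ s, g x = c := by
      intro s c N hsm hsub hs0 hGc
      have hsint : MeasureTheory.IntegrableOn (fun x => |g x - c|) s := by
        apply MeasureTheory.Integrable.abs
        apply MeasureTheory.Integrable.sub (hg_int.mono_set hsub)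
        exact MeasureTheory.integrableOn_const
          (lt_of_le_of_lt (measure_mono hsub) hvol).ne
      have hint : ∫ x in s, |g x - c| = 0 := by
        have hle : ∀ᶠ n in atTop, (∫ x in s, |g x - c|) ≤ w1Norm M (μ n - ν) := by
          filter_upwards [eventually_ge_atTop N] with n hn
          rw [hw1 n]
          have heq : Set.EqOn (fun x => |g x - c|) (fun x => |ZWG n x - g x|) s := by
            intro x hx
            simp only
            rw [hGc n hn x hx, abs_sub_comm]
          calc ∫ x in s, |g x - c| = ∫ x in s, |ZWG n x - g x| :=
              MeasureTheory.setIntegral_congr_fun hsm heq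
            _ ≤ ∫ x in Set.Ioc 0 M, |ZWG n x - g x| := by
                apply MeasureTheory.setIntegral_mono_set
                  (((ZWG_integrableOn n hvol).sub hg_int).abs)
                · exact Filter.Eventually.of_forall fun x => abs_nonneg _
                · exact HasSubset.Subset.eventuallyLE hsub
        have h1 : (∫ x in s, |g x - c|) ≤ 0 := ge_of_tendsto htend hle
        have h2 : (0:ℝ) ≤ ∫ x in s, |g x - c| :=
          MeasureTheory.integral_nonneg fun x => abs_nonneg _
        linarith
      have hae := (MeasureTheory.integral_eq_zero_iff_of_nonneg
        (fun x => abs_nonneg _) hsint).mp hint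
      have hae' : ∀ᵐ x ∂(MeasureTheory.volume.restrict s), g x = c := by
        filter_upwards [hae] with x hx
        have h3 : |g x - c| = 0 := hx
        have h4 := abs_eq_zero.mp h3
        linarith
      exact MeasureTheory.Measure.exists_mem_of_measure_ne_zero_of_ae hs0 hae'
    have hZWa_pos : ∀ i : ℕ, 1 ≤ i → 0 < ZWa i :=
      fun i hi => lt_of_le_of_lt (ZWb_nonneg hi) (ZWb_lt_ZWa i)
    have hpts : ∀ j : ℕ, ∃ p : ℝ × ℝ,
        p.1 ∈ Set.Ioo (ZWb (j+8)) (ZWa (j+8)) ∧ p.2 ∈ Set.Ioo (ZWa (j+9)) (ZWb (j+8)) ∧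
        g p.1 = -1 ∧ g p.2 = 0 := by
      intro j
      set i := j + 8 with hidef
      have hi : 8 ≤ i := by omega
      have hgap : ZWa (i+1) < ZWb i := ZW_gap (by omega)
      have hIsub : Set.Ioo (ZWb i) (ZWa i) ⊆ Set.Ioc 0 M := by
        intro z hz
        exact ⟨lt_of_le_of_lt (ZWb_nonneg (by omega)) hz.1,
          le_trans hz.2.le (le_trans (ZWa_le_two (by omega)) hM)⟩
      have hJsub : Set.Ioo (ZWa (i+1)) (ZWb i) ⊆ Set.Ioc 0 M := by
        intro z hz
        exact ⟨lt_trans (hZWa_pos (i+1) (by omega)) hz.1,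
          le_trans hz.2.le (le_trans (ZWb_lt_ZWa i).le
            (le_trans (ZWa_le_two (by omega)) hM))⟩
      have hI0 : MeasureTheory.volume (Set.Ioo (ZWb i) (ZWa i)) ≠ 0 := by
        rw [Real.volume_Ioo]
        simp only [ne_eq, ENNReal.ofReal_eq_zero, not_le]
        linarith [ZWb_lt_ZWa i]
      have hJ0 : MeasureTheory.volume (Set.Ioo (ZWa (i+1)) (ZWb i)) ≠ 0 := by
        rw [Real.volume_Ioo]
        simp only [ne_eq, ENNReal.ofReal_eq_zero, not_le]
        linarith
      obtain ⟨x, hxI, hxc⟩ := hkey _ (-1) i measurableSet_Ioo hIsub hI0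
        (fun n hn z hz => ZWG_on_I hi hn hz)
      obtain ⟨y, hyJ, hyc⟩ := hkey _ 0 8 measurableSet_Ioo hJsub hJ0
        (fun n _ z hz => ZWG_on_J hi hz)
      exact ⟨(x, y), hxI, hyJ, hxc, hyc⟩
    choose p h1 h2 h3 h4 using hpts
    set E : ℕ → Set ℝ := fun j => Set.Ico ((p j).2) ((p j).1) with hEdef
    have hEm : ∀ j, MeasurableSet (E j) := fun j => measurableSet_Ico
    have hνE : ∀ j, ν (E j) = -1 := by
      intro j
      have hy0 : 0 ≤ (p j).2 := le_of_lt (lt_trans (hZWa_pos (j+9) (by omega)) (h2 j).1)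
      have hyx : (p j).2 ≤ (p j).1 := le_trans (h2 j).2.le (h1 j).1.le
      have hunion : Set.Ico 0 ((p j).2) ∪ Set.Ico ((p j).2) ((p j).1) =
          Set.Ico 0 ((p j).1) := Set.Ico_union_Ico_eq_Ico hy0 hyx
      have h5 : ν (Set.Ico 0 ((p j).2) ∪ Set.Ico ((p j).2) ((p j).1)) =
          ν (Set.Ico 0 ((p j).2)) + ν (Set.Ico ((p j).2) ((p j).1)) :=
        VectorMeasure.of_union (Set.Ico_disjoint_Ico_same)
          measurableSet_Ico measurableSet_Ico
      rw [hunion] at h5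
      have h6 : g ((p j).1) = g ((p j).2) + ν (E j) := h5
      rw [h3 j, h4 j] at h6
      linarith [h6]
    have hdisj : Pairwise (Function.onFun Disjoint E) := by
      have key : ∀ {j k : ℕ}, j < k → Disjoint (E j) (E k) := by
        intro j k hjk
        rw [Set.disjoint_left]
        intro z hzj hzk
        have h1z : ZWa (j+9) < z := lt_of_lt_of_le (h2 j).1 hzj.1
        have h2z : z < ZWa (k+8) := lt_trans (lt_of_lt_of_le hzk.2 le_rfl) (h1 k).2
        have h3z : ZWa (k+8) ≤ ZWa (j+9) := ZWa_anti (by omega) (by omega)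
        linarith
      intro j k hne
      rcases hne.lt_or_gt with h | h
      · exact key h
      · exact (key h).symm
    have hsum := VectorMeasure.hasSum_of_disjoint_iUnion (v := ν) (f := E) hEm hdisj
    have heq : (fun j => ν (E j)) = fun _ : ℕ => (-1:ℝ) := funext hνE
    rw [heq] at hsum
    have hsummable : Summable (fun _ : ℕ => (-1:ℝ)) := ⟨_, hsum⟩
    rw [summable_const_iff] at hsummable
    norm_num at hsummable
end
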